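/- arXiv:2303.09468 — 16 statements merged into one kernel-verified Lean document; each statement's English description precedes it below -/
import Mathlib

section
/- Let K ≥ 1, let Λ be a nonempty set and let f : {1,…,K} × Λ → ℝ satisfy f(k,λ) ≥ 0 for all k, λ. Then for every ω ∈ Δ_K with ω_k > 0 for all k, inf_{λ∈Λ} Σ_{k=1}^K ω_k f(k,λ) ≥ (min_{j∈{1,…,K}} ω_j) · sup_{ω'∈Δ_K} inf_{λ∈Λ} Σ_{k=1}^K ω'_k f(k,λ). In particular, for the uniform weights ω_k = 1/K the left-hand side is at least 1/K times the sup–inf value. -/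
/-- a static proportions allocation `ω` with positive coordinates is worse than
the oracle sup-inf value by a factor at most `(min_j ω_j)⁻¹`; in particular uniform weights
lose at most a factor `K`. -/
theorem stmt_1 (K : ℕ) (hK : 1 ≤ K) (Λ : Type*) [Nonempty Λ]
    (f : Fin K → Λ → ℝ) (hf : ∀ k l, 0 ≤ f k l) :
    let Δ : Set (Fin K → ℝ) := {ω | (∀ k, 0 ≤ ω k) ∧ ∑ k, ω k = 1}
    let g : (Fin K → ℝ) → ℝ := fun ω => sInf (Set.range fun l => ∑ k, ω k * f k l)
    (∀ ω ∈ Δ, (∀ k, 0 < ω k) → (⨅ j, ω j) * sSup (g '' Δ) ≤ g ω) ∧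
    (K : ℝ)⁻¹ * sSup (g '' Δ) ≤ g (fun _ => (K : ℝ)⁻¹) := by
  intro Δ g
  haveI : Nonempty (Fin K) := ⟨⟨0, hK⟩⟩
  have hKpos : (0:ℝ) < K := by exact_mod_cast hK
  have hbdd : ∀ ω : Fin K → ℝ, (∀ k, 0 ≤ ω k) →
      BddBelow (Set.range fun l => ∑ k, ω k * f k l) := by
    intro ω hω
    exact ⟨0, by rintro x ⟨l, rfl⟩; exact Finset.sum_nonneg fun k _ => mul_nonneg (hω k) (hf k l)⟩
  have hg0 : ∀ ω ∈ Δ, 0 ≤ g ω := by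
    intro ω hω
    apply Real.sInf_nonneg
    rintro x ⟨l, rfl⟩
    exact Finset.sum_nonneg fun k _ => mul_nonneg (hω.1 k) (hf k l)
  have main : ∀ ω ∈ Δ, (∀ k, 0 < ω k) → (⨅ j, ω j) * sSup (g '' Δ) ≤ g ω := by
    intro ω hω hpos
    set m := ⨅ j, ω j with hm
    have hmle : ∀ j, m ≤ ω j := fun j => ciInf_le (Set.finite_range ω).bddBelow j
    have hmpos : 0 < m := by
      obtain ⟨j0, -, hj0⟩ := Finset.exists_min_image Finset.univ ω ⟨⟨0, hK⟩, Finset.mem_univ _⟩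
      exact lt_of_lt_of_le (hpos j0) (le_ciInf fun j => hj0 j (Finset.mem_univ j))
    have key : ∀ ω' ∈ Δ, g ω' ≤ m⁻¹ * g ω := by
      intro ω' hω'
      rw [le_inv_mul_iff₀ hmpos]
      apply le_csInf (Set.range_nonempty _)
      rintro x ⟨l, rfl⟩
      have h1 : g ω' ≤ ∑ k, ω' k * f k l := csInf_le (hbdd ω' hω'.1) ⟨l, rfl⟩
      calc m * g ω' ≤ m * ∑ k, ω' k * f k l := mul_le_mul_of_nonneg_left h1 hmpos.le
        _ ≤ ∑ k, ω k * f k l := by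
          rw [Finset.mul_sum]
          apply Finset.sum_le_sum
          intro k _
          have hk1 : ω' k ≤ 1 := by
            have := Finset.single_le_sum (f := ω') (fun i _ => hω'.1 i) (Finset.mem_univ k)
            simpa [hω'.2] using this
          calc m * (ω' k * f k l) ≤ m * (1 * f k l) :=
                mul_le_mul_of_nonneg_left
                  (mul_le_mul_of_nonneg_right hk1 (hf k l)) hmpos.le
            _ = m * f k l := by ring
            _ ≤ ω k * f k l := mul_le_mul_of_nonneg_right (hmle k) (hf k l)
    have hsup : sSup (g '' Δ) ≤ m⁻¹ * g ω := by
      apply Real.sSup_le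
      · rintro x ⟨ω', hω', rfl⟩; exact key ω' hω'
      · exact mul_nonneg (inv_nonneg.2 hmpos.le) (hg0 ω hω)
    calc m * sSup (g '' Δ) ≤ m * (m⁻¹ * g ω) := mul_le_mul_of_nonneg_left hsup hmpos.le
      _ = g ω := by field_simp
  refine ⟨main, ?_⟩
  have hu : (fun _ : Fin K => (K:ℝ)⁻¹) ∈ Δ := by
    refine ⟨fun k => by positivity, ?_⟩
    simp [Finset.sum_const, Finset.card_univ]
    field_simp
  have := main _ hu (fun k => by positivity)
  simpa [ciInf_const] using this
end

section
/- Let φ : ℝ → ℝ be strictly convex and differentiable and let d(a,b) = φ(a) − φ(b) − (a−b)·φ'(b) be its Bregman divergence. Let ξ2 < ξ1. Then there exists a unique y* ∈ (ξ2, ξ1) with φ'(y*) = (φ(ξ1) − φ(ξ2))/(ξ1 − ξ2); it satisfies d(ξ1, y*) = d(ξ2, y*), and sup_{ω∈[0,1]} inf_{y∈ℝ} ( ω·d(ξ1,y) + (1−ω)·d(ξ2,y) ) = d(ξ1, y*), the supremum being attained at ω* = (y* − ξ2)/(ξ1 − ξ2) ∈ (0,1). -/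
open Set

private lemma tangent_le' {φ : ℝ → ℝ} (hconv : ConvexOn ℝ Set.univ φ)
    (hdiff : Differentiable ℝ φ) (x y : ℝ) :
    φ y + (x - y) * deriv φ y ≤ φ x := by
  rcases lt_trichotomy x y with hxy | rfl | hxy
  · have hsl := hconv.slope_le_deriv (mem_univ x) (mem_univ y) hxy (hdiff y)
    rw [slope_def_field] at hsl
    have h0 : (0:ℝ) < y - x := by linarith
    rw [div_le_iff₀ h0] at hsl
    nlinarith
  · simp
  · have hsl := hconv.deriv_le_slope (mem_univ y) (mem_univ x) hxy (hdiff y)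
    rw [slope_def_field] at hsl
    have h0 : (0:ℝ) < x - y := by linarith
    rw [le_div_iff₀ h0] at hsl
    nlinarith

private lemma inf_aux' {φ : ℝ → ℝ} (hconv : ConvexOn ℝ Set.univ φ)
    (hdiff : Differentiable ℝ φ) (ξ1 ξ2 ω : ℝ) :
    sInf (Set.range fun y => ω * (φ ξ1 - φ y - (ξ1 - y) * deriv φ y)
        + (1 - ω) * (φ ξ2 - φ y - (ξ2 - y) * deriv φ y))
      = ω * φ ξ1 + (1 - ω) * φ ξ2 - φ (ω * ξ1 + (1 - ω) * ξ2) := by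
  apply IsLeast.csInf_eq
  constructor
  · refine ⟨ω * ξ1 + (1 - ω) * ξ2, ?_⟩
    ring
  · rintro _ ⟨y, rfl⟩
    have ht := tangent_le' hconv hdiff (ω * ξ1 + (1 - ω) * ξ2) y
    show ω * φ ξ1 + (1 - ω) * φ ξ2 - φ (ω * ξ1 + (1 - ω) * ξ2)
        ≤ ω * (φ ξ1 - φ y - (ξ1 - y) * deriv φ y)
          + (1 - ω) * (φ ξ2 - φ y - (ξ2 - y) * deriv φ y)
    nlinarith [ht]

/-- for strictly convex differentiable `φ` and `ξ2 < ξ1` there is a unique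
`y* ∈ (ξ2, ξ1)` with `φ'(y*) = (φ(ξ1) - φ(ξ2)) / (ξ1 - ξ2)`; it satisfies
`d(ξ1,y*) = d(ξ2,y*)` and `sup_{ω∈[0,1]} inf_y (ω d(ξ1,y) + (1-ω) d(ξ2,y)) = d(ξ1,y*)`,
attained at `ω* = (y* - ξ2)/(ξ1 - ξ2) ∈ (0,1)`. -/
theorem stmt_3 (φ : ℝ → ℝ) (hconv : StrictConvexOn ℝ Set.univ φ) (hdiff : Differentiable ℝ φ)
    (ξ1 ξ2 : ℝ) (h : ξ2 < ξ1) :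
    let d : ℝ → ℝ → ℝ := fun a b => φ a - φ b - (a - b) * deriv φ b
    (∃! y, y ∈ Set.Ioo ξ2 ξ1 ∧ deriv φ y = (φ ξ1 - φ ξ2) / (ξ1 - ξ2)) ∧
    ∀ ystar ∈ Set.Ioo ξ2 ξ1, deriv φ ystar = (φ ξ1 - φ ξ2) / (ξ1 - ξ2) →
      d ξ1 ystar = d ξ2 ystar ∧
      (ystar - ξ2) / (ξ1 - ξ2) ∈ Set.Ioo (0 : ℝ) 1 ∧
      IsGreatest ((fun ω => sInf (Set.range fun y => ω * d ξ1 y + (1 - ω) * d ξ2 y)) ''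
        Set.Icc (0 : ℝ) 1) (d ξ1 ystar) ∧
      sInf (Set.range fun y =>
          ((ystar - ξ2) / (ξ1 - ξ2)) * d ξ1 y + (1 - (ystar - ξ2) / (ξ1 - ξ2)) * d ξ2 y)
        = d ξ1 ystar := by
  intro d
  have hc : ConvexOn ℝ Set.univ φ := hconv.convexOn
  have hne : ξ1 - ξ2 ≠ 0 := by linarith
  have hs : (ξ1 - ξ2) * ((φ ξ1 - φ ξ2) / (ξ1 - ξ2)) = φ ξ1 - φ ξ2 := by
    field_simp
  have hmono : StrictMonoOn (deriv φ) Set.univ :=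
    hconv.strictMonoOn_deriv (fun x _ => hdiff x)
  constructor
  · obtain ⟨c, hc1, hc2⟩ := exists_deriv_eq_slope φ h
      hdiff.continuous.continuousOn hdiff.differentiableOn
    refine ⟨c, ⟨hc1, hc2⟩, ?_⟩
    rintro z ⟨_, hz2⟩
    exact hmono.injOn (mem_univ z) (mem_univ c) (hz2.trans hc2.symm)
  · intro y hy hdy
    set s : ℝ := (φ ξ1 - φ ξ2) / (ξ1 - ξ2) with hsdef
    set ωs : ℝ := (y - ξ2) / (ξ1 - ξ2) with hωdef
    have hωs : ωs * (ξ1 - ξ2) = y - ξ2 := by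
      rw [hωdef]; field_simp
    have hm : ωs * ξ1 + (1 - ωs) * ξ2 = y := by linear_combination hωs
    have hFval : ∀ ω : ℝ, sInf (Set.range fun z => ω * d ξ1 z + (1 - ω) * d ξ2 z)
        = ω * φ ξ1 + (1 - ω) * φ ξ2 - φ (ω * ξ1 + (1 - ω) * ξ2) :=
      fun ω => inf_aux' hc hdiff ξ1 ξ2 ω
    have hFle : ∀ ω : ℝ, ω * φ ξ1 + (1 - ω) * φ ξ2 - φ (ω * ξ1 + (1 - ω) * ξ2) ≤ d ξ1 y := by
      intro ω
      have ht := tangent_le' hc hdiff (ω * ξ1 + (1 - ω) * ξ2) y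
      rw [hdy] at ht
      have h2 : (ω - 1) * ((ξ1 - ξ2) * s) = (ω - 1) * (φ ξ1 - φ ξ2) := by rw [hs]
      show _ ≤ φ ξ1 - φ y - (ξ1 - y) * deriv φ y
      rw [hdy]
      nlinarith [ht, h2]
    have hFeq : ωs * φ ξ1 + (1 - ωs) * φ ξ2 - φ (ωs * ξ1 + (1 - ωs) * ξ2) = d ξ1 y := by
      rw [hm]
      show _ = φ ξ1 - φ y - (ξ1 - y) * deriv φ y
      rw [hdy, hωdef, hsdef]
      field_simp
      ring
    refine ⟨?_, ?_, ?_, ?_⟩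
    · show φ ξ1 - φ y - (ξ1 - y) * deriv φ y = φ ξ2 - φ y - (ξ2 - y) * deriv φ y
      rw [hdy, hsdef]
      field_simp
      ring
    · constructor
      · exact div_pos (by linarith [hy.1]) (by linarith)
      · rw [div_lt_one (by linarith)]
        linarith [hy.2]
    · constructor
      · refine ⟨ωs, ⟨?_, ?_⟩, (hFval ωs).trans hFeq⟩
        · exact le_of_lt (div_pos (by linarith [hy.1]) (by linarith))
        · rw [div_le_one (by linarith)]; linarith [hy.2]
      · rintro x ⟨ω, _, rfl⟩
        exact le_of_eq_of_le (hFval ω) (hFle ω)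
    · exact (hFval ωs).trans hFeq
end

section
/- Let 0 < μ2 < μ1 < 1 and set x* = log((1−μ2)/(1−μ1)) / log( μ1(1−μ2)/((1−μ1)μ2) ). Then x* ∈ (μ2, μ1), kl(x*, μ1) = kl(x*, μ2), and sup_{ω∈[0,1]} inf_{x∈(0,1)} ( ω·kl(x, μ1) + (1−ω)·kl(x, μ2) ) = kl(x*, μ1). -/
lemma gibbs_aux {p q : ℝ} (hp0 : 0 < p) (hp1 : p < 1) (hq0 : 0 < q) (hq1 : q < 1) :
    0 ≤ p * (Real.log p - Real.log q) + (1 - p) * (Real.log (1 - p) - Real.log (1 - q)) := by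
  have hp1' : (0:ℝ) < 1 - p := by linarith
  have hq1' : (0:ℝ) < 1 - q := by linarith
  have h1 := Real.log_le_sub_one_of_pos (show 0 < q / p by positivity)
  have h2 := Real.log_le_sub_one_of_pos (show 0 < (1 - q) / (1 - p) by positivity)
  rw [Real.log_div hq0.ne' hp0.ne'] at h1
  rw [Real.log_div hq1'.ne' hp1'.ne'] at h2
  have e1 : p * (q / p) = q := by field_simp
  have e2 : (1 - p) * ((1 - q) / (1 - p)) = 1 - q := by field_simp
  nlinarith [mul_le_mul_of_nonneg_left h1 hp0.le, mul_le_mul_of_nonneg_left h2 hp1'.le]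

lemma gibbs_aux_strict {p q : ℝ} (hp0 : 0 < p) (hp1 : p < 1) (hq0 : 0 < q) (hq1 : q < 1)
    (hpq : p ≠ q) :
    0 < p * (Real.log p - Real.log q) + (1 - p) * (Real.log (1 - p) - Real.log (1 - q)) := by
  have hp1' : (0:ℝ) < 1 - p := by linarith
  have hq1' : (0:ℝ) < 1 - q := by linarith
  have h1 := Real.log_lt_sub_one_of_pos (show 0 < q / p by positivity)
    (by intro h; apply hpq; field_simp at h; linarith)
  have h2 := Real.log_le_sub_one_of_pos (show 0 < (1 - q) / (1 - p) by positivity)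
  rw [Real.log_div hq0.ne' hp0.ne'] at h1
  rw [Real.log_div hq1'.ne' hp1'.ne'] at h2
  have e1 : p * (q / p) = q := by field_simp
  have e2 : (1 - p) * ((1 - q) / (1 - p)) = 1 - q := by field_simp
  nlinarith [mul_lt_mul_of_pos_left h1 hp0, mul_le_mul_of_nonneg_left h2 hp1'.le]

/-- two-arm Bernoulli BAI oracle difficulty: for `0 < μ2 < μ1 < 1` and
`x* = log((1-μ2)/(1-μ1)) / log(μ1(1-μ2)/((1-μ1)μ2))`, we have `x* ∈ (μ2, μ1)`,
`kl(x*,μ1) = kl(x*,μ2)`, and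
`sup_{ω∈[0,1]} inf_{x∈(0,1)} (ω kl(x,μ1) + (1-ω) kl(x,μ2)) = kl(x*,μ1)`. -/
theorem stmt_4 (μ1 μ2 : ℝ) (h2 : 0 < μ2) (h12 : μ2 < μ1) (h1 : μ1 < 1) :
    let kl : ℝ → ℝ → ℝ := fun p q =>
      p * Real.log (p / q) + (1 - p) * Real.log ((1 - p) / (1 - q))
    let xstar : ℝ := Real.log ((1 - μ2) / (1 - μ1)) /
      Real.log (μ1 * (1 - μ2) / ((1 - μ1) * μ2))
    xstar ∈ Set.Ioo μ2 μ1 ∧ kl xstar μ1 = kl xstar μ2 ∧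
    sSup ((fun ω => sInf ((fun x => ω * kl x μ1 + (1 - ω) * kl x μ2) '' Set.Ioo (0 : ℝ) 1)) ''
      Set.Icc (0 : ℝ) 1) = kl xstar μ1 := by
  intro kl xstar
  have hμ10 : 0 < μ1 := lt_trans h2 h12
  have hμ21 : μ2 < 1 := lt_trans h12 h1
  have hm1 : (0:ℝ) < 1 - μ1 := by linarith
  have hm2 : (0:ℝ) < 1 - μ2 := by linarith
  set l1 := Real.log μ1 with hl1
  set l2 := Real.log μ2 with hl2
  set m1 := Real.log (1 - μ1) with hm1'
  set m2 := Real.log (1 - μ2) with hm2'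
  have hl12 : l2 < l1 := Real.log_lt_log h2 h12
  have hm12 : m1 < m2 := Real.log_lt_log hm1 (by linarith)
  have hLlog : Real.log ((1 - μ2) / (1 - μ1)) = m2 - m1 := Real.log_div hm2.ne' hm1.ne'
  have hMlog : Real.log (μ1 * (1 - μ2) / ((1 - μ1) * μ2)) = l1 + m2 - (m1 + l2) := by
    rw [Real.log_div (by positivity) (by positivity), Real.log_mul hμ10.ne' hm2.ne',
      Real.log_mul hm1.ne' h2.ne']
  have hMpos : 0 < Real.log (μ1 * (1 - μ2) / ((1 - μ1) * μ2)) := by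
    rw [hMlog]; linarith
  have hxdef : xstar = Real.log ((1 - μ2) / (1 - μ1)) /
      Real.log (μ1 * (1 - μ2) / ((1 - μ1) * μ2)) := rfl
  have hxM : xstar * (l1 + m2 - (m1 + l2)) = m2 - m1 := by
    rw [hxdef, ← hMlog, ← hLlog]
    exact div_mul_cancel₀ _ hMpos.ne'
  -- Part 1: xstar ∈ Ioo μ2 μ1
  have hg21 := gibbs_aux_strict h2 hμ21 hμ10 h1 (ne_of_lt h12)
  have hg12 := gibbs_aux_strict hμ10 h1 h2 hμ21 (ne_of_gt h12)
  have hx2 : μ2 < xstar := by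
    rw [hxdef, lt_div_iff₀ hMpos, hLlog, hMlog]
    nlinarith [hg21]
  have hx1 : xstar < μ1 := by
    rw [hxdef, div_lt_iff₀ hMpos, hLlog, hMlog]
    nlinarith [hg12]
  have hx0 : 0 < xstar := lt_trans h2 hx2
  have hx1' : xstar < 1 := lt_trans hx1 h1
  have hx1'' : (0:ℝ) < 1 - xstar := by linarith
  set ls := Real.log xstar with hls
  set ms := Real.log (1 - xstar) with hms
  -- expansion of kl
  have klexp : ∀ p q : ℝ, 0 < p → p < 1 → 0 < q → q < 1 →
      kl p q = p * (Real.log p - Real.log q) + (1 - p) * (Real.log (1 - p) - Real.log (1 - q)) := by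
    intro p q hp0 hp1 hq0 hq1
    show p * Real.log (p / q) + (1 - p) * Real.log ((1 - p) / (1 - q)) = _
    rw [Real.log_div hp0.ne' hq0.ne',
      Real.log_div (by linarith : (0:ℝ) < 1 - p).ne' (by linarith : (0:ℝ) < 1 - q).ne']
  have hkl1 : kl xstar μ1 = xstar * (ls - l1) + (1 - xstar) * (ms - m1) :=
    klexp xstar μ1 hx0 hx1' hμ10 h1
  have hkl2 : kl xstar μ2 = xstar * (ls - l2) + (1 - xstar) * (ms - m2) :=
    klexp xstar μ2 hx0 hx1' h2 hμ21
  -- Part 2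
  have heq : kl xstar μ1 = kl xstar μ2 := by
    rw [hkl1, hkl2]; linear_combination -hxM
  refine ⟨⟨hx2, hx1⟩, heq, ?_⟩
  -- Part 3
  have hxmem : xstar ∈ Set.Ioo (0:ℝ) 1 := ⟨hx0, hx1'⟩
  -- the optimal weight
  set ωs : ℝ := ((ls - ms) - (l2 - m2)) / ((l1 - m1) - (l2 - m2)) with hωs
  have hden : (0:ℝ) < (l1 - m1) - (l2 - m2) := by linarith
  have hls2 : l2 < ls := Real.log_lt_log h2 hx2
  have hls1 : ls < l1 := Real.log_lt_log hx0 hx1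
  have hms2 : ms < m2 := Real.log_lt_log hx1'' (by linarith)
  have hms1 : m1 < ms := Real.log_lt_log hm1 (by linarith)
  have hω0 : 0 ≤ ωs := by
    rw [hωs]; apply div_nonneg (by linarith) hden.le
  have hω1 : ωs ≤ 1 := by
    rw [hωs, div_le_one hden]; linarith
  have hrel : ωs * ((l1 - m1) - (l2 - m2)) = (ls - ms) - (l2 - m2) := by
    rw [hωs]; exact div_mul_cancel₀ _ hden.ne'
  -- value at xstar for any weight ω
  have hval : ∀ ω : ℝ, ω * kl xstar μ1 + (1 - ω) * kl xstar μ2 = kl xstar μ1 := by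
    intro ω; rw [← heq]; ring
  -- every kl value is nonneg on relevant domain
  have hklnn : ∀ p q : ℝ, 0 < p → p < 1 → 0 < q → q < 1 → 0 ≤ kl p q := by
    intro p q hp0 hp1 hq0 hq1
    rw [klexp p q hp0 hp1 hq0 hq1]
    exact gibbs_aux hp0 hp1 hq0 hq1
  -- upper bound of each inner inf
  have hub : ∀ a ∈ ((fun ω => sInf ((fun x => ω * kl x μ1 + (1 - ω) * kl x μ2) ''
      Set.Ioo (0 : ℝ) 1)) '' Set.Icc (0 : ℝ) 1), a ≤ kl xstar μ1 := by
    rintro a ⟨ω, hω, rfl⟩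
    obtain ⟨hω0', hω1'⟩ := hω
    have hbdd : BddBelow ((fun x => ω * kl x μ1 + (1 - ω) * kl x μ2) '' Set.Ioo (0 : ℝ) 1) := by
      refine ⟨0, ?_⟩
      rintro b ⟨x, ⟨hx0x, hx1x⟩, rfl⟩
      have n1 := hklnn x μ1 hx0x hx1x hμ10 h1
      have n2 := hklnn x μ2 hx0x hx1x h2 hμ21
      have : (0:ℝ) ≤ ω * kl x μ1 + (1 - ω) * kl x μ2 :=
        add_nonneg (mul_nonneg hω0' n1) (mul_nonneg (by linarith) n2)
      exact this
    have hmem : kl xstar μ1 ∈ (fun x => ω * kl x μ1 + (1 - ω) * kl x μ2) '' Set.Ioo (0:ℝ) 1 :=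
      ⟨xstar, hxmem, hval ω⟩
    exact csInf_le hbdd hmem
  apply le_antisymm
  · exact csSup_le ⟨_, Set.mem_image_of_mem _ (by norm_num : (0:ℝ) ∈ Set.Icc (0:ℝ) 1)⟩ hub
  · -- key pointwise inequality for ωs
    have hkey : ∀ x ∈ Set.Ioo (0:ℝ) 1,
        kl xstar μ1 ≤ ωs * kl x μ1 + (1 - ωs) * kl x μ2 := by
      rintro x ⟨hx0x, hx1x⟩
      have hg := gibbs_aux hx0x hx1x hx0 hx1'
      rw [klexp x μ1 hx0x hx1x hμ10 h1, klexp x μ2 hx0x hx1x h2 hμ21, hkl1]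
      have hid : ωs * (x * (Real.log x - l1) + (1 - x) * (Real.log (1 - x) - m1)) +
          (1 - ωs) * (x * (Real.log x - l2) + (1 - x) * (Real.log (1 - x) - m2)) =
          (x * (Real.log x - ls) + (1 - x) * (Real.log (1 - x) - ms)) +
          (xstar * (ls - l1) + (1 - xstar) * (ms - m1)) := by
        linear_combination (xstar - x) * hrel + (1 - ωs) * hxM
      rw [hid]
      linarith [hg]
    have hinf : sInf ((fun x => ωs * kl x μ1 + (1 - ωs) * kl x μ2) '' Set.Ioo (0 : ℝ) 1) =
        kl xstar μ1 := by
      apply le_antisymm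
      · exact csInf_le ⟨kl xstar μ1, by rintro b ⟨x, hx, rfl⟩; exact hkey x hx⟩
          ⟨xstar, hxmem, hval ωs⟩
      · exact le_csInf ⟨_, ⟨xstar, hxmem, rfl⟩⟩ (by rintro b ⟨x, hx, rfl⟩; exact hkey x hx)
    calc kl xstar μ1 = sInf ((fun x => ωs * kl x μ1 + (1 - ωs) * kl x μ2) ''
          Set.Ioo (0 : ℝ) 1) := hinf.symm
      _ ≤ _ := le_csSup ⟨kl xstar μ1, hub⟩ (Set.mem_image_of_mem _ ⟨hω0, hω1⟩)
end

section
/- Let σ > 0 and let φ : ℝ → ℝ be twice differentiable with 0 < φ''(y) ≤ σ² for all y ∈ ℝ, and let d(a,b) = φ(a) − φ(b) − (a−b)·φ'(b) be its Bregman divergence. Let ξ2 < ξ1 and let y* ∈ (ξ2, ξ1) be the unique point with φ'(y*) = (φ(ξ1) − φ(ξ2))/(ξ1 − ξ2). Then d(ξ1, y*) = d(ξ2, y*) ≥ max{ d(ξ1, ξ2)², d(ξ2, ξ1)² } / ( 2σ²·(ξ1 − ξ2)² ). -/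
lemma key_lemma (σ : ℝ) (hσ : 0 < σ) (φ φ' φ'' : ℝ → ℝ)
    (hd1 : ∀ x, HasDerivAt φ (φ' x) x) (hd2 : ∀ x, HasDerivAt φ' (φ'' x) x)
    (hpos : ∀ y, 0 ≤ φ'' y) (hbound : ∀ y, φ'' y ≤ σ ^ 2)
    (a b : ℝ) (hab : b ≤ a) :
    (φ' a - φ' b) ^ 2 / (2 * σ ^ 2) ≤ φ a - φ b - (a - b) * φ' b := by
  have hσ2 : (0:ℝ) < σ ^ 2 := by positivity
  -- φ' is monotone
  have hmono : Monotone φ' := by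
    apply monotone_of_deriv_nonneg (fun x => (hd2 x).differentiableAt)
    intro x; rw [(hd2 x).deriv]; exact hpos x
  set Δ : ℝ := φ' a - φ' b with hΔdef
  have hΔ : 0 ≤ Δ := sub_nonneg.mpr (hmono hab)
  -- Δ ≤ σ²(a-b)
  have hlip : Δ ≤ σ ^ 2 * (a - b) := by
    have hg : Monotone (fun x => σ ^ 2 * x - φ' x) := by
      apply monotone_of_deriv_nonneg
      · exact fun x => ((hasDerivAt_id x).const_mul (σ^2)).sub (hd2 x) |>.differentiableAt
      · intro x
        have : HasDerivAt (fun x => σ ^ 2 * x - φ' x) (σ ^ 2 * 1 - φ'' x) x :=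
          ((hasDerivAt_id x).const_mul (σ^2)).sub (hd2 x)
        rw [this.deriv]
        have := hbound x; linarith
    have := hg hab
    simp only at this
    linarith
  set c : ℝ := a - Δ / σ ^ 2 with hcdef
  have hbc : b ≤ c := by
    rw [hcdef, le_sub_iff_add_le, ← le_sub_iff_add_le', div_le_iff₀ hσ2]
    linarith
  have hca : c ≤ a := by
    rw [hcdef]; have : 0 ≤ Δ / σ ^ 2 := by positivity
    linarith
  set f : ℝ → ℝ := fun x => φ x - φ b - (x - b) * φ' b with hfdef
  have hf' : ∀ x, HasDerivAt f (φ' x - φ' b) x := by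
    intro x
    have h1 : HasDerivAt (fun x => (x - b) * φ' b) (1 * φ' b) x :=
      ((hasDerivAt_id x).sub_const b).mul_const (φ' b)
    have := ((hd1 x).sub_const (φ b)).sub h1
    exact this.congr_deriv (by ring)
  -- f is monotone on [b, a]
  have hfmono : MonotoneOn f (Set.Icc b a) := by
    apply monotoneOn_of_deriv_nonneg (convex_Icc b a)
      (Continuous.continuousOn
        (Differentiable.continuous (fun x => (hf' x).differentiableAt)))
      (fun x _ => ((hf' x).differentiableAt).differentiableWithinAt)
    intro x hx
    rw [interior_Icc] at hx
    rw [(hf' x).deriv]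
    exact sub_nonneg.mpr (hmono hx.1.le)
  -- auxiliary h
  set H : ℝ → ℝ := fun x => f x - σ ^ 2 / 2 * (x - c) ^ 2 with hHdef
  have hH' : ∀ x, HasDerivAt H (φ' x - φ' b - σ ^ 2 * (x - c)) x := by
    intro x
    have h2 : HasDerivAt (fun x => σ ^ 2 / 2 * (x - c) ^ 2)
        (σ ^ 2 / 2 * (2 * (x - c) ^ 1 * 1)) x := by
      exact (((hasDerivAt_id x).sub_const c).pow 2).const_mul (σ^2/2)
    have := (hf' x).sub h2
    exact this.congr_deriv (by ring)
  -- the derivative of H is antitone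
  have hHanti : Antitone (fun x => φ' x - φ' b - σ ^ 2 * (x - c)) := by
    apply antitone_of_deriv_nonpos
    · intro x
      exact (((hd2 x).sub_const (φ' b)).sub
        (((hasDerivAt_id x).sub_const c).const_mul (σ^2))).differentiableAt
    · intro x
      have hder : HasDerivAt (fun x => φ' x - φ' b - σ ^ 2 * (x - c))
          (φ'' x - σ ^ 2 * 1) x := by
        exact ((hd2 x).sub_const (φ' b)).sub
          (((hasDerivAt_id x).sub_const c).const_mul (σ^2))
      rw [hder.deriv]
      have := hbound x; linarith
  have hH'a : φ' a - φ' b - σ ^ 2 * (a - c) = 0 := by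
    rw [hcdef]
    field_simp
    linarith [hΔdef]
  have hHmono : MonotoneOn H (Set.Icc c a) := by
    apply monotoneOn_of_deriv_nonneg (convex_Icc c a)
      (Continuous.continuousOn
        (Differentiable.continuous (fun x => (hH' x).differentiableAt)))
      (fun x _ => ((hH' x).differentiableAt).differentiableWithinAt)
    intro x hx
    rw [interior_Icc] at hx
    rw [(hH' x).deriv]
    have := hHanti hx.2.le
    simp only at this
    linarith [hH'a]
  have h1 : H c ≤ H a := hHmono (Set.mem_Icc.mpr ⟨le_refl c, hca⟩)
    (Set.mem_Icc.mpr ⟨hca, le_refl a⟩) hca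
  have h2 : f b ≤ f c := hfmono (Set.mem_Icc.mpr ⟨le_refl b, hab⟩)
    (Set.mem_Icc.mpr ⟨hbc, hca⟩) hbc
  have hfb : f b = 0 := by simp [hfdef]
  have hHc : H c = f c := by simp [hHdef]
  have hcalc : σ ^ 2 / 2 * (a - c) ^ 2 = Δ ^ 2 / (2 * σ ^ 2) := by
    rw [hcdef]
    field_simp
    ring
  have hHa : H a = f a - Δ ^ 2 / (2 * σ ^ 2) := by
    rw [hHdef]; simp only; rw [hcalc]
  have : 0 ≤ f a - Δ ^ 2 / (2 * σ ^ 2) := by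
    rw [← hHa]; linarith
  simpa [hfdef] using this

lemma key_lemma' (σ : ℝ) (hσ : 0 < σ) (φ φ' φ'' : ℝ → ℝ)
    (hd1 : ∀ x, HasDerivAt φ (φ' x) x) (hd2 : ∀ x, HasDerivAt φ' (φ'' x) x)
    (hpos : ∀ y, 0 ≤ φ'' y) (hbound : ∀ y, φ'' y ≤ σ ^ 2)
    (a b : ℝ) (hab : a ≤ b) :
    (φ' b - φ' a) ^ 2 / (2 * σ ^ 2) ≤ φ a - φ b - (a - b) * φ' b := by
  have hd1' : ∀ x, HasDerivAt (fun x => φ (-x)) (-(φ' (-x))) x := by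
    intro x
    have := (hd1 (-x)).comp x (hasDerivAt_neg x)
    exact this.congr_deriv (by ring)
  have hd2' : ∀ x, HasDerivAt (fun x => -(φ' (-x))) (φ'' (-x)) x := by
    intro x
    have := ((hd2 (-x)).comp x (hasDerivAt_neg x)).neg
    exact this.congr_deriv (by ring)
  have := key_lemma σ hσ (fun x => φ (-x)) (fun x => -(φ' (-x))) (fun x => φ'' (-x))
    hd1' hd2' (fun y => hpos (-y)) (fun y => hbound (-y)) (-a) (-b) (by linarith)
  simp only [neg_neg] at this
  calc (φ' b - φ' a) ^ 2 / (2 * σ ^ 2)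
      = (-(φ' a) - -(φ' b)) ^ 2 / (2 * σ ^ 2) := by ring_nf
    _ ≤ φ a - φ b - (-a - -b) * -(φ' b) := this
    _ = φ a - φ b - (a - b) * φ' b := by ring



/-- sub-Gaussian lower bound on the two-arm exponential family difficulty:
if `0 < φ'' ≤ σ²`, `ξ2 < ξ1` and `y* ∈ (ξ2,ξ1)` satisfies `φ'(y*) = (φ(ξ1)-φ(ξ2))/(ξ1-ξ2)`,
then `d(ξ1,y*) = d(ξ2,y*) ≥ max{d(ξ1,ξ2)², d(ξ2,ξ1)²} / (2σ²(ξ1-ξ2)²)`. -/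
theorem stmt_6 (σ : ℝ) (hσ : 0 < σ) (φ φ' φ'' : ℝ → ℝ)
    (hd1 : ∀ x, HasDerivAt φ (φ' x) x) (hd2 : ∀ x, HasDerivAt φ' (φ'' x) x)
    (hpos : ∀ y, 0 < φ'' y) (hbound : ∀ y, φ'' y ≤ σ ^ 2)
    (ξ1 ξ2 : ℝ) (h : ξ2 < ξ1)
    (ystar : ℝ) (hy : ystar ∈ Set.Ioo ξ2 ξ1)
    (hys : φ' ystar = (φ ξ1 - φ ξ2) / (ξ1 - ξ2)) :
    let d : ℝ → ℝ → ℝ := fun a b => φ a - φ b - (a - b) * φ' b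
    d ξ1 ystar = d ξ2 ystar ∧
    max ((d ξ1 ξ2) ^ 2) ((d ξ2 ξ1) ^ 2) / (2 * σ ^ 2 * (ξ1 - ξ2) ^ 2) ≤ d ξ1 ystar := by

  intro d
  have hne : ξ1 - ξ2 ≠ 0 := by linarith [h]
  have hys' : φ ξ1 - φ ξ2 = (ξ1 - ξ2) * φ' ystar := by
    rw [hys]; field_simp
  have heq : d ξ1 ystar = d ξ2 ystar := by
    simp only [d]
    nlinarith [hys']
  refine ⟨heq, ?_⟩
  have hσ2 : (0:ℝ) < σ ^ 2 := by positivity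
  have hpos' : ∀ y, 0 ≤ φ'' y := fun y => (hpos y).le
  -- rewrite d ξ1 ξ2 and d ξ2 ξ1
  have hD1 : d ξ1 ξ2 = (ξ1 - ξ2) * (φ' ystar - φ' ξ2) := by
    simp only [d]; nlinarith [hys']
  have hD2 : d ξ2 ξ1 = (ξ1 - ξ2) * (φ' ξ1 - φ' ystar) := by
    simp only [d]; nlinarith [hys']
  have hk1 : (φ' ξ1 - φ' ystar) ^ 2 / (2 * σ ^ 2) ≤ d ξ1 ystar :=
    key_lemma σ hσ φ φ' φ'' hd1 hd2 hpos' hbound ξ1 ystar hy.2.le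
  have hk2 : (φ' ystar - φ' ξ2) ^ 2 / (2 * σ ^ 2) ≤ d ξ2 ystar :=
    key_lemma' σ hσ φ φ' φ'' hd1 hd2 hpos' hbound ξ2 ystar hy.1.le
  rw [← heq] at hk2
  rw [div_le_iff₀ (by positivity)]
  rw [max_le_iff]
  constructor
  · rw [hD1]
    rw [div_le_iff₀ (by positivity)] at hk2
    nlinarith [hk2, sq_nonneg (ξ1 - ξ2)]
  · rw [hD2]
    rw [div_le_iff₀ (by positivity)] at hk1
    nlinarith [hk1, sq_nonneg (ξ1 - ξ2)]
end

section
/- Let K ≥ 1, σ ∈ (0,∞)^K, u ∈ ℝ^K with u ≠ 0, and ν ∈ ℝ^K with ν·u < 0 (the dot denoting the standard inner product). Then for every ω ∈ Δ_K^0, inf over { λ ∈ ℝ^K : λ·u ≥ 0 } of Σ_{k=1}^K ω_k σ_k^{-2} (λ_k − ν_k)² equals (ν·u)² / ( Σ_{k=1}^K u_k² σ_k² / ω_k ), and the infimum is attained. -/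
/-- weighted projection onto a half-space: for `ω` in the interior of the
simplex, `inf { ∑ ω_k σ_k⁻² (λ_k - ν_k)² : λ·u ≥ 0 } = (ν·u)² / (∑ u_k² σ_k² / ω_k)`,
and the infimum is attained. -/
theorem stmt_7 (K : ℕ) (hK : 1 ≤ K) (σ u ν : Fin K → ℝ) (hσ : ∀ k, 0 < σ k)
    (hu : u ≠ 0) (hν : ∑ k, ν k * u k < 0)
    (ω : Fin K → ℝ) (hω0 : ∀ k, 0 < ω k) (hω1 : ∑ k, ω k = 1) :
    IsLeast ((fun lam => ∑ k, ω k * (lam k - ν k) ^ 2 / σ k ^ 2) ''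
        {lam : Fin K → ℝ | 0 ≤ ∑ k, lam k * u k})
      ((∑ k, ν k * u k) ^ 2 / ∑ k, u k ^ 2 * σ k ^ 2 / ω k) := by
  set S := ∑ k, u k ^ 2 * σ k ^ 2 / ω k with hS
  have hSpos : 0 < S := by
    obtain ⟨k0, hk0⟩ : ∃ k, u k ≠ 0 := by
      by_contra h
      push_neg at h
      exact hu (funext h)
    apply Finset.sum_pos' (fun k _ => div_nonneg (by positivity) (hω0 k).le)
    exact ⟨k0, Finset.mem_univ _, by
      have h1 := hσ k0
      have h2 := hω0 k0
      positivity⟩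
  set N := ∑ k, ν k * u k with hN
  set t := -N / S with ht
  constructor
  · -- membership: minimizer
    refine ⟨fun k => ν k + t * (u k * σ k ^ 2 / ω k), ?_, ?_⟩
    · show (0:ℝ) ≤ ∑ k, (ν k + t * (u k * σ k ^ 2 / ω k)) * u k
      have heq : ∑ k, (ν k + t * (u k * σ k ^ 2 / ω k)) * u k = N + t * S := by
        rw [hN, hS, Finset.mul_sum, ← Finset.sum_add_distrib]
        congr 1; ext k; ring
      rw [heq, ht, div_mul_cancel₀ _ hSpos.ne']
      simp
    · show ∑ k, ω k * (ν k + t * (u k * σ k ^ 2 / ω k) - ν k) ^ 2 / σ k ^ 2 = N ^ 2 / S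
      have heq : ∑ k, ω k * (ν k + t * (u k * σ k ^ 2 / ω k) - ν k) ^ 2 / σ k ^ 2
          = t ^ 2 * S := by
        rw [hS, Finset.mul_sum]
        congr 1; ext k
        have hωk := (hω0 k).ne'
        have hσk := (hσ k).ne'
        field_simp
        ring
      rw [heq, ht]
      field_simp
  · -- lower bound
    rintro x ⟨lam, hlam, rfl⟩
    simp only [Set.mem_setOf_eq] at hlam
    have key : (∑ k, (lam k - ν k) * u k) ^ 2 ≤
        (∑ k, ω k * (lam k - ν k) ^ 2 / σ k ^ 2) * S := by
      have CS := Finset.sum_mul_sq_le_sq_mul_sq Finset.univ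
        (fun k => Real.sqrt (ω k) * (lam k - ν k) / σ k)
        (fun k => u k * σ k / Real.sqrt (ω k))
      have e1 : ∀ k : Fin K, Real.sqrt (ω k) * (lam k - ν k) / σ k *
          (u k * σ k / Real.sqrt (ω k)) = (lam k - ν k) * u k := by
        intro k
        have hs : Real.sqrt (ω k) ≠ 0 := (Real.sqrt_pos.mpr (hω0 k)).ne'
        field_simp [hs, (hσ k).ne']
      have e2 : ∀ k : Fin K, (Real.sqrt (ω k) * (lam k - ν k) / σ k) ^ 2 =
          ω k * (lam k - ν k) ^ 2 / σ k ^ 2 := by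
        intro k
        rw [div_pow, mul_pow, Real.sq_sqrt (hω0 k).le]
      have e3 : ∀ k : Fin K, (u k * σ k / Real.sqrt (ω k)) ^ 2 =
          u k ^ 2 * σ k ^ 2 / ω k := by
        intro k
        rw [div_pow, mul_pow, Real.sq_sqrt (hω0 k).le]
      calc (∑ k, (lam k - ν k) * u k) ^ 2
          = (∑ k, Real.sqrt (ω k) * (lam k - ν k) / σ k *
              (u k * σ k / Real.sqrt (ω k))) ^ 2 := by
            congr 1; exact (Finset.sum_congr rfl fun k _ => e1 k).symm
        _ ≤ (∑ k, (Real.sqrt (ω k) * (lam k - ν k) / σ k) ^ 2) *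
            ∑ k, (u k * σ k / Real.sqrt (ω k)) ^ 2 := CS
        _ = (∑ k, ω k * (lam k - ν k) ^ 2 / σ k ^ 2) * S := by
            rw [hS]
            congr 1
            · exact Finset.sum_congr rfl fun k _ => e2 k
            · exact Finset.sum_congr rfl fun k _ => e3 k
    have hdiff : ∑ k, (lam k - ν k) * u k = (∑ k, lam k * u k) - N := by
      rw [hN, ← Finset.sum_sub_distrib]
      congr 1; ext k; ring
    have hge : -N ≤ ∑ k, (lam k - ν k) * u k := by
      rw [hdiff]; linarith
    have hNneg : 0 < -N := by linarith
    have hsq : N ^ 2 ≤ (∑ k, (lam k - ν k) * u k) ^ 2 := by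
      have := sq_le_sq' (by linarith : -(∑ k, (lam k - ν k) * u k) ≤ N) (by nlinarith)
      nlinarith
    rw [div_le_iff₀ hSpos]
    exact le_trans hsq key
end

section
/- Let K ≥ 1, σ ∈ (0,∞)^K, and u ∈ ℝ^K with Σ_{k=1}^K |u_k| σ_k = 1. Let λ ∈ ℝ^K satisfy λ·u < 0 (the dot denoting the standard inner product). Then sup over ω ∈ Δ_K^0 of inf over { ν ∈ ℝ^K : ν·u ≥ 0 } of (1/2)·Σ_{k=1}^K ω_k σ_k^{-2} (ν_k − λ_k)² equals (1/2)·(λ·u)². -/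
open Finset Filter Topology

private lemma aux9_S_ge_one (K : ℕ) (σ u ω : Fin K → ℝ)
    (hu : ∑ k, |u k| * σ k = 1) (hω : ∀ k, 0 < ω k) (hω1 : ∑ k, ω k = 1) :
    1 ≤ ∑ k, u k ^ 2 * σ k ^ 2 / ω k := by
  have hcs := Finset.sum_sq_le_sum_mul_sum_of_sq_eq_mul (Finset.univ (α := Fin K))
      (r := fun k => |u k| * σ k) (f := ω) (g := fun k => u k ^ 2 * σ k ^ 2 / ω k)
      (fun k _ => (hω k).le)
      (fun k _ => div_nonneg (mul_nonneg (sq_nonneg _) (sq_nonneg _)) (hω k).le)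
      (fun k _ => by
        have h1 := (hω k).ne'
        field_simp
        rw [sq_abs]; ring)
  rw [hu, hω1, one_pow, one_mul] at hcs
  exact hcs

private lemma aux9_inf (K : ℕ) (σ u lam ω : Fin K → ℝ) (hσ : ∀ k, 0 < σ k) (hω : ∀ k, 0 < ω k)
    (hS : 0 < ∑ k, u k ^ 2 * σ k ^ 2 / ω k)
    (hc : ∑ k, lam k * u k ≤ 0) :
    sInf ((fun ν => (1 / 2) * ∑ k, ω k * (ν k - lam k) ^ 2 / σ k ^ 2) ''
        {ν : Fin K → ℝ | 0 ≤ ∑ k, ν k * u k})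
      = (1 / 2) * (∑ k, lam k * u k) ^ 2 / (∑ k, u k ^ 2 * σ k ^ 2 / ω k) := by
  set c := ∑ k, lam k * u k with hcdef
  set S := ∑ k, u k ^ 2 * σ k ^ 2 / ω k with hSdef
  apply le_antisymm
  · apply csInf_le
    · refine ⟨0, ?_⟩
      rintro x ⟨ν, hν, rfl⟩
      have : ∀ k ∈ Finset.univ, (0:ℝ) ≤ ω k * (ν k - lam k) ^ 2 / σ k ^ 2 :=
        fun k _ => div_nonneg (mul_nonneg (hω k).le (sq_nonneg _)) (sq_nonneg _)
      have h := Finset.sum_nonneg this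
      positivity
    · refine ⟨fun k => lam k - (c / S) * (u k * σ k ^ 2 / ω k), ?_, ?_⟩
      · show 0 ≤ ∑ k, (lam k - (c / S) * (u k * σ k ^ 2 / ω k)) * u k
        have : ∑ k, (lam k - (c / S) * (u k * σ k ^ 2 / ω k)) * u k
            = c - (c / S) * S := by
          rw [hcdef, hSdef, Finset.mul_sum, ← Finset.sum_sub_distrib]
          apply Finset.sum_congr rfl
          intro k _
          have := (hω k).ne'
          field_simp
        rw [this]
        field_simp
        simp
      · have : ∀ k, ω k * (lam k - (c / S) * (u k * σ k ^ 2 / ω k) - lam k) ^ 2 / σ k ^ 2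
            = (c / S) ^ 2 * (u k ^ 2 * σ k ^ 2 / ω k) := by
          intro k
          have h1 := (hω k).ne'
          have h2 := (hσ k).ne'
          field_simp
          ring
        simp only [this, ← Finset.mul_sum, ← hSdef]
        field_simp
  · apply le_csInf
    · exact ⟨_, ⟨fun _ => 0, by simp, rfl⟩⟩
    · rintro x ⟨ν, hν, rfl⟩
      have hcs : (∑ k, u k * (ν k - lam k)) ^ 2
          ≤ (∑ k, ω k * (ν k - lam k) ^ 2 / σ k ^ 2) * S := by
        refine Finset.sum_sq_le_sum_mul_sum_of_sq_eq_mul _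
          (fun k _ => div_nonneg (mul_nonneg (hω k).le (sq_nonneg _)) (sq_nonneg _))
          (fun k _ => div_nonneg (mul_nonneg (sq_nonneg _) (sq_nonneg _)) (hω k).le) ?_
        intro k _
        have h1 := (hω k).ne'
        have h2 := (hσ k).ne'
        field_simp
      have hd : -c ≤ ∑ k, u k * (ν k - lam k) := by
        have : ∑ k, u k * (ν k - lam k) = (∑ k, ν k * u k) - c := by
          rw [hcdef, ← Finset.sum_sub_distrib]
          exact Finset.sum_congr rfl fun k _ => by ring
        rw [this]
        have hν' : 0 ≤ ∑ k, ν k * u k := hν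
        linarith
      have hcsq : c ^ 2 ≤ (∑ k, u k * (ν k - lam k)) ^ 2 := by
        have h0 : 0 ≤ -c := by linarith
        calc c ^ 2 = (-c) ^ 2 := by ring
        _ ≤ (∑ k, u k * (ν k - lam k)) ^ 2 := by
            apply pow_le_pow_left₀ h0 hd
      have hfin : c ^ 2 ≤ (∑ k, ω k * (ν k - lam k) ^ 2 / σ k ^ 2) * S := le_trans hcsq hcs
      rw [div_le_iff₀ hS]
      calc (1:ℝ)/2 * c ^ 2 ≤ 1/2 * ((∑ k, ω k * (ν k - lam k) ^ 2 / σ k ^ 2) * S) := by linarith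
      _ = 1/2 * (∑ k, ω k * (ν k - lam k) ^ 2 / σ k ^ 2) * S := by ring

/-- Gaussian half-space identification, inverse oracle difficulty of static
proportions at `λ` with `λ·u < 0`:
`sup_{ω ∈ Δ_K⁰} inf_{ν·u ≥ 0} (1/2) ∑ ω_k σ_k⁻² (ν_k - λ_k)² = (1/2)(λ·u)²`. -/
theorem stmt_9 (K : ℕ) (hK : 1 ≤ K) (σ u : Fin K → ℝ) (hσ : ∀ k, 0 < σ k)
    (hu : ∑ k, |u k| * σ k = 1) (lam : Fin K → ℝ) (hlam : ∑ k, lam k * u k < 0) :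
    let Δ0 : Set (Fin K → ℝ) := {ω | (∀ k, 0 < ω k) ∧ ∑ k, ω k = 1}
    sSup ((fun ω => sInf ((fun ν => (1 / 2) * ∑ k, ω k * (ν k - lam k) ^ 2 / σ k ^ 2) ''
        {ν : Fin K → ℝ | 0 ≤ ∑ k, ν k * u k})) '' Δ0)
      = (1 / 2) * (∑ k, lam k * u k) ^ 2 := by
  intro Δ0
  have hc2 : 0 < (∑ k, lam k * u k) ^ 2 := by nlinarith
  have hub : ∀ x ∈ ((fun ω => sInf ((fun ν => (1 / 2) * ∑ k, ω k * (ν k - lam k) ^ 2 / σ k ^ 2) ''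
        {ν : Fin K → ℝ | 0 ≤ ∑ k, ν k * u k})) '' Δ0), x ≤ (1 / 2) * (∑ k, lam k * u k) ^ 2 := by
    rintro x ⟨ω, ⟨hωpos, hωsum⟩, rfl⟩
    have hS1 := aux9_S_ge_one K σ u ω hu hωpos hωsum
    have hS0 : 0 < ∑ k, u k ^ 2 * σ k ^ 2 / ω k := lt_of_lt_of_le one_pos hS1
    simp only [aux9_inf K σ u lam ω hσ hωpos hS0 hlam.le]
    exact div_le_self (by positivity) hS1
  have hbdd : BddAbove ((fun ω => sInf ((fun ν => (1 / 2) * ∑ k, ω k * (ν k - lam k) ^ 2 / σ k ^ 2) ''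
        {ν : Fin K → ℝ | 0 ≤ ∑ k, ν k * u k})) '' Δ0) := ⟨_, hub⟩
  apply le_antisymm
  · exact Real.sSup_le hub (by positivity)
  · have hlow : ∀ ε : ℝ, 0 < ε →
        (1 / 2) * (∑ k, lam k * u k) ^ 2 / (1 + K * ε)
          ≤ sSup ((fun ω => sInf ((fun ν => (1 / 2) * ∑ k, ω k * (ν k - lam k) ^ 2 / σ k ^ 2) ''
              {ν : Fin K → ℝ | 0 ≤ ∑ k, ν k * u k})) '' Δ0) := by
      intro ε hε
      set D : ℝ := 1 + K * ε with hD
      have hD0 : 0 < D := by positivity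
      set ωe : Fin K → ℝ := fun k => (|u k| * σ k + ε) / D with hωe
      have hpos : ∀ k, 0 < ωe k := fun k =>
        div_pos (by have := abs_nonneg (u k); have := (hσ k).le; positivity) hD0
      have hsum : ∑ k, ωe k = 1 := by
        rw [hωe]
        rw [← Finset.sum_div, Finset.sum_add_distrib, hu, Finset.sum_const, Finset.card_univ,
          Fintype.card_fin, nsmul_eq_mul]
        rw [hD]
        field_simp
      have hSle : ∑ k, u k ^ 2 * σ k ^ 2 / ωe k ≤ D := by
        calc ∑ k, u k ^ 2 * σ k ^ 2 / ωe k ≤ ∑ k, D * (|u k| * σ k) := by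
              apply Finset.sum_le_sum
              intro k _
              rw [div_le_iff₀ (hpos k)]
              have heq : D * (|u k| * σ k) * ωe k = |u k| * σ k * (|u k| * σ k + ε) := by
                rw [hωe]
                field_simp
              rw [heq]
              have h1 : u k ^ 2 * σ k ^ 2 = (|u k| * σ k) ^ 2 := by rw [mul_pow, sq_abs]
              rw [h1]
              nlinarith [mul_nonneg (mul_nonneg (abs_nonneg (u k)) (hσ k).le) hε.le]
          _ = D := by rw [← Finset.mul_sum, hu, mul_one]
      have hS1 := aux9_S_ge_one K σ u ωe hu hpos hsum
      have hS0 : 0 < ∑ k, u k ^ 2 * σ k ^ 2 / ωe k := lt_of_lt_of_le one_pos hS1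
      refine le_trans ?_ (le_csSup hbdd ⟨ωe, ⟨hpos, hsum⟩, rfl⟩)
      simp only [aux9_inf K σ u lam ωe hσ hpos hS0 hlam.le]
      exact div_le_div_of_nonneg_left (by positivity) hS0 hSle
    have htend : Tendsto (fun ε : ℝ => (1 / 2) * (∑ k, lam k * u k) ^ 2 / (1 + K * ε))
        (𝓝[>] (0:ℝ)) (𝓝 ((1 / 2) * (∑ k, lam k * u k) ^ 2)) := by
      have hC : ContinuousAt (fun ε : ℝ => (1 / 2) * (∑ k, lam k * u k) ^ 2 / (1 + K * ε)) 0 := by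
        apply ContinuousAt.div
        · exact continuousAt_const
        · fun_prop
        · norm_num
      have h := hC.continuousWithinAt (s := Set.Ioi (0:ℝ))
      have h2 := h.tendsto
      simpa using h2
    exact le_of_tendsto htend
      (eventually_nhdsWithin_of_forall (fun ε hε => hlow ε hε))
end

section
/- Let K ≥ 1, σ ∈ (0,∞)^K, and u ∈ ℝ^K with Σ_{k=1}^K |u_k| σ_k = 1. Let ν ∈ ℝ^K satisfy ν·u < 0. Then sup over ω ∈ Δ_K^0 of inf over { λ ∈ ℝ^K : λ·u > 0 } of [ Σ_{k=1}^K ω_k σ_k^{-2} (ν_k − λ_k)² ] / (λ·u)² equals 1. -/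
open Finset

/-- Weighted Cauchy–Schwarz. -/
lemma cs_w {K : ℕ} (w p q : Fin K → ℝ) (hw : ∀ k, 0 < w k) :
    (∑ k, p k * q k) ^ 2 ≤ (∑ k, w k * p k ^ 2) * (∑ k, q k ^ 2 / w k) := by
  have h := Finset.sum_mul_sq_le_sq_mul_sq Finset.univ
      (fun k => Real.sqrt (w k) * p k) (fun k => q k / Real.sqrt (w k))
  have e1 : ∀ k : Fin K, Real.sqrt (w k) * p k * (q k / Real.sqrt (w k)) = p k * q k := by
    intro k
    have hs : Real.sqrt (w k) ≠ 0 := ne_of_gt (Real.sqrt_pos.2 (hw k))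
    field_simp
  have e2 : ∀ k : Fin K, (Real.sqrt (w k) * p k) ^ 2 = w k * p k ^ 2 := by
    intro k; rw [mul_pow, Real.sq_sqrt (hw k).le]
  have e3 : ∀ k : Fin K, (q k / Real.sqrt (w k)) ^ 2 = q k ^ 2 / w k := by
    intro k; rw [div_pow, Real.sq_sqrt (hw k).le]
  simpa only [e1, e2, e3] using h

/-- Computation for the explicit family λ = ν + t·(uσ²/ω). -/
lemma lam_calc {K : ℕ} (σ u ν ω : Fin K → ℝ) (hσ : ∀ k, 0 < σ k) (hω : ∀ k, 0 < ω k) (t : ℝ) :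
    (∑ k, (ν k + t * (u k * σ k ^ 2 / ω k)) * u k
        = (∑ k, ν k * u k) + t * (∑ k, u k ^ 2 * σ k ^ 2 / ω k)) ∧
    (∑ k, ω k * (ν k - (ν k + t * (u k * σ k ^ 2 / ω k))) ^ 2 / σ k ^ 2
        = t ^ 2 * (∑ k, u k ^ 2 * σ k ^ 2 / ω k)) := by
  constructor
  · rw [mul_sum, ← sum_add_distrib]
    refine Finset.sum_congr rfl fun k _ => ?_
    have h1 : (ω k : ℝ) ≠ 0 := ne_of_gt (hω k)
    field_simp
  · rw [mul_sum]
    refine Finset.sum_congr rfl fun k _ => ?_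
    have h1 : (ω k : ℝ) ≠ 0 := ne_of_gt (hω k)
    have h2 : (σ k : ℝ) ≠ 0 := ne_of_gt (hσ k)
    field_simp; ring

lemma S_ge_one {K : ℕ} (σ u ω : Fin K → ℝ) (hω : ∀ k, 0 < ω k)
    (hω1 : ∑ k, ω k = 1) (hu : ∑ k, |u k| * σ k = 1) :
    1 ≤ ∑ k, u k ^ 2 * σ k ^ 2 / ω k := by
  have h := cs_w ω (fun _ => 1) (fun k => |u k| * σ k) hω
  simp only [one_mul, mul_one, one_pow] at h
  rw [hu, hω1, one_pow, one_mul] at h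
  have e : ∀ k : Fin K, (|u k| * σ k) ^ 2 / ω k = u k ^ 2 * σ k ^ 2 / ω k := by
    intro k; rw [mul_pow, sq_abs]
  simpa only [e] using h

/-- Lower bound: every value is at least 1/S. -/
lemma val_ge {K : ℕ} (σ u ν ω : Fin K → ℝ) (hσ : ∀ k, 0 < σ k) (hω : ∀ k, 0 < ω k)
    (hν : ∑ k, ν k * u k < 0) (hS : 0 < ∑ k, u k ^ 2 * σ k ^ 2 / ω k)
    (lam : Fin K → ℝ) (hlam : 0 < ∑ k, lam k * u k) :
    1 / (∑ k, u k ^ 2 * σ k ^ 2 / ω k) ≤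
      (∑ k, ω k * (ν k - lam k) ^ 2 / σ k ^ 2) / (∑ k, lam k * u k) ^ 2 := by
  set S := ∑ k, u k ^ 2 * σ k ^ 2 / ω k
  set d := ∑ k, lam k * u k
  set N := ∑ k, ω k * (ν k - lam k) ^ 2 / σ k ^ 2 with hN
  have hcs := cs_w ω (fun k => (lam k - ν k) / σ k) (fun k => σ k * u k) hω
  have e1 : ∀ k : Fin K, (lam k - ν k) / σ k * (σ k * u k) = lam k * u k - ν k * u k := by
    intro k; have := ne_of_gt (hσ k); field_simp
  have e2 : ∀ k : Fin K, ω k * ((lam k - ν k) / σ k) ^ 2 = ω k * (ν k - lam k) ^ 2 / σ k ^ 2 := by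
    intro k; rw [div_pow, ← neg_sub (ν k), neg_pow, even_two.neg_one_pow]; ring
  have e3 : ∀ k : Fin K, (σ k * u k) ^ 2 / ω k = u k ^ 2 * σ k ^ 2 / ω k := by
    intro k; rw [mul_pow]; ring_nf
  simp only [e1, e2, e3, Finset.sum_sub_distrib] at hcs
  have hdm : d ^ 2 ≤ (d - (∑ k, ν k * u k)) ^ 2 := by
    have h1 : (0:ℝ) ≤ d := hlam.le
    have h2 : d ≤ d - (∑ k, ν k * u k) := by linarith
    exact pow_le_pow_left₀ h1 h2 2
  have key : d ^ 2 ≤ N * S := le_trans hdm hcs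
  rw [div_le_div_iff₀ hS (pow_pos hlam 2)]
  linarith

lemma bdd_below_inner {K : ℕ} (σ u ν ω : Fin K → ℝ) (hω : ∀ k, 0 < ω k) :
    BddBelow ((fun lam =>
        (∑ k, ω k * (ν k - lam k) ^ 2 / σ k ^ 2) / (∑ k, lam k * u k) ^ 2) ''
        {lam : Fin K → ℝ | 0 < ∑ k, lam k * u k}) := by
  refine ⟨0, ?_⟩
  rintro x ⟨lam, _, rfl⟩
  exact div_nonneg (Finset.sum_nonneg fun k _ =>
    div_nonneg (mul_nonneg (hω k).le (sq_nonneg _)) (sq_nonneg _)) (sq_nonneg _)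

lemma nonempty_inner {K : ℕ} (σ u ν ω : Fin K → ℝ) (hσ : ∀ k, 0 < σ k) (hω : ∀ k, 0 < ω k)
    (hν : ∑ k, ν k * u k < 0)
    (hS : 0 < ∑ k, u k ^ 2 * σ k ^ 2 / ω k) :
    ((fun lam =>
        (∑ k, ω k * (ν k - lam k) ^ 2 / σ k ^ 2) / (∑ k, lam k * u k) ^ 2) ''
        {lam : Fin K → ℝ | 0 < ∑ k, lam k * u k}).Nonempty := by
  set S := ∑ k, u k ^ 2 * σ k ^ 2 / ω k
  set m := ∑ k, ν k * u k
  set t : ℝ := (1 - m) / S with ht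
  refine ⟨_, ⟨fun k => ν k + t * (u k * σ k ^ 2 / ω k), ?_, rfl⟩⟩
  have h := (lam_calc σ u ν ω hσ hω t).1
  simp only [Set.mem_setOf_eq, h]
  have : t * S = 1 - m := by rw [ht]; field_simp
  rw [this]; linarith

lemma inner_ge {K : ℕ} (σ u ν ω : Fin K → ℝ) (hσ : ∀ k, 0 < σ k) (hω : ∀ k, 0 < ω k)
    (hν : ∑ k, ν k * u k < 0)
    (hS : 0 < ∑ k, u k ^ 2 * σ k ^ 2 / ω k) :
    1 / (∑ k, u k ^ 2 * σ k ^ 2 / ω k) ≤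
    sInf ((fun lam =>
        (∑ k, ω k * (ν k - lam k) ^ 2 / σ k ^ 2) / (∑ k, lam k * u k) ^ 2) ''
        {lam : Fin K → ℝ | 0 < ∑ k, lam k * u k}) := by
  refine le_csInf (nonempty_inner σ u ν ω hσ hω hν hS) ?_
  rintro b ⟨lam, hlam, rfl⟩
  exact val_ge σ u ν ω hσ hω hν hS lam hlam

lemma inner_le_one {K : ℕ} (σ u ν ω : Fin K → ℝ) (hσ : ∀ k, 0 < σ k) (hω : ∀ k, 0 < ω k)
    (hν : ∑ k, ν k * u k < 0) (hω1 : ∑ k, ω k = 1)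
    (hu : ∑ k, |u k| * σ k = 1) :
    sInf ((fun lam =>
        (∑ k, ω k * (ν k - lam k) ^ 2 / σ k ^ 2) / (∑ k, lam k * u k) ^ 2) ''
        {lam : Fin K → ℝ | 0 < ∑ k, lam k * u k}) ≤ 1 := by
  set S := ∑ k, u k ^ 2 * σ k ^ 2 / ω k with hSdef
  set m := ∑ k, ν k * u k with hmdef
  have hS1 : 1 ≤ S := S_ge_one σ u ω hω hω1 hu
  have hS : 0 < S := lt_of_lt_of_le one_pos hS1
  refine le_of_forall_pos_le_add fun ε hε => ?_
  set δ : ℝ := min (ε / 3) 1 with hδdef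
  have hδ : 0 < δ := lt_min (by linarith) one_pos
  set T : ℝ := (-m) * (1 + 1 / δ) with hTdef
  have hm : 0 < -m := by simpa using hν
  have hT : 0 < T := mul_pos hm (by positivity)
  set t : ℝ := T / S with htdef
  have ht : 0 < t := div_pos hT hS
  have hcalc := lam_calc σ u ν ω hσ hω t
  have htS : t * S = T := by rw [htdef]; field_simp
  have hd : m + t * S = -m / δ := by
    rw [htS, hTdef]; field_simp; ring
  have hdpos : 0 < m + t * S := by rw [hd]; positivity
  have hmem : (fun k => ν k + t * (u k * σ k ^ 2 / ω k)) ∈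
      {lam : Fin K → ℝ | 0 < ∑ k, lam k * u k} := by
    simp only [Set.mem_setOf_eq, hcalc.1]; exact hdpos
  have hle := csInf_le (bdd_below_inner σ u ν ω hω) ⟨_, hmem, rfl⟩
  refine le_trans hle ?_
  simp only [hcalc.1, hcalc.2]
  have hval : t ^ 2 * S / (m + t * S) ^ 2 ≤ (1 + δ) ^ 2 := by
    rw [div_le_iff₀ (pow_pos hdpos 2), hd]
    have h1 : t ^ 2 * S = T ^ 2 / S := by rw [htdef]; field_simp
    have h2 : T ^ 2 / S ≤ T ^ 2 := div_le_self (sq_nonneg T) hS1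
    have h3 : T ^ 2 = (1 + δ) ^ 2 * (-m / δ) ^ 2 := by
      rw [hTdef]; field_simp; ring
    linarith
  have hδ1 : δ ≤ 1 := min_le_right _ _
  have hδ2 : δ ≤ ε / 3 := min_le_left _ _
  nlinarith [hval, sq_nonneg δ, mul_le_one₀ hδ1 hδ.le hδ1]

lemma good_omega {K : ℕ} (σ u : Fin K → ℝ) (hσ : ∀ k, 0 < σ k)
    (hu : ∑ k, |u k| * σ k = 1) (δ : ℝ) (hδ : 0 < δ) :
    (∀ k, 0 < (|u k| * σ k + δ) / (1 + K * δ)) ∧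
    (∑ k, (|u k| * σ k + δ) / (1 + K * δ) = 1) ∧
    (∑ k, u k ^ 2 * σ k ^ 2 / ((|u k| * σ k + δ) / (1 + K * δ)) ≤ 1 + K * δ) := by
  have hB : (0:ℝ) < 1 + K * δ := by positivity
  have hA : ∀ k, (0:ℝ) < |u k| * σ k + δ := fun k =>
    add_pos_of_nonneg_of_pos (mul_nonneg (abs_nonneg _) (hσ k).le) hδ
  refine ⟨fun k => div_pos (hA k) hB, ?_, ?_⟩
  · rw [← Finset.sum_div, Finset.sum_add_distrib, hu, Finset.sum_const,
      Finset.card_univ, Fintype.card_fin, nsmul_eq_mul, div_self (ne_of_gt hB)]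
  · calc ∑ k, u k ^ 2 * σ k ^ 2 / ((|u k| * σ k + δ) / (1 + K * δ))
        ≤ ∑ k, |u k| * σ k * (1 + K * δ) := by
          refine Finset.sum_le_sum fun k _ => ?_
          rw [div_div_eq_mul_div, div_le_iff₀ (hA k)]
          have h1 : u k ^ 2 * σ k ^ 2 = (|u k| * σ k) ^ 2 := by
            rw [mul_pow, sq_abs]
          have h2 : (|u k| * σ k) ^ 2 ≤ |u k| * σ k * (|u k| * σ k + δ) := by
            nlinarith [mul_nonneg (abs_nonneg (u k)) (hσ k).le]
          calc u k ^ 2 * σ k ^ 2 * (1 + K * δ) = (|u k| * σ k) ^ 2 * (1 + K * δ) := by rw [h1]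
            _ ≤ |u k| * σ k * (|u k| * σ k + δ) * (1 + K * δ) := by
                exact mul_le_mul_of_nonneg_right h2 hB.le
            _ = |u k| * σ k * (1 + K * δ) * (|u k| * σ k + δ) := by ring
      _ = 1 + K * δ := by rw [← Finset.sum_mul, hu, one_mul]

/-- core of the half-space identification lemma:
`sup_{ω ∈ Δ_K⁰} inf_{λ·u > 0} (∑ ω_k σ_k⁻² (ν_k - λ_k)²) / (λ·u)² = 1`
for `ν` with `ν·u < 0` and `∑ |u_k| σ_k = 1`. -/
theorem stmt_10 (K : ℕ) (hK : 1 ≤ K) (σ u : Fin K → ℝ) (hσ : ∀ k, 0 < σ k)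
    (hu : ∑ k, |u k| * σ k = 1) (ν : Fin K → ℝ) (hν : ∑ k, ν k * u k < 0) :
    let Δ0 : Set (Fin K → ℝ) := {ω | (∀ k, 0 < ω k) ∧ ∑ k, ω k = 1}
    sSup ((fun ω => sInf ((fun lam =>
        (∑ k, ω k * (ν k - lam k) ^ 2 / σ k ^ 2) / (∑ k, lam k * u k) ^ 2) ''
        {lam : Fin K → ℝ | 0 < ∑ k, lam k * u k})) '' Δ0) = 1 := by
  intro Δ0
  set F : (Fin K → ℝ) → ℝ := fun ω => sInf ((fun lam =>
        (∑ k, ω k * (ν k - lam k) ^ 2 / σ k ^ 2) / (∑ k, lam k * u k) ^ 2) ''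
        {lam : Fin K → ℝ | 0 < ∑ k, lam k * u k}) with hF
  have hub : ∀ a ∈ F '' Δ0, a ≤ 1 := by
    rintro a ⟨ω, ⟨hωpos, hω1⟩, rfl⟩
    exact inner_le_one σ u ν ω hσ hωpos hν hω1 hu
  have hbdd : BddAbove (F '' Δ0) := ⟨1, hub⟩
  refine le_antisymm (Real.sSup_le hub zero_le_one) ?_
  refine le_of_forall_pos_le_add fun ε hε => ?_
  set ε' : ℝ := min ε 1 with hε'def
  have hε'pos : 0 < ε' := lt_min hε one_pos
  have hε'1 : ε' ≤ 1 := min_le_right _ _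
  have hε'ε : ε' ≤ ε := min_le_left _ _
  have hKpos : (0:ℝ) < K := by exact_mod_cast hK
  set δ : ℝ := ε' / K with hδdef
  have hδpos : 0 < δ := div_pos hε'pos hKpos
  obtain ⟨hωpos, hω1, hSle⟩ := good_omega σ u hσ hu δ hδpos
  set ω : Fin K → ℝ := fun k => (|u k| * σ k + δ) / (1 + K * δ) with hωdef
  have hKδ : (K:ℝ) * δ = ε' := by rw [hδdef]; field_simp
  set S := ∑ k, u k ^ 2 * σ k ^ 2 / ω k with hSdef
  have hSle' : S ≤ 1 + ε' := by rw [← hKδ]; exact hSle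
  have hS1 : 1 ≤ S := S_ge_one σ u ω hωpos hω1 hu
  have hS : 0 < S := lt_of_lt_of_le one_pos hS1
  have h1 : 1 / (1 + ε') ≤ 1 / S :=
    one_div_le_one_div_of_le hS hSle'
  have h2 : 1 - ε' ≤ 1 / (1 + ε') := by
    rw [le_div_iff₀ (by linarith : (0:ℝ) < 1 + ε')]
    nlinarith
  have h3 : 1 / S ≤ F ω := inner_ge σ u ν ω hσ hωpos hν hS
  have h4 : F ω ≤ sSup (F '' Δ0) :=
    le_csSup hbdd ⟨ω, ⟨hωpos, hω1⟩, rfl⟩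
  linarith
end

section
/- Let K ≥ 1, σ ∈ (0,∞)^K, u ∈ ℝ^K with Σ_{k=1}^K |u_k| σ_k = 1, η ∈ ℝ^K and r > 0. Let μ ∈ ℝ^K satisfy ‖μ − η‖_{σ^{-2}} ≤ r/(√K + 1) and (μ − η)·u < 0. Then sup over ω ∈ Δ_K^0 of inf over { λ ∈ ℝ^K : ‖λ − η‖_{σ^{-2}} ≤ r and (λ − η)·u ≥ 0 } of Σ_{k=1}^K ω_k σ_k^{-2} (λ_k − μ_k)² equals ((μ − η)·u)², and this coincides with the value of the same sup–inf taken over the full half-space { λ : (λ − η)·u ≥ 0 } without the ball constraint. -/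
open Finset

private lemma stmt11_minkowski {K : ℕ} (a b : Fin K → ℝ) :
    Real.sqrt (∑ k, (a k + b k) ^ 2) ≤
      Real.sqrt (∑ k, a k ^ 2) + Real.sqrt (∑ k, b k ^ 2) := by
  have hA : (0:ℝ) ≤ ∑ k, a k ^ 2 := Finset.sum_nonneg fun k _ => sq_nonneg _
  have hB : (0:ℝ) ≤ ∑ k, b k ^ 2 := Finset.sum_nonneg fun k _ => sq_nonneg _
  have hcs := Real.sum_mul_le_sqrt_mul_sqrt Finset.univ a b
  have hA' := Real.sq_sqrt hA
  have hB' := Real.sq_sqrt hB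
  have hexp : ∑ k, (a k + b k) ^ 2
      = (∑ k, a k ^ 2) + 2 * (∑ k, a k * b k) + ∑ k, b k ^ 2 := by
    rw [Finset.mul_sum, ← Finset.sum_add_distrib, ← Finset.sum_add_distrib]
    exact Finset.sum_congr rfl fun k _ => by ring
  have h2 : ∑ k, (a k + b k) ^ 2
      ≤ (Real.sqrt (∑ k, a k ^ 2) + Real.sqrt (∑ k, b k ^ 2)) ^ 2 := by
    rw [hexp]; nlinarith [hcs]
  calc Real.sqrt (∑ k, (a k + b k) ^ 2)
      ≤ Real.sqrt ((Real.sqrt (∑ k, a k ^ 2) + Real.sqrt (∑ k, b k ^ 2)) ^ 2) :=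
        Real.sqrt_le_sqrt h2
    _ = _ := Real.sqrt_sq (by positivity)

private lemma stmt11_key {K : ℕ} (σ u η : Fin K → ℝ) (hσ : ∀ k, 0 < σ k)
    (hu : ∑ k, |u k| * σ k = 1) (μ : Fin K → ℝ)
    (hμu : ∑ k, (μ k - η k) * u k < 0)
    (S : Set (Fin K → ℝ))
    (hsub : ∀ lam ∈ S, 0 ≤ ∑ k, (lam k - η k) * u k)
    (lamhat : Fin K → ℝ) (hmem : lamhat ∈ S)
    (hlam : ∀ k, (lamhat k - μ k) ^ 2 = (∑ j, (μ j - η j) * u j) ^ 2 * σ k ^ 2) :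
    sSup ((fun ω => sInf ((fun lam => ∑ k, ω k * (lam k - μ k) ^ 2 / σ k ^ 2) '' S)) ''
        {ω : Fin K → ℝ | (∀ k, 0 < ω k) ∧ ∑ k, ω k = 1}) = (∑ k, (μ k - η k) * u k) ^ 2 := by
  set c : ℝ := ∑ k, (μ k - η k) * u k with hc
  set Δ0 : Set (Fin K → ℝ) := {ω : Fin K → ℝ | (∀ k, 0 < ω k) ∧ ∑ k, ω k = 1} with hΔ0
  set A : Set ℝ :=
    ((fun ω => sInf ((fun lam => ∑ k, ω k * (lam k - μ k) ^ 2 / σ k ^ 2) '' S)) '' Δ0) with hA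
  have hsum1 : ∑ k, σ k * |u k| = 1 := by
    rw [← hu]; exact Finset.sum_congr rfl fun k _ => mul_comm _ _
  -- value of the objective at lamhat
  have hval : ∀ ω : Fin K → ℝ, ω ∈ Δ0 →
      ∑ k, ω k * (lamhat k - μ k) ^ 2 / σ k ^ 2 = c ^ 2 := by
    intro ω hω
    have hterm : ∀ k, ω k * (lamhat k - μ k) ^ 2 / σ k ^ 2 = ω k * c ^ 2 := by
      intro k
      rw [hlam k]
      field_simp [(hσ k).ne']
    rw [Finset.sum_congr rfl fun k _ => hterm k, ← Finset.sum_mul, hω.2, one_mul]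
  -- every element of A is at most c^2
  have hub : ∀ x ∈ A, x ≤ c ^ 2 := by
    rintro x ⟨ω, hω, rfl⟩
    have hbdd : BddBelow ((fun lam => ∑ k, ω k * (lam k - μ k) ^ 2 / σ k ^ 2) '' S) := by
      refine ⟨0, ?_⟩
      rintro y ⟨lam, _, rfl⟩
      refine Finset.sum_nonneg fun k _ => ?_
      have hk := (hω.1 k).le
      positivity
    have hle := csInf_le hbdd (Set.mem_image_of_mem _ hmem)
    simpa [hval ω hω] using hle
  have hbddA : BddAbove A := ⟨c ^ 2, fun x hx => hub x hx⟩
  -- Cauchy-Schwarz lower bound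
  have hCS : ∀ ω : Fin K → ℝ, ω ∈ Δ0 → ∀ lam ∈ S,
      c ^ 2 ≤ (∑ k, σ k ^ 2 * u k ^ 2 / ω k) * ∑ k, ω k * (lam k - μ k) ^ 2 / σ k ^ 2 := by
    intro ω hω lam hlamS
    set a : Fin K → ℝ := fun k => Real.sqrt (ω k) * (lam k - μ k) / σ k with ha
    set b : Fin K → ℝ := fun k => σ k * u k / Real.sqrt (ω k) with hb
    have hab : ∀ k, a k * b k = (lam k - μ k) * u k := by
      intro k
      have h1 : Real.sqrt (ω k) ≠ 0 := (Real.sqrt_pos.mpr (hω.1 k)).ne'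
      have h2 : σ k ≠ 0 := (hσ k).ne'
      simp only [ha, hb]
      field_simp
    have ha2 : ∀ k, a k ^ 2 = ω k * (lam k - μ k) ^ 2 / σ k ^ 2 := by
      intro k
      simp only [ha]
      rw [div_pow, mul_pow, Real.sq_sqrt (hω.1 k).le]
    have hb2 : ∀ k, b k ^ 2 = σ k ^ 2 * u k ^ 2 / ω k := by
      intro k
      simp only [hb]
      rw [div_pow, mul_pow, Real.sq_sqrt (hω.1 k).le]
    have h1 : -c ≤ ∑ k, a k * b k := by
      rw [Finset.sum_congr rfl fun k _ => hab k]
      have hsplit : ∑ k, (lam k - μ k) * u k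
          = (∑ k, (lam k - η k) * u k) - c := by
        rw [hc, ← Finset.sum_sub_distrib]
        exact Finset.sum_congr rfl fun k _ => by ring
      rw [hsplit]
      have := hsub lam hlamS
      linarith
    have h2 := Finset.sum_mul_sq_le_sq_mul_sq Finset.univ a b
    have h3 : c ^ 2 ≤ (∑ k, a k * b k) ^ 2 := by
      have h4 : (0:ℝ) ≤ -c := by linarith
      nlinarith
    calc c ^ 2 ≤ (∑ k, a k * b k) ^ 2 := h3
      _ ≤ (∑ k, a k ^ 2) * ∑ k, b k ^ 2 := h2
      _ = (∑ k, σ k ^ 2 * u k ^ 2 / ω k) * ∑ k, ω k * (lam k - μ k) ^ 2 / σ k ^ 2 := by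
          rw [Finset.sum_congr rfl fun k _ => ha2 k, Finset.sum_congr rfl fun k _ => hb2 k]
          ring
  -- the near-optimal weights
  have hωt : ∀ t : ℝ, 0 < t →
      (fun k => (σ k * |u k| + t) / (1 + K * t)) ∈ Δ0 := by
    intro t ht
    have hden : (0:ℝ) < 1 + K * t := by positivity
    constructor
    · intro k
      have hk : (0:ℝ) ≤ σ k * |u k| := mul_nonneg (hσ k).le (abs_nonneg _)
      have hnum : (0:ℝ) < σ k * |u k| + t := by linarith
      exact div_pos hnum hden
    · rw [← Finset.sum_div, Finset.sum_add_distrib, hsum1, Finset.sum_const,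
        Finset.card_univ, Fintype.card_fin, nsmul_eq_mul, div_self hden.ne']
  have hSbound : ∀ t : ℝ, 0 < t →
      ∑ k, σ k ^ 2 * u k ^ 2 / ((σ k * |u k| + t) / (1 + K * t)) ≤ 1 + K * t := by
    intro t ht
    have hden : (0:ℝ) < 1 + K * t := by positivity
    have hterm : ∀ k, σ k ^ 2 * u k ^ 2 / ((σ k * |u k| + t) / (1 + K * t))
        ≤ (1 + K * t) * (σ k * |u k|) := by
      intro k
      have hx : (0:ℝ) ≤ σ k * |u k| := mul_nonneg (hσ k).le (abs_nonneg _)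
      have hpos : (0:ℝ) < σ k * |u k| + t := by linarith
      rw [div_div_eq_mul_div, div_le_iff₀ hpos]
      have habs : σ k ^ 2 * u k ^ 2 = (σ k * |u k|) ^ 2 := by
        rw [mul_pow, sq_abs]
      nlinarith [mul_nonneg (mul_nonneg hden.le hx) ht.le]
    calc ∑ k, σ k ^ 2 * u k ^ 2 / ((σ k * |u k| + t) / (1 + K * t))
        ≤ ∑ k, (1 + K * t) * (σ k * |u k|) := Finset.sum_le_sum fun k _ => hterm k
      _ = 1 + K * t := by rw [← Finset.mul_sum, hsum1, mul_one]
  -- lower bound on the inner inf for the near-optimal weights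
  have hlow : ∀ t : ℝ, 0 < t →
      c ^ 2 / (1 + K * t) ≤
        sInf ((fun lam => ∑ k, (fun k => (σ k * |u k| + t) / (1 + K * t)) k *
          (lam k - μ k) ^ 2 / σ k ^ 2) '' S) := by
    intro t ht
    have hden : (0:ℝ) < 1 + K * t := by positivity
    refine le_csInf ⟨_, Set.mem_image_of_mem _ hmem⟩ ?_
    rintro y ⟨lam, hlamS, rfl⟩
    set ω : Fin K → ℝ := fun k => (σ k * |u k| + t) / (1 + K * t) with hω
    have hΔ : ω ∈ Δ0 := hωt t ht
    have h1 := hCS ω hΔ lam hlamS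
    have h2 := hSbound t ht
    have hobj : (0:ℝ) ≤ ∑ k, ω k * (lam k - μ k) ^ 2 / σ k ^ 2 :=
      Finset.sum_nonneg fun k _ => by
        have hk := (hΔ.1 k).le
        positivity
    rw [div_le_iff₀ hden]
    calc c ^ 2 ≤ (∑ k, σ k ^ 2 * u k ^ 2 / ω k) * ∑ k, ω k * (lam k - μ k) ^ 2 / σ k ^ 2 := h1
      _ ≤ (1 + K * t) * ∑ k, ω k * (lam k - μ k) ^ 2 / σ k ^ 2 :=
          mul_le_mul_of_nonneg_right h2 hobj
      _ = (∑ k, ω k * (lam k - μ k) ^ 2 / σ k ^ 2) * (1 + K * t) := mul_comm _ _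
  have hAne : A.Nonempty := ⟨_, Set.mem_image_of_mem _ (hωt 1 one_pos)⟩
  refine le_antisymm (csSup_le hAne hub) ?_
  refine le_of_forall_sub_le ?_
  intro ε hε
  set t : ℝ := ε / (K * c ^ 2 + 1) with htdef
  have htpos : 0 < t := by
    have hpos : (0:ℝ) < K * c ^ 2 + 1 := by positivity
    exact div_pos hε hpos
  have hden : (0:ℝ) < 1 + K * t := by positivity
  have hstep : c ^ 2 - ε ≤ c ^ 2 / (1 + K * t) := by
    rw [le_div_iff₀ hden]
    have heq : t * (K * c ^ 2 + 1) = ε := by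
      rw [htdef]
      field_simp
    nlinarith [heq, htpos.le, hε.le, sq_nonneg c,
      mul_nonneg (mul_nonneg hε.le htpos.le) (Nat.cast_nonneg K : (0:ℝ) ≤ (K:ℝ))]
  have hsup : c ^ 2 / (1 + K * t) ≤ sSup A := by
    refine le_trans (hlow t htpos) (le_csSup hbddA ?_)
    exact Set.mem_image_of_mem _ (hωt t htpos)
  linarith

/-- near the center of a ball in which the boundary is a hyperplane through
`η` with normal `u`, the ball-constrained static-proportions difficulty equals the
half-space one: both sup-infs equal `((μ-η)·u)²`. -/
theorem stmt_11 (K : ℕ) (hK : 1 ≤ K) (σ u η : Fin K → ℝ) (hσ : ∀ k, 0 < σ k)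
    (hu : ∑ k, |u k| * σ k = 1) (r : ℝ) (hr : 0 < r) (μ : Fin K → ℝ)
    (hμr : Real.sqrt (∑ k, (μ k - η k) ^ 2 / σ k ^ 2) ≤ r / (Real.sqrt K + 1))
    (hμu : ∑ k, (μ k - η k) * u k < 0) :
    let Δ0 : Set (Fin K → ℝ) := {ω | (∀ k, 0 < ω k) ∧ ∑ k, ω k = 1}
    let F : (Fin K → ℝ) → Set (Fin K → ℝ) → ℝ := fun ω S =>
      sInf ((fun lam => ∑ k, ω k * (lam k - μ k) ^ 2 / σ k ^ 2) '' S)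
    sSup ((fun ω => F ω {lam | Real.sqrt (∑ k, (lam k - η k) ^ 2 / σ k ^ 2) ≤ r ∧
          0 ≤ ∑ k, (lam k - η k) * u k}) '' Δ0)
        = (∑ k, (μ k - η k) * u k) ^ 2 ∧
    sSup ((fun ω => F ω {lam | 0 ≤ ∑ k, (lam k - η k) * u k}) '' Δ0)
        = (∑ k, (μ k - η k) * u k) ^ 2 := by
  intro Δ0 F
  set c : ℝ := ∑ k, (μ k - η k) * u k with hc
  set s : Fin K → ℝ := fun k => if u k < 0 then -1 else 1 with hs
  set lamhat : Fin K → ℝ := fun k => μ k + (-c) * σ k * s k with hlamhat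
  have hs2 : ∀ k, s k ^ 2 = 1 := by
    intro k
    simp only [hs]
    split <;> norm_num
  have hsu : ∀ k, s k * u k = |u k| := by
    intro k
    simp only [hs]
    split_ifs with h
    · rw [abs_of_neg h]; ring
    · rw [abs_of_nonneg (not_lt.mp h)]; ring
  have hsum1 : ∑ k, σ k * |u k| = 1 := by
    rw [← hu]; exact Finset.sum_congr rfl fun k _ => mul_comm _ _
  have hlam : ∀ k, (lamhat k - μ k) ^ 2 = (∑ j, (μ j - η j) * u j) ^ 2 * σ k ^ 2 := by
    intro k
    have h1 : lamhat k - μ k = (-c) * σ k * s k := by simp [hlamhat]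
    rw [h1, show ((-c) * σ k * s k) ^ 2 = (-c) ^ 2 * σ k ^ 2 * s k ^ 2 from by ring, hs2 k]
    ring
  -- lamhat lies on the boundary hyperplane
  have hhalf : ∑ k, (lamhat k - η k) * u k = 0 := by
    have hterm : ∀ k ∈ Finset.univ, (lamhat k - η k) * u k
        = (μ k - η k) * u k + (-c) * (σ k * (s k * u k)) := by
      intro k _
      simp only [hlamhat]
      ring
    have hsu' : ∀ k ∈ Finset.univ, σ k * (s k * u k) = σ k * |u k| :=
      fun k _ => by rw [hsu k]
    rw [Finset.sum_congr rfl hterm, Finset.sum_add_distrib, ← Finset.mul_sum,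
      Finset.sum_congr rfl hsu', hsum1, ← hc]
    ring
  -- norm bound: -c ≤ r / (√K + 1)
  have hKs : (0:ℝ) ≤ Real.sqrt K := Real.sqrt_nonneg _
  have hM : -c ≤ r / (Real.sqrt K + 1) := by
    have h1 : -c ≤ ∑ k, |μ k - η k| * |u k| := by
      calc -c ≤ |c| := neg_le_abs c
        _ = |∑ k, (μ k - η k) * u k| := by rw [hc]
        _ ≤ ∑ k, |(μ k - η k) * u k| := Finset.abs_sum_le_sum_abs _ _
        _ = ∑ k, |μ k - η k| * |u k| :=
            Finset.sum_congr rfl fun k _ => abs_mul _ _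
    have h2 : ∀ k, |μ k - η k| * |u k|
        ≤ Real.sqrt (∑ j, (μ j - η j) ^ 2 / σ j ^ 2) * (σ k * |u k|) := by
      intro k
      have hσk := hσ k
      have hk : |μ k - η k| / σ k ≤ Real.sqrt (∑ j, (μ j - η j) ^ 2 / σ j ^ 2) := by
        have heq : |μ k - η k| / σ k = Real.sqrt ((μ k - η k) ^ 2 / σ k ^ 2) := by
          rw [show (μ k - η k) ^ 2 / σ k ^ 2 = (|μ k - η k| / σ k) ^ 2 by
            rw [div_pow, sq_abs], Real.sqrt_sq (by positivity)]
        rw [heq]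
        refine Real.sqrt_le_sqrt ?_
        exact Finset.single_le_sum (f := fun j => (μ j - η j) ^ 2 / σ j ^ 2)
          (fun j _ => by positivity) (Finset.mem_univ k)
      have h3 : (0:ℝ) ≤ σ k * |u k| := by positivity
      calc |μ k - η k| * |u k| = (|μ k - η k| / σ k) * (σ k * |u k|) := by
            field_simp
        _ ≤ Real.sqrt (∑ j, (μ j - η j) ^ 2 / σ j ^ 2) * (σ k * |u k|) :=
            mul_le_mul_of_nonneg_right hk h3
    calc -c ≤ ∑ k, |μ k - η k| * |u k| := h1
      _ ≤ ∑ k, Real.sqrt (∑ j, (μ j - η j) ^ 2 / σ j ^ 2) * (σ k * |u k|) :=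
          Finset.sum_le_sum fun k _ => h2 k
      _ = Real.sqrt (∑ j, (μ j - η j) ^ 2 / σ j ^ 2) := by
          rw [← Finset.mul_sum, hsum1, mul_one]
      _ ≤ r / (Real.sqrt K + 1) := hμr
  -- lamhat is in the ball
  have hball : Real.sqrt (∑ k, (lamhat k - η k) ^ 2 / σ k ^ 2) ≤ r := by
    have hterm : ∀ k ∈ Finset.univ, (lamhat k - η k) ^ 2 / σ k ^ 2
        = ((μ k - η k) / σ k + (-c) * s k) ^ 2 := by
      intro k _
      have hσk : σ k ≠ 0 := (hσ k).ne'
      simp only [hlamhat]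
      field_simp
      ring
    rw [Finset.sum_congr rfl hterm]
    have hmink := stmt11_minkowski (fun k => (μ k - η k) / σ k) (fun k => (-c) * s k)
    have hA : Real.sqrt (∑ k, ((μ k - η k) / σ k) ^ 2) ≤ r / (Real.sqrt K + 1) := by
      have heq : ∑ k, ((μ k - η k) / σ k) ^ 2 = ∑ k, (μ k - η k) ^ 2 / σ k ^ 2 :=
        Finset.sum_congr rfl fun k _ => by rw [div_pow]
      rw [heq]; exact hμr
    have hB : Real.sqrt (∑ k, ((-c) * s k) ^ 2)
        ≤ Real.sqrt K * (r / (Real.sqrt K + 1)) := by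
      have hb' : ∀ k ∈ Finset.univ, ((-c) * s k) ^ 2 = c ^ 2 := by
        intro k _
        rw [show ((-c) * s k) ^ 2 = c ^ 2 * s k ^ 2 from by ring, hs2 k, mul_one]
      have hBsum : ∑ k, ((-c) * s k) ^ 2 = (K : ℝ) * c ^ 2 := by
        rw [Finset.sum_congr rfl hb', Finset.sum_const, Finset.card_univ,
          Fintype.card_fin, nsmul_eq_mul]
      rw [hBsum, Real.sqrt_mul (Nat.cast_nonneg K), Real.sqrt_sq_eq_abs,
        abs_of_neg hμu]
      exact mul_le_mul_of_nonneg_left hM hKs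
    have hne : Real.sqrt K + 1 ≠ 0 := by positivity
    have hfin : (1 + Real.sqrt K) * (r / (Real.sqrt K + 1)) = r := by
      field_simp
      ring
    calc Real.sqrt (∑ k, ((μ k - η k) / σ k + (-c) * s k) ^ 2)
        ≤ Real.sqrt (∑ k, ((μ k - η k) / σ k) ^ 2)
          + Real.sqrt (∑ k, ((-c) * s k) ^ 2) := hmink
      _ ≤ r / (Real.sqrt K + 1) + Real.sqrt K * (r / (Real.sqrt K + 1)) :=
          add_le_add hA hB
      _ = (1 + Real.sqrt K) * (r / (Real.sqrt K + 1)) := by ring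
      _ = r := hfin
  constructor
  · exact stmt11_key σ u η hσ hu μ hμu
      {lam | Real.sqrt (∑ k, (lam k - η k) ^ 2 / σ k ^ 2) ≤ r ∧
        0 ≤ ∑ k, (lam k - η k) * u k}
      (fun lam h => h.2) lamhat ⟨hball, hhalf.ge⟩ hlam
  · exact stmt11_key σ u η hσ hu μ hμu
      {lam | 0 ≤ ∑ k, (lam k - η k) * u k}
      (fun lam h => h) lamhat hhalf.ge hlam
end

section
/- Let K ≥ 1, σ ∈ (0,∞)^K, u ∈ ℝ^K with Σ_{k=1}^K |u_k| σ_k = 1, η ∈ ℝ^K, and let ρ > 0, ε > 0, δ > 0. Set r'' = ρ·δ·ε / ( 2K·(1+δ)·(1+ε) ). Then for every μ ∈ ℝ^K with ‖μ − η‖_{σ^{-2}} ≤ r'' and (μ − η)·u > 0, sup over ω ∈ Δ_K of inf over { λ ∈ ℝ^K : ‖λ − η‖_{σ^{-2}} ≤ ρ and (λ − η)·u < 0 } of [ Σ_{k=1}^K ω_k σ_k^{-2} (μ_k − λ_k)² ] / ((λ − η)·u)² ≤ (1+ε)·(1+δ)². -/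
/-- near the boundary point `η`, the sup-inf of the difficulty ratio over
the ball-constrained alternative is at most `(1+ε)(1+δ)²` whenever
`‖μ-η‖_{σ⁻²} ≤ ρδε/(2K(1+δ)(1+ε))` and `(μ-η)·u > 0`. -/
theorem stmt_12 (K : ℕ) (hK : 1 ≤ K) (σ u η : Fin K → ℝ) (hσ : ∀ k, 0 < σ k)
    (hu : ∑ k, |u k| * σ k = 1) (ρ ε δ : ℝ) (hρ : 0 < ρ) (hε : 0 < ε) (hδ : 0 < δ)
    (μ : Fin K → ℝ)
    (hμr : Real.sqrt (∑ k, (μ k - η k) ^ 2 / σ k ^ 2)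
      ≤ ρ * δ * ε / (2 * K * (1 + δ) * (1 + ε)))
    (hμu : 0 < ∑ k, (μ k - η k) * u k) :
    let Δ : Set (Fin K → ℝ) := {ω | (∀ k, 0 ≤ ω k) ∧ ∑ k, ω k = 1}
    sSup ((fun ω => sInf ((fun lam =>
        (∑ k, ω k * (μ k - lam k) ^ 2 / σ k ^ 2) / (∑ k, (lam k - η k) * u k) ^ 2) ''
        {lam : Fin K → ℝ | Real.sqrt (∑ k, (lam k - η k) ^ 2 / σ k ^ 2) ≤ ρ ∧
          ∑ k, (lam k - η k) * u k < 0})) '' Δ)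
      ≤ (1 + ε) * (1 + δ) ^ 2 := by
  intro Δ
  have hKpos : (0:ℝ) < K := by exact_mod_cast Nat.lt_of_lt_of_le Nat.zero_lt_one hK
  have hK1 : (1:ℝ) ≤ K := by exact_mod_cast hK
  set r : ℝ := ρ * δ * ε / (2 * K * (1 + δ) * (1 + ε)) with hr
  have hrpos : 0 < r := by apply div_pos (by positivity) (by positivity)
  set s : ℝ := ρ / (2 * K) with hs
  have hspos : 0 < s := by positivity
  have hrds : r ≤ δ * s := by
    rw [hr, hs, div_le_iff₀ (by positivity : (0:ℝ) < 2*K*(1+δ)*(1+ε))]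
    have h2 : δ * (ρ / (2*K)) * (2*K*(1+δ)*(1+ε)) = δ*ρ*((1+δ)*(1+ε)) := by
      field_simp
    rw [h2]
    nlinarith [mul_pos hδ hρ, mul_pos hδ hε]
  -- the chosen alternative
  set c : Fin K → ℝ := fun k => if 0 ≤ u k then σ k else -σ k with hc
  set lam0 : Fin K → ℝ := fun k => η k - s * c k with hlam0
  have hcu : ∀ k, c k * u k = |u k| * σ k := by
    intro k
    by_cases h : 0 ≤ u k
    · simp [hc, h, abs_of_nonneg h]; ring
    · simp [hc, h, abs_of_neg (lt_of_not_ge h)]; ring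
  have hc2 : ∀ k, (c k) ^ 2 = σ k ^ 2 := by
    intro k; by_cases h : 0 ≤ u k <;> simp [hc, h]
  have hcabs : ∀ k, |c k| = σ k := by
    intro k
    by_cases h : 0 ≤ u k
    · simp [hc, h, abs_of_nonneg (hσ k).le]
    · simp [hc, h, abs_of_nonneg (hσ k).le]
  have hsum1 : ∑ k, (lam0 k - η k) * u k = -s := by
    have : ∀ k, (lam0 k - η k) * u k = -s * (|u k| * σ k) := by
      intro k; simp only [hlam0]; rw [← hcu k]; ring
    rw [Finset.sum_congr rfl (fun k _ => this k), ← Finset.mul_sum, hu, mul_one]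
  have hball : Real.sqrt (∑ k, (lam0 k - η k) ^ 2 / σ k ^ 2) ≤ ρ := by
    have hsum2 : ∑ k, (lam0 k - η k) ^ 2 / σ k ^ 2 = s ^ 2 * K := by
      have : ∀ k ∈ Finset.univ, (lam0 k - η k) ^ 2 / σ k ^ 2 = s ^ 2 := by
        intro k _
        have hσk := (hσ k).ne'
        simp only [hlam0]
        rw [show η k - s * c k - η k = -(s * c k) by ring]
        rw [neg_pow, mul_pow, hc2 k]
        field_simp
      rw [Finset.sum_congr rfl this, Finset.sum_const, Finset.card_univ, Fintype.card_fin]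
      ring
    rw [hsum2]
    have h1 : s ^ 2 * K ≤ ρ ^ 2 := by
      rw [hs, div_pow, div_mul_eq_mul_div, div_le_iff₀ (by positivity)]
      nlinarith [sq_nonneg ρ, mul_le_mul_of_nonneg_left hK1 hKpos.le,
        mul_nonneg (sq_nonneg ρ) hKpos.le]
    calc Real.sqrt (s ^ 2 * K) ≤ Real.sqrt (ρ ^ 2) := Real.sqrt_le_sqrt h1
      _ = ρ := by rw [Real.sqrt_sq hρ.le]
  -- each coordinate deviation bound
  have hcoord : ∀ k, |μ k - η k| / σ k ≤ r := by
    intro k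
    have h1 : (μ k - η k) ^ 2 / σ k ^ 2 ≤ ∑ j, (μ j - η j) ^ 2 / σ j ^ 2 := by
      apply Finset.single_le_sum (f := fun j => (μ j - η j) ^ 2 / σ j ^ 2)
        (fun j _ => by positivity) (Finset.mem_univ k)
    have h2 : Real.sqrt ((μ k - η k) ^ 2 / σ k ^ 2) ≤ r :=
      le_trans (Real.sqrt_le_sqrt h1) hμr
    have h3 : (μ k - η k) ^ 2 / σ k ^ 2 = (|μ k - η k| / σ k) ^ 2 := by
      rw [div_pow, sq_abs]
    rwa [h3, Real.sqrt_sq (div_nonneg (abs_nonneg _) (hσ k).le)] at h2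
  -- per-coordinate deviation bound for lam0
  have hdev : ∀ k, (μ k - lam0 k) ^ 2 / σ k ^ 2 ≤ (r + s) ^ 2 := by
    intro k
    have habs : |μ k - lam0 k| ≤ |μ k - η k| + s * σ k := by
      have : μ k - lam0 k = (μ k - η k) + s * c k := by simp only [hlam0]; ring
      rw [this]
      calc |(μ k - η k) + s * c k| ≤ |μ k - η k| + |s * c k| := abs_add_le _ _
        _ = |μ k - η k| + s * σ k := by rw [abs_mul, abs_of_pos hspos, hcabs k]
    have h1 : |μ k - lam0 k| / σ k ≤ r + s := by
      rw [div_le_iff₀ (hσ k)]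
      have h2 : |μ k - η k| ≤ r * σ k := by
        rw [← div_le_iff₀ (hσ k)] ; exact hcoord k
      nlinarith [hσ k]
    have h3 : (μ k - lam0 k) ^ 2 / σ k ^ 2 = (|μ k - lam0 k| / σ k) ^ 2 := by
      rw [div_pow, sq_abs]
    rw [h3]
    exact pow_le_pow_left₀ (div_nonneg (abs_nonneg _) (hσ k).le) h1 2
  -- now the sup-inf bound
  apply Real.sSup_le _ (by positivity)
  rintro x ⟨ω, ⟨hωnn, hωsum⟩, rfl⟩
  set S : Set (Fin K → ℝ) := {lam : Fin K → ℝ |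
      Real.sqrt (∑ k, (lam k - η k) ^ 2 / σ k ^ 2) ≤ ρ ∧
      ∑ k, (lam k - η k) * u k < 0} with hS
  have hmem : lam0 ∈ S := ⟨hball, by rw [hsum1]; linarith⟩
  have hbdd : BddBelow ((fun lam =>
      (∑ k, ω k * (μ k - lam k) ^ 2 / σ k ^ 2) / (∑ k, (lam k - η k) * u k) ^ 2) '' S) := by
    refine ⟨0, ?_⟩
    rintro y ⟨lam, _, rfl⟩
    apply div_nonneg _ (sq_nonneg _)
    apply Finset.sum_nonneg
    intro k _
    apply div_nonneg (mul_nonneg (hωnn k) (sq_nonneg _)) (sq_nonneg _)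
  have hle := csInf_le hbdd (Set.mem_image_of_mem _ hmem)
  refine le_trans hle ?_
  -- evaluate at lam0
  rw [hsum1, neg_sq]
  have hnum : ∑ k, ω k * (μ k - lam0 k) ^ 2 / σ k ^ 2 ≤ (r + s) ^ 2 := by
    calc ∑ k, ω k * (μ k - lam0 k) ^ 2 / σ k ^ 2
        ≤ ∑ k, ω k * (r + s) ^ 2 := by
          apply Finset.sum_le_sum
          intro k _
          rw [mul_div_assoc]
          exact mul_le_mul_of_nonneg_left (hdev k) (hωnn k)
      _ = (r + s) ^ 2 := by rw [← Finset.sum_mul, hωsum, one_mul]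
  have hrs : r + s ≤ (1 + δ) * s := by nlinarith
  have hnum2 : ∑ k, ω k * (μ k - lam0 k) ^ 2 / σ k ^ 2 ≤ (1 + δ) ^ 2 * s ^ 2 := by
    calc ∑ k, ω k * (μ k - lam0 k) ^ 2 / σ k ^ 2 ≤ (r + s) ^ 2 := hnum
      _ ≤ ((1 + δ) * s) ^ 2 := by
          apply pow_le_pow_left₀ (by positivity) hrs
      _ = (1 + δ) ^ 2 * s ^ 2 := by ring
  calc (∑ k, ω k * (μ k - lam0 k) ^ 2 / σ k ^ 2) / s ^ 2
      ≤ (1 + δ) ^ 2 := by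
        rw [div_le_iff₀ (by positivity)]
        linarith [hnum2]
    _ ≤ (1 + ε) * (1 + δ) ^ 2 := by nlinarith [sq_nonneg (1 + δ)]
end

section
/- Let K ≥ 1, let ℓ < θ < m be real numbers, let j ∈ {1,…,K}, and let λ ∈ ℝ^K be defined by λ_j = ℓ and λ_k = m for all k ≠ j. Then sup over ω ∈ Δ_K of inf over { ν ∈ ℝ^K : ν_k > θ for all k } of Σ_{k=1}^K ω_k (ν_k − λ_k)²/2 equals (θ − ℓ)²/2. -/
/-- Positivity task with unit-variance Gaussian arms: for `λ` with one arm
at `ℓ < θ` and the others at `m > θ`,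
`sup_{ω ∈ Δ_K} inf { ∑ ω_k (ν_k - λ_k)²/2 : ∀ k, ν_k > θ } = (θ - ℓ)²/2`. -/
theorem stmt_13 (K : ℕ) (hK : 1 ≤ K) (ℓ θ m : ℝ) (h1 : ℓ < θ) (h2 : θ < m) (j : Fin K) :
    let lam : Fin K → ℝ := fun k => if k = j then ℓ else m
    let Δ : Set (Fin K → ℝ) := {ω | (∀ k, 0 ≤ ω k) ∧ ∑ k, ω k = 1}
    sSup ((fun ω => sInf ((fun ν => ∑ k, ω k * (ν k - lam k) ^ 2 / 2) ''
        {ν : Fin K → ℝ | ∀ k, θ < ν k})) '' Δ) = (θ - ℓ) ^ 2 / 2 := by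
  intro lam Δ
  have ha : (0:ℝ) < θ - ℓ := by linarith
  set a : ℝ := θ - ℓ with ha_def
  set c : ℝ := a ^ 2 / 2 with hc_def
  have hc : 0 < c := by positivity
  clear_value a c
  -- the key computation of the inner infimum
  have key : ∀ ω, ω ∈ Δ →
      sInf ((fun ν => ∑ k, ω k * (ν k - lam k) ^ 2 / 2) ''
        {ν : Fin K → ℝ | ∀ k, θ < ν k}) = ω j * c := by
    intro ω hω
    obtain ⟨hnn, hsum⟩ := hω
    have hωj1 : ω j ≤ 1 := by
      have := Finset.single_le_sum (f := ω) (fun k _ => hnn k) (Finset.mem_univ j)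
      linarith [hsum ▸ this]
    have hbdd : BddBelow ((fun ν => ∑ k, ω k * (ν k - lam k) ^ 2 / 2) ''
        {ν : Fin K → ℝ | ∀ k, θ < ν k}) := by
      refine ⟨0, ?_⟩
      rintro x ⟨ν, hν, rfl⟩
      refine Finset.sum_nonneg fun k _ => ?_
      have := hnn k
      positivity
    apply le_antisymm
    · -- upper bound on sInf
      apply le_of_forall_pos_le_add
      intro δ hδ
      set ε : ℝ := min 1 (δ / (a + 1)) with hε_def
      have hε0 : 0 < ε := lt_min one_pos (by positivity)
      have hε1 : ε ≤ 1 := min_le_left _ _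
      have hε2 : ε ≤ δ / (a + 1) := min_le_right _ _
      set ν0 : Fin K → ℝ := fun k => if k = j then θ + ε else m with hν0
      have hmem : ν0 ∈ {ν : Fin K → ℝ | ∀ k, θ < ν k} := by
        intro k
        simp only [hν0]
        split <;> [linarith; exact h2]
      have hval : (∑ k, ω k * (ν0 k - lam k) ^ 2 / 2) = ω j * (θ + ε - ℓ) ^ 2 / 2 := by
        rw [Finset.sum_eq_single_of_mem j (Finset.mem_univ j)]
        · simp [hν0, lam]
        · intro k _ hk
          simp [hν0, lam, hk]
      have hle := csInf_le hbdd ⟨ν0, hmem, hval⟩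
      have hεδ : ε * (a + 1) ≤ δ := by
        have h := mul_le_mul_of_nonneg_right hε2 (by linarith : (0:ℝ) ≤ a + 1)
        rwa [div_mul_cancel₀ _ (by linarith : a + 1 ≠ 0)] at h
      have hexp : ω j * (θ + ε - ℓ) ^ 2 / 2 ≤ ω j * c + δ := by
        have h0 : ω j * (θ + ε - ℓ) ^ 2 / 2 = ω j * c + ω j * (ε * (2 * a + ε)) / 2 := by
          simp only [hc_def, ha_def]; ring
        rw [h0]
        have hX : ω j * (ε * (2 * a + ε)) / 2 ≤ δ := by
          nlinarith [mul_nonneg (sub_nonneg.2 hωj1)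
              (mul_nonneg hε0.le (by linarith : (0:ℝ) ≤ 2 * a + ε)),
            mul_nonneg hε0.le (sub_nonneg.2 hε1), hεδ]
        linarith
      linarith
    · -- lower bound on sInf
      have hne : ((fun ν => ∑ k, ω k * (ν k - lam k) ^ 2 / 2) ''
          {ν : Fin K → ℝ | ∀ k, θ < ν k}).Nonempty :=
        ⟨_, ⟨fun _ => m, fun k => h2, rfl⟩⟩
      apply le_csInf hne
      rintro x ⟨ν, hν, rfl⟩
      have h3 : a ≤ ν j - lam j := by
        have := hν j
        simp only [lam, if_pos rfl, ha_def]
        linarith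
      have h4 : a ^ 2 ≤ (ν j - lam j) ^ 2 := by nlinarith
      have hterm : ω j * c ≤ ω j * (ν j - lam j) ^ 2 / 2 := by
        have h5 := mul_le_mul_of_nonneg_left h4 (hnn j)
        simp only [hc_def]
        nlinarith [h5]
      have hsum' : ω j * (ν j - lam j) ^ 2 / 2 ≤ ∑ k, ω k * (ν k - lam k) ^ 2 / 2 :=
        Finset.single_le_sum (f := fun k => ω k * (ν k - lam k) ^ 2 / 2)
          (fun k _ => by have := hnn k; positivity) (Finset.mem_univ j)
      exact hterm.trans hsum'
  -- now the outer supremum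
  have himg : ((fun ω => sInf ((fun ν => ∑ k, ω k * (ν k - lam k) ^ 2 / 2) ''
      {ν : Fin K → ℝ | ∀ k, θ < ν k})) '' Δ) = (fun ω : Fin K → ℝ => ω j * c) '' Δ :=
    Set.image_congr key
  rw [himg]
  have hsingle : (fun k : Fin K => if k = j then (1:ℝ) else 0) ∈ Δ := by
    constructor
    · intro k
      by_cases h : k = j <;> simp [h]
    · simp
  apply le_antisymm
  · have hne2 : ((fun ω : Fin K → ℝ => ω j * c) '' Δ).Nonempty := ⟨_, _, hsingle, rfl⟩
    apply csSup_le hne2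
    rintro x ⟨ω, ⟨hnn, hsum⟩, rfl⟩
    have hωj1 : ω j ≤ 1 := by
      have := Finset.single_le_sum (f := ω) (fun k _ => hnn k) (Finset.mem_univ j)
      linarith [hsum ▸ this]
    show ω j * c ≤ c
    nlinarith [mul_nonneg (sub_nonneg.2 hωj1) hc.le]
  · have hub : BddAbove ((fun ω : Fin K → ℝ => ω j * c) '' Δ) := by
      refine ⟨c, ?_⟩
      rintro x ⟨ω, ⟨hnn, hsum⟩, rfl⟩
      have hωj1 : ω j ≤ 1 := by
        have := Finset.single_le_sum (f := ω) (fun k _ => hnn k) (Finset.mem_univ j)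
        linarith [hsum ▸ this]
      show ω j * c ≤ c
      nlinarith [mul_nonneg (sub_nonneg.2 hωj1) hc.le]
    have hmem2 : c ∈ (fun ω : Fin K → ℝ => ω j * c) '' Δ := ⟨_, hsingle, by simp⟩
    exact le_csSup hub hmem2
end

section
/- Let K ≥ 1, let 0 < ℓ < θ < m < 1, let j ∈ {1,…,K}, and let λ ∈ (0,1)^K be defined by λ_j = ℓ and λ_k = m for all k ≠ j. Then sup over ω ∈ Δ_K of inf over { ν ∈ ℝ^K : θ < ν_k < 1 for all k } of Σ_{k=1}^K ω_k · kl(ν_k, λ_k) equals kl(θ, ℓ). -/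
lemma kl_nonneg' (p q : ℝ) (hp0 : 0 < p) (hp1 : p < 1) (hq0 : 0 < q) (hq1 : q < 1) :
    0 ≤ p * Real.log (p / q) + (1 - p) * Real.log ((1 - p) / (1 - q)) := by
  have h1 : Real.log (q / p) ≤ q / p - 1 := Real.log_le_sub_one_of_pos (div_pos hq0 hp0)
  have h2 : Real.log ((1 - q) / (1 - p)) ≤ (1 - q) / (1 - p) - 1 :=
    Real.log_le_sub_one_of_pos (div_pos (by linarith) (by linarith))
  have e1 : Real.log (p / q) = Real.log p - Real.log q := Real.log_div hp0.ne' hq0.ne'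
  have e2 : Real.log ((1 - p) / (1 - q)) = Real.log (1 - p) - Real.log (1 - q) :=
    Real.log_div (by linarith) (by linarith)
  have e3 : Real.log (q / p) = Real.log q - Real.log p := Real.log_div hq0.ne' hp0.ne'
  have e4 : Real.log ((1 - q) / (1 - p)) = Real.log (1 - q) - Real.log (1 - p) :=
    Real.log_div (by linarith) (by linarith)
  have c1 : p * (q / p) = q := by field_simp
  have c2 : (1 - p) * ((1 - q) / (1 - p)) = 1 - q := by
    rw [mul_comm]; exact div_mul_cancel₀ _ (by linarith)
  rw [e1, e2]
  rw [e3] at h1; rw [e4] at h2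
  nlinarith [mul_le_mul_of_nonneg_left h1 hp0.le,
    mul_le_mul_of_nonneg_left h2 (by linarith : (0:ℝ) ≤ 1 - p)]

lemma kl_hasDerivAt (q : ℝ) (hq0 : 0 < q) (hq1 : q < 1) (t : ℝ) (ht0 : 0 < t) (ht1 : t < 1) :
    HasDerivAt (fun x => x * Real.log (x / q) + (1 - x) * Real.log ((1 - x) / (1 - q)))
      (Real.log (t / q) - Real.log ((1 - t) / (1 - q))) t := by
  have h1 : HasDerivAt (fun x : ℝ => x / q) (1 / q) t := (hasDerivAt_id t).div_const q
  have h2 : HasDerivAt (fun x : ℝ => Real.log (x / q)) ((1 / q) / (t / q)) t :=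
    h1.log (div_pos ht0 hq0).ne'
  have h3 : HasDerivAt (fun x : ℝ => x * Real.log (x / q))
      (1 * Real.log (t / q) + t * ((1 / q) / (t / q))) t := (hasDerivAt_id t).mul h2
  have h4 : HasDerivAt (fun x : ℝ => (1 - x) / (1 - q)) ((0 - 1) / (1 - q)) t :=
    ((hasDerivAt_const t (1:ℝ)).sub (hasDerivAt_id t)).div_const (1 - q)
  have h5 : HasDerivAt (fun x : ℝ => Real.log ((1 - x) / (1 - q)))
      (((0 - 1) / (1 - q)) / ((1 - t) / (1 - q))) t := h4.log (div_pos (by linarith) (by linarith)).ne'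
  have h6 : HasDerivAt (fun x : ℝ => (1 - x) * Real.log ((1 - x) / (1 - q)))
      ((0 - 1) * Real.log ((1 - t) / (1 - q)) + (1 - t) * (((0 - 1) / (1 - q)) / ((1 - t) / (1 - q)))) t :=
    ((hasDerivAt_const t (1:ℝ)).sub (hasDerivAt_id t)).mul h5
  have := h3.add h6
  refine this.congr_deriv ?_
  have hq' : (1:ℝ) - q ≠ 0 := by linarith
  have ht' : (1:ℝ) - t ≠ 0 := by linarith
  have hq0' : q ≠ 0 := hq0.ne'
  have ht0' : t ≠ 0 := ht0.ne'
  have e1 : t * ((1 / q) / (t / q)) = 1 := by field_simp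
  have e2 : (1 - t) * (((0 - 1) / (1 - q)) / ((1 - t) / (1 - q))) = -1 := by field_simp; norm_num
  rw [e1, e2]
  ring

lemma kl_glb (ℓ θ : ℝ) (h0 : 0 < ℓ) (h1 : ℓ < θ) (hθ1 : θ < 1) :
    IsGLB ((fun t => t * Real.log (t / ℓ) + (1 - t) * Real.log ((1 - t) / (1 - ℓ))) ''
        Set.Ioo θ 1)
      (θ * Real.log (θ / ℓ) + (1 - θ) * Real.log ((1 - θ) / (1 - ℓ))) := by
  set f : ℝ → ℝ := fun t => t * Real.log (t / ℓ) + (1 - t) * Real.log ((1 - t) / (1 - ℓ))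
    with hf
  have hℓ1 : ℓ < 1 := h1.trans hθ1
  have hθ0 : 0 < θ := h0.trans h1
  have hmono : ∀ t ∈ Set.Ioo θ 1, f θ ≤ f t := by
    intro t ht
    have hsm : StrictMonoOn f (Set.Icc θ t) := by
      apply strictMonoOn_of_deriv_pos (convex_Icc θ t)
      · intro x hx
        exact ((kl_hasDerivAt ℓ h0 hℓ1 x (by linarith [hx.1]) (by linarith [hx.2, ht.2])
          ).continuousAt).continuousWithinAt
      · intro x hx
        rw [interior_Icc] at hx
        have hx0 : 0 < x := by linarith [hx.1]
        have hx1 : x < 1 := by linarith [hx.2, ht.2]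
        rw [(kl_hasDerivAt ℓ h0 hℓ1 x hx0 hx1).deriv]
        have : (1 - x) / (1 - ℓ) < x / ℓ := by
          rw [div_lt_div_iff₀ (by linarith) h0]
          nlinarith [hx.1]
        have h2 := Real.log_lt_log (div_pos (by linarith) (by linarith)) this
        linarith
    exact (hsm (Set.left_mem_Icc.mpr (by linarith [ht.1])) (Set.right_mem_Icc.mpr
      (by linarith [ht.1])) ht.1).le
  constructor
  · rintro y ⟨t, ht, rfl⟩
    exact hmono t ht
  · intro b hb
    have hcont : ContinuousAt f θ := (kl_hasDerivAt ℓ h0 hℓ1 θ hθ0 hθ1).continuousAt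
    have htend : Filter.Tendsto f (nhdsWithin θ (Set.Ioi θ)) (nhds (f θ)) :=
      hcont.continuousWithinAt.tendsto
    refine ge_of_tendsto htend ?_
    filter_upwards [Ioo_mem_nhdsGT_of_mem (Set.left_mem_Ico.mpr hθ1)] with t ht
    exact hb ⟨t, ht, rfl⟩
/-- Positivity task with Bernoulli arms: for `λ` with one arm at `ℓ < θ`
and the others at `m ∈ (θ,1)`,
`sup_{ω ∈ Δ_K} inf { ∑ ω_k kl(ν_k, λ_k) : ∀ k, θ < ν_k < 1 } = kl(θ, ℓ)`. -/
theorem stmt_14 (K : ℕ) (hK : 1 ≤ K) (ℓ θ m : ℝ) (h0 : 0 < ℓ) (h1 : ℓ < θ) (h2 : θ < m)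
    (h3 : m < 1) (j : Fin K) :
    let kl : ℝ → ℝ → ℝ := fun p q =>
      p * Real.log (p / q) + (1 - p) * Real.log ((1 - p) / (1 - q))
    let lam : Fin K → ℝ := fun k => if k = j then ℓ else m
    let Δ : Set (Fin K → ℝ) := {ω | (∀ k, 0 ≤ ω k) ∧ ∑ k, ω k = 1}
    sSup ((fun ω => sInf ((fun ν => ∑ k, ω k * kl (ν k) (lam k)) ''
        {ν : Fin K → ℝ | ∀ k, θ < ν k ∧ ν k < 1})) '' Δ) = kl θ ℓ := by
  intro kl lam Δ
  have hθ0 : 0 < θ := h0.trans h1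
  have hθ1 : θ < 1 := h2.trans h3
  have hℓ1 : ℓ < 1 := h1.trans hθ1
  set f : ℝ → ℝ := fun t => t * Real.log (t / ℓ) + (1 - t) * Real.log ((1 - t) / (1 - ℓ))
    with hf
  have hglb : IsGLB (f '' Set.Ioo θ 1) (f θ) := kl_glb ℓ θ h0 h1 hθ1
  have hne : (f '' Set.Ioo θ 1).Nonempty :=
    ⟨f m, ⟨m, ⟨h2, h3⟩, rfl⟩⟩
  -- kl at equal arguments is zero
  have klmm : kl m m = 0 := by
    show m * Real.log (m / m) + (1 - m) * Real.log ((1 - m) / (1 - m)) = 0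
    rw [div_self (by linarith), div_self (by linarith), Real.log_one, mul_zero, mul_zero,
      add_zero]
  -- the special ν for a given t
  have nu_mem : ∀ t ∈ Set.Ioo θ 1,
      (fun k : Fin K => if k = j then t else m) ∈
        {ν : Fin K → ℝ | ∀ k, θ < ν k ∧ ν k < 1} := by
    intro t ht k
    by_cases hk : k = j <;> simp [hk, ht.1, ht.2, h2, h3]
  have nu_sum : ∀ (ω : Fin K → ℝ) (t : ℝ),
      ∑ k, ω k * kl ((if k = j then t else m)) (lam k) = ω j * kl t ℓ := by
    intro ω t
    rw [Finset.sum_eq_single j]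
    · simp [lam]
    · intro k _ hk
      simp [lam, hk, klmm]
    · simp
  -- every element of the sum set is nonnegative
  have sum_nonneg' : ∀ (ω : Fin K → ℝ), (∀ k, 0 ≤ ω k) →
      ∀ ν ∈ {ν : Fin K → ℝ | ∀ k, θ < ν k ∧ ν k < 1},
        0 ≤ ∑ k, ω k * kl (ν k) (lam k) := by
    intro ω hω ν hν
    apply Finset.sum_nonneg
    intro k _
    apply mul_nonneg (hω k)
    have h5 := (hν k).1
    have h6 := (hν k).2
    by_cases hk : k = j
    · simpa [lam, hk] using kl_nonneg' (ν k) ℓ (by linarith) h6 h0 hℓ1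
    · simpa [lam, hk] using kl_nonneg' (ν k) m (by linarith) h6 (by linarith) h3
  have hub : ∀ x ∈ ((fun ω => sInf ((fun ν => ∑ k, ω k * kl (ν k) (lam k)) ''
      {ν : Fin K → ℝ | ∀ k, θ < ν k ∧ ν k < 1})) '' Δ), x ≤ kl θ ℓ := by
    rintro x ⟨ω, hω, rfl⟩
    have hbdd : BddBelow ((fun ν => ∑ k, ω k * kl (ν k) (lam k)) ''
        {ν : Fin K → ℝ | ∀ k, θ < ν k ∧ ν k < 1}) := by
      refine ⟨0, ?_⟩
      rintro y ⟨ν, hν, rfl⟩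
      exact sum_nonneg' ω hω.1 ν hν
    have hωj1 : ω j ≤ 1 := by
      rw [← hω.2]
      exact Finset.single_le_sum (fun k _ => hω.1 k) (Finset.mem_univ j)
    have key : ∀ t ∈ Set.Ioo θ 1,
        sInf ((fun ν => ∑ k, ω k * kl (ν k) (lam k)) ''
          {ν : Fin K → ℝ | ∀ k, θ < ν k ∧ ν k < 1}) ≤ f t := by
      intro t ht
      have hmem := nu_mem t ht
      have : sInf ((fun ν => ∑ k, ω k * kl (ν k) (lam k)) ''
          {ν : Fin K → ℝ | ∀ k, θ < ν k ∧ ν k < 1}) ≤ ω j * kl t ℓ := by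
        rw [← nu_sum ω t]
        exact csInf_le hbdd ⟨_, hmem, rfl⟩
      have hft : 0 ≤ kl t ℓ := kl_nonneg' t ℓ (by linarith [ht.1]) ht.2 h0 hℓ1
      have : ω j * kl t ℓ ≤ kl t ℓ := by nlinarith [hω.1 j]
      linarith [csInf_le hbdd ⟨_, hmem, (nu_sum ω t)⟩]
    exact hglb.2 (by rintro y ⟨t, ht, rfl⟩; exact key t ht)
  have hmem : kl θ ℓ ∈ ((fun ω => sInf ((fun ν => ∑ k, ω k * kl (ν k) (lam k)) ''
      {ν : Fin K → ℝ | ∀ k, θ < ν k ∧ ν k < 1})) '' Δ) := by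
    refine ⟨fun k => if k = j then 1 else 0, ⟨fun k => by positivity, by simp⟩, ?_⟩
    have himg : ((fun ν => ∑ k, (if k = j then (1:ℝ) else 0) * kl (ν k) (lam k)) ''
        {ν : Fin K → ℝ | ∀ k, θ < ν k ∧ ν k < 1}) = f '' Set.Ioo θ 1 := by
      ext x
      constructor
      · rintro ⟨ν, hν, rfl⟩
        refine ⟨ν j, ⟨(hν j).1, (hν j).2⟩, ?_⟩
        show f (ν j) = ∑ k, (if k = j then (1:ℝ) else 0) * kl (ν k) (lam k)
        rw [Finset.sum_eq_single j]
        · simp [lam, f, kl]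
        · intro k _ hk; simp [hk]
        · simp
      · rintro ⟨t, ht, rfl⟩
        exact ⟨fun k => if k = j then t else m, nu_mem t ht, by
          simpa using nu_sum (fun k => if k = j then (1:ℝ) else 0) t⟩
    show sInf _ = kl θ ℓ
    rw [himg, hglb.csInf_eq hne]
  exact IsGreatest.csSup_eq ⟨hmem, hub⟩
end

section
/- Let K ≥ 2, Δ > 0, and define μ ∈ ℝ^K by μ_1 = 0 and μ_k = −kΔ for 2 ≤ k ≤ K. For j ∈ {2,…,K}, let λ^{(j)} ∈ ℝ^K equal μ except that λ^{(j)}_j = jΔ. Then λ^{(j)} has unique largest entry at coordinate j and H_Δ(λ^{(j)}) · (λ^{(j)}_j − μ_j)²/2 ≤ 8j, i.e. H_Δ(λ^{(j)}) · 2j²Δ² ≤ 8j. -/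
/-- `HDelta v istar = 2/(min_{k ≠ istar} (v istar - v k))² + ∑_{k ≠ istar} 2/(v istar - v k)²`,
the sum of inverse squared gaps complexity for best arm identification, when `istar` is the
(unique) best arm of `v`. -/
noncomputable def HDelta {K : ℕ} (v : Fin K → ℝ) (istar : Fin K) : ℝ :=
  2 / (sInf {d : ℝ | ∃ k, k ≠ istar ∧ d = v istar - v k}) ^ 2
    + ∑ k ∈ Finset.univ.filter (fun k => k ≠ istar), 2 / (v istar - v k) ^ 2

lemma tele_bound (j K : ℕ) (A : Finset (Fin K)) (hA : ∀ k ∈ A, 1 ≤ (k : ℕ)) :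
    ∑ k ∈ A, (1 : ℝ) / ((j : ℝ) + (k : ℕ) + 2) ^ 2 ≤ 1 / ((j : ℝ) + 2) := by
  set f : ℕ → ℝ := fun m => 1 / ((j : ℝ) + m + 1) with hf
  have hfpos : ∀ m : ℕ, 0 < (j : ℝ) + m + 1 := by
    intro m; positivity
  have hterm : ∀ k : Fin K, (1 : ℝ) / ((j : ℝ) + (k : ℕ) + 2) ^ 2 ≤ f k - f ((k : ℕ) + 1) := by
    intro k
    have h1 : (0:ℝ) < (j : ℝ) + (k:ℕ) + 1 := hfpos _
    have h2 : (0:ℝ) < (j : ℝ) + (k:ℕ) + 2 := by linarith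
    have key : f k - f ((k:ℕ) + 1) = 1 / (((j:ℝ) + (k:ℕ) + 1) * ((j:ℝ) + (k:ℕ) + 2)) := by
      have e2 : ((j:ℝ) + (((k:ℕ) + 1 : ℕ) : ℝ) + 1) = (j:ℝ) + (k:ℕ) + 2 := by push_cast; ring
      simp only [hf, e2]
      rw [div_sub_div _ _ h1.ne' h2.ne', one_mul, mul_one]
      have e3 : (j:ℝ) + (k:ℕ) + 2 - ((j:ℝ) + (k:ℕ) + 1) = 1 := by ring
      rw [e3]
    rw [key]
    rw [div_le_div_iff₀ (by positivity) (by positivity)]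
    nlinarith
  calc ∑ k ∈ A, (1 : ℝ) / ((j : ℝ) + (k : ℕ) + 2) ^ 2
      ≤ ∑ k ∈ A, (f k - f ((k : ℕ) + 1)) := Finset.sum_le_sum (fun k _ => hterm k)
    _ = ∑ m ∈ A.image (Fin.val), (f m - f (m + 1)) := by
        rw [Finset.sum_image (by intro a _ b _ h; exact Fin.ext h)]
    _ ≤ ∑ m ∈ Finset.Ico 1 K, (f m - f (m + 1)) := by
        apply Finset.sum_le_sum_of_subset_of_nonneg
        · intro m hm
          simp only [Finset.mem_image] at hm
          obtain ⟨k, hk, rfl⟩ := hm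
          exact Finset.mem_Ico.mpr ⟨hA k hk, k.isLt⟩
        · intro m _ _
          have h1 := hfpos m
          have h2 := hfpos (m+1)
          simp only [hf, sub_nonneg]
          apply div_le_div_of_nonneg_left (by norm_num) h1
          push_cast; linarith
    _ ≤ 1 / ((j : ℝ) + 2) := by
        rw [Finset.sum_Ico_eq_sum_range]
        have heq : ∀ k : ℕ, f (1 + k) - f (1 + k + 1) = (fun i => f (1 + i)) k - (fun i => f (1 + i)) (k + 1) := by
          intro k; simp [add_assoc]
        rw [Finset.sum_congr rfl (fun k _ => heq k), Finset.sum_range_sub' (fun i => f (1 + i))]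
        have h1 : f (1 + 0) = 1 / ((j:ℝ) + 2) := by
          simp only [hf]; norm_num; ring_nf
        have hK : 0 ≤ f (1 + (K - 1)) := by
          simp only [hf]; positivity
        simp only [h1] at *
        linarith

/-- for `μ = (0, -2Δ, -3Δ, …, -KΔ)` (arm numbers `1..K`, zero-based index
`i` carrying the value of arm `i+1`) and `λ⁽ʲ⁾` equal to `μ` except `λ⁽ʲ⁾_j = jΔ` for an
arm number `j ≥ 2`, the vector `λ⁽ʲ⁾` has its unique largest entry at `j` and
`H_Δ(λ⁽ʲ⁾) · (λ⁽ʲ⁾_j - μ_j)²/2 = H_Δ(λ⁽ʲ⁾) · 2j²Δ² ≤ 8j`. -/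
theorem stmt_15 (K : ℕ) (hK : 2 ≤ K) (Δ : ℝ) (hΔ : 0 < Δ) (j : Fin K) (hj : 1 ≤ (j : ℕ)) :
    let μ : Fin K → ℝ := fun k => if (k : ℕ) = 0 then 0 else -(((k : ℕ) + 1 : ℝ)) * Δ
    let lam : Fin K → ℝ := Function.update μ j (((j : ℕ) + 1 : ℝ) * Δ)
    (∀ k, k ≠ j → lam k < lam j) ∧
    HDelta lam j * ((lam j - μ j) ^ 2 / 2) ≤ 8 * ((j : ℕ) + 1 : ℝ) ∧
    HDelta lam j * (2 * ((j : ℕ) + 1 : ℝ) ^ 2 * Δ ^ 2) ≤ 8 * ((j : ℕ) + 1 : ℝ) := by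

  intro μ lam
  have hjv : (j : ℕ) ≠ 0 := by omega
  set k0 : Fin K := ⟨0, by omega⟩ with hk0
  have hk0v : (k0 : ℕ) = 0 := rfl
  have hk0j : k0 ≠ j := by
    intro h; rw [h] at hk0v; exact hjv hk0v
  have hlamj : lam j = ((j : ℕ) + 1 : ℝ) * Δ := Function.update_self j _ μ
  have hlamne : ∀ k, k ≠ j → lam k = μ k := fun k hk => Function.update_of_ne hk _ μ
  have hμ0 : μ k0 = 0 := by simp [μ, hk0v]
  have hμk : ∀ k : Fin K, (k : ℕ) ≠ 0 → μ k = -((k : ℕ) + 1 : ℝ) * Δ := by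
    intro k hk; simp [μ, hk]
  have hDpos : 0 < ((j : ℕ) + 1 : ℝ) * Δ := by positivity
  have hgap0 : lam j - lam k0 = ((j : ℕ) + 1 : ℝ) * Δ := by
    rw [hlamj, hlamne k0 hk0j, hμ0]; ring
  have hgap : ∀ k, k ≠ j → (k : ℕ) ≠ 0 →
      lam j - lam k = (((j : ℕ) : ℝ) + ((k : ℕ) : ℝ) + 2) * Δ := by
    intro k hk h0
    rw [hlamj, hlamne k hk, hμk k h0]; ring
  -- part 1
  have part1 : ∀ k, k ≠ j → lam k < lam j := by
    intro k hk
    rw [hlamne k hk, hlamj]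
    by_cases h0 : (k : ℕ) = 0
    · have : μ k = 0 := by simp [μ, h0]
      rw [this]; exact hDpos
    · rw [hμk k h0]
      have h1 : (0:ℝ) < ((k:ℕ) + 1 : ℝ) := by positivity
      nlinarith
  -- sInf
  have hInf : sInf {d : ℝ | ∃ k, k ≠ j ∧ d = lam j - lam k} = ((j : ℕ) + 1 : ℝ) * Δ := by
    apply IsLeast.csInf_eq
    constructor
    · exact ⟨k0, hk0j, hgap0.symm⟩
    · rintro d ⟨k, hk, rfl⟩
      by_cases h0 : (k : ℕ) = 0
      · have hke : k = k0 := Fin.ext (by rw [h0, hk0v])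
        rw [hke, hgap0]
      · rw [hgap k hk h0]
        have hkc : (0:ℝ) ≤ ((k:ℕ) : ℝ) := Nat.cast_nonneg _
        nlinarith
  -- sum splitting
  set A : Finset (Fin K) := Finset.univ.filter (fun k => k ≠ j ∧ (k : ℕ) ≠ 0) with hA
  have hk0A : k0 ∉ A := by simp [hA, hk0v]
  have hsplit : Finset.univ.filter (fun k => k ≠ j) = insert k0 A := by
    ext k
    simp only [Finset.mem_filter, Finset.mem_univ, true_and, Finset.mem_insert, hA]
    constructor
    · intro hk
      by_cases h0 : (k : ℕ) = 0
      · exact Or.inl (Fin.ext (by rw [h0, hk0v]))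
      · exact Or.inr ⟨hk, h0⟩
    · rintro (rfl | ⟨hk, _⟩)
      · exact hk0j
      · exact hk
  set S' : ℝ := ∑ k ∈ A, 2 / (lam j - lam k) ^ 2 with hS'def
  have hsum : ∑ k ∈ Finset.univ.filter (fun k => k ≠ j), 2 / (lam j - lam k) ^ 2
      = 2 / (((j : ℕ) + 1 : ℝ) * Δ) ^ 2 + S' := by
    rw [hsplit, Finset.sum_insert hk0A, hgap0]
  have hH : HDelta lam j = 2 / (((j : ℕ) + 1 : ℝ) * Δ) ^ 2
      + (2 / (((j : ℕ) + 1 : ℝ) * Δ) ^ 2 + S') := by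
    rw [HDelta, hInf, hsum]
  -- bound S'
  have hS'0 : 0 ≤ S' := by
    apply Finset.sum_nonneg
    intro k _; positivity
  have hS'le : S' ≤ 2 / Δ ^ 2 * (1 / (((j:ℕ) : ℝ) + 2)) := by
    have hcongr : ∀ k ∈ A, 2 / (lam j - lam k) ^ 2
        = 2 / Δ ^ 2 * ((1:ℝ) / ((((j:ℕ)) : ℝ) + ((k:ℕ) : ℝ) + 2) ^ 2) := by
      intro k hk
      simp only [hA, Finset.mem_filter] at hk
      rw [hgap k hk.2.1 hk.2.2]
      have h1 : ((((j:ℕ)) : ℝ) + ((k:ℕ) : ℝ) + 2) ≠ 0 := by positivity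
      field_simp
    rw [hS'def, Finset.sum_congr rfl hcongr, ← Finset.mul_sum]
    have hAv : ∀ k ∈ A, 1 ≤ (k : ℕ) := by
      intro k hk
      simp only [hA, Finset.mem_filter] at hk
      omega
    have := tele_bound (j : ℕ) K A hAv
    have h2 : (0:ℝ) ≤ 2 / Δ ^ 2 := by positivity
    exact mul_le_mul_of_nonneg_left this h2
  -- third conjunct
  set Jr := ((j : ℕ) : ℝ) with hJr
  have hJr1 : (1:ℝ) ≤ Jr := by
    rw [hJr]; exact_mod_cast hj
  have part3 : HDelta lam j * (2 * (Jr + 1) ^ 2 * Δ ^ 2) ≤ 8 * (Jr + 1) := by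
    rw [hH]
    have hne : ((Jr + 1) * Δ) ≠ 0 := by positivity
    have e1 : 2 / ((Jr + 1) * Δ) ^ 2 * (2 * (Jr + 1) ^ 2 * Δ ^ 2) = 4 := by
      field_simp
      ring
    have hB : (0:ℝ) ≤ 2 * (Jr + 1) ^ 2 * Δ ^ 2 := by positivity
    have e2 : 2 / Δ ^ 2 * (1 / (Jr + 2)) * (2 * (Jr + 1) ^ 2 * Δ ^ 2)
        = 4 * (Jr + 1) ^ 2 / (Jr + 2) := by
      field_simp
      ring
    have hSB : S' * (2 * (Jr + 1) ^ 2 * Δ ^ 2) ≤ 4 * (Jr + 1) ^ 2 / (Jr + 2) := by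
      rw [← e2]
      exact mul_le_mul_of_nonneg_right hS'le hB
    have e3 : 4 * (Jr + 1) ^ 2 / (Jr + 2) ≤ 4 * (Jr + 1) := by
      rw [div_le_iff₀ (by linarith)]
      nlinarith
    have expand : (2 / ((Jr + 1) * Δ) ^ 2 + (2 / ((Jr + 1) * Δ) ^ 2 + S'))
        * (2 * (Jr + 1) ^ 2 * Δ ^ 2)
        = 2 / ((Jr + 1) * Δ) ^ 2 * (2 * (Jr + 1) ^ 2 * Δ ^ 2)
          + 2 / ((Jr + 1) * Δ) ^ 2 * (2 * (Jr + 1) ^ 2 * Δ ^ 2)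
          + S' * (2 * (Jr + 1) ^ 2 * Δ ^ 2) := by ring
    rw [expand, e1]
    linarith
  refine ⟨part1, ?_, part3⟩
  have hsq : (lam j - μ j) ^ 2 / 2 = 2 * (Jr + 1) ^ 2 * Δ ^ 2 := by
    rw [hlamj, hμk j hjv]; ring
  rw [hsq]
  exact part3
end

section
/- Let K ≥ 2, Δ > 0, and define μ ∈ ℝ^K by μ_1 = 0 and μ_k = −kΔ for 2 ≤ k ≤ K; for j ∈ {2,…,K}, let λ^{(j)} ∈ ℝ^K equal μ except that λ^{(j)}_j = jΔ. Then Σ_{j=2}^K 1 / ( H_Δ(λ^{(j)}) · 2j²Δ² ) ≥ (3/40)·log K. -/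
/- Auxiliary definitions mirroring the `let`s in the theorem statement. -/
noncomputable def muV (K : ℕ) (Δ : ℝ) : Fin K → ℝ :=
  fun k => if (k : ℕ) = 0 then 0 else -(((k : ℕ) + 1 : ℝ)) * Δ

noncomputable def lamV (K : ℕ) (Δ : ℝ) (j : Fin K) : Fin K → ℝ :=
  Function.update (muV K Δ) j (((j : ℕ) + 1 : ℝ) * Δ)

lemma lamV_self (K : ℕ) (Δ : ℝ) (j : Fin K) : lamV K Δ j j = (((j:ℕ)+1:ℝ)) * Δ := by
  simp [lamV]

lemma lamV_ne (K : ℕ) (Δ : ℝ) (j k : Fin K) (h : k ≠ j) : lamV K Δ j k = muV K Δ k := by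
  simp [lamV, Function.update_of_ne h]

lemma muV_nonpos (K : ℕ) (Δ : ℝ) (hΔ : 0 < Δ) (k : Fin K) : muV K Δ k ≤ 0 := by
  unfold muV
  split
  · exact le_refl 0
  · have : (0:ℝ) ≤ (↑(k:ℕ) + 1) * Δ := by positivity
    nlinarith

lemma sinf_eq (K : ℕ) (hK : 2 ≤ K) (Δ : ℝ) (hΔ : 0 < Δ) (j : Fin K) (hj : 1 ≤ (j:ℕ)) :
    sInf {d : ℝ | ∃ k, k ≠ j ∧ d = lamV K Δ j j - lamV K Δ j k} = ((j:ℕ)+1:ℝ) * Δ := by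
  apply IsLeast.csInf_eq
  constructor
  · refine ⟨⟨0, by omega⟩, ?_, ?_⟩
    · intro h
      have := congrArg Fin.val h
      simp at this
      omega
    · rw [lamV_self, lamV_ne]
      · simp [muV]
      · intro h
        have := congrArg Fin.val h
        simp at this
        omega
  · rintro d ⟨k, hk, rfl⟩
    rw [lamV_self, lamV_ne _ _ _ _ hk]
    have := muV_nonpos K Δ hΔ k
    linarith

lemma hdelta_le (K : ℕ) (hK : 2 ≤ K) (Δ : ℝ) (hΔ : 0 < Δ) (j : Fin K) (hj : 1 ≤ (j:ℕ)) :
    HDelta (lamV K Δ j) j ≤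
      4 / ((((j:ℕ):ℝ)+1)^2 * Δ^2) + 2 / ((((j:ℕ):ℝ)+2) * Δ^2) := by
  set J : ℝ := ((j:ℕ):ℝ) with hJ
  have hJ1 : (1:ℝ) ≤ J := by rw [hJ]; exact_mod_cast hj
  unfold HDelta
  rw [sinf_eq K hK Δ hΔ j hj]
  have hfirst : 2 / ((J+1) * Δ)^2 = 2 / ((J+1)^2 * Δ^2) := by
    rw [mul_pow]
  set H : ℕ → ℝ := fun i => if i = 0 then 2/((J+1)^2*Δ^2)
      else (2/Δ^2) * (1/(J+i+1) - 1/(J+i+2)) with hH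
  have hHnonneg : ∀ i, 0 ≤ H i := by
    intro i
    rw [hH]
    dsimp only
    split
    · positivity
    · have h1 : (0:ℝ) < J + i + 1 := by positivity
      have h2 : (0:ℝ) < J + i + 2 := by positivity
      have : 1/(J+(i:ℝ)+2) ≤ 1/(J+i+1) := by
        apply one_div_le_one_div_of_le h1; linarith
      have : (0:ℝ) ≤ 1/(J+(i:ℝ)+1) - 1/(J+i+2) := by linarith
      positivity
  have hterm : ∀ k ∈ Finset.univ.filter (fun k : Fin K => k ≠ j),
      2 / (lamV K Δ j j - lamV K Δ j k)^2 ≤ H (k:ℕ) := by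
    intro k hk
    rw [Finset.mem_filter] at hk
    rw [lamV_self, lamV_ne _ _ _ _ hk.2]
    rw [hH]; dsimp only
    by_cases h0 : (k:ℕ) = 0
    · rw [if_pos h0]
      unfold muV
      rw [if_pos h0]
      rw [sub_zero, mul_pow]
    · rw [if_neg h0]
      unfold muV
      rw [if_neg h0]
      set c : ℝ := ((k:ℕ):ℝ) with hc
      have hc1 : (1:ℝ) ≤ c := by
        have h1k : 1 ≤ (k:ℕ) := Nat.one_le_iff_ne_zero.mpr h0
        rw [hc]; exact_mod_cast h1k
      have hgap : (J+1)*Δ - -(c+1)*Δ = (J+c+2)*Δ := by ring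
      rw [hgap]
      have h1 : (0:ℝ) < J + c + 1 := by linarith
      have h2 : (0:ℝ) < J + c + 2 := by linarith
      have hrhs : (2/Δ^2) * (1/(J+c+1) - 1/(J+c+2)) = 2/((J+c+1)*(J+c+2)*Δ^2) := by
        field_simp
        ring
      rw [hrhs, mul_pow]
      apply div_le_div_of_nonneg_left (by norm_num) (by positivity)
      have : (J+c+1)*(J+c+2) ≤ (J+c+2)^2 := by nlinarith
      nlinarith [sq_nonneg Δ, hΔ]
  have hsum1 : ∑ k ∈ Finset.univ.filter (fun k : Fin K => k ≠ j),
      2 / (lamV K Δ j j - lamV K Δ j k)^2 ≤ ∑ k : Fin K, H (k:ℕ) := by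
    calc ∑ k ∈ Finset.univ.filter (fun k : Fin K => k ≠ j),
        2 / (lamV K Δ j j - lamV K Δ j k)^2
        ≤ ∑ k ∈ Finset.univ.filter (fun k : Fin K => k ≠ j), H (k:ℕ) :=
          Finset.sum_le_sum hterm
      _ ≤ ∑ k : Fin K, H (k:ℕ) := by
          apply Finset.sum_le_sum_of_subset_of_nonneg (Finset.filter_subset _ _)
          intro k _ _
          exact hHnonneg _
  have hsum2 : ∑ k : Fin K, H (k:ℕ) ≤ 2/((J+1)^2*Δ^2) + 2/((J+2)*Δ^2) := by
    rw [Fin.sum_univ_eq_sum_range H K]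
    obtain ⟨m, rfl⟩ : ∃ m, K = m + 1 := ⟨K-1, by omega⟩
    rw [Finset.sum_range_succ']
    have hH0 : H 0 = 2/((J+1)^2*Δ^2) := by rw [hH]; simp
    have hHs : ∀ i ∈ Finset.range m, H (i+1) =
        (2/Δ^2) * (1/(J+i+2) - 1/(J+i+3)) := by
      intro i _
      rw [hH]
      dsimp only
      rw [if_neg (by omega)]
      push_cast
      ring_nf
    rw [hH0, Finset.sum_congr rfl hHs]
    have htel : ∑ i ∈ Finset.range m, (2/Δ^2) * (1/(J+i+2) - 1/(J+i+3)) =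
        (2/Δ^2) * (1/(J+2) - 1/(J+m+2)) := by
      rw [← Finset.mul_sum]
      congr 1
      have := Finset.sum_range_sub' (fun i : ℕ => 1/(J+i+2)) m
      push_cast at this
      rw [show (1:ℝ)/(J+0+2) = 1/(J+2) by norm_num] at this
      rw [← this]
      apply Finset.sum_congr rfl
      intro i _
      ring_nf
    rw [htel]
    have hm2 : (0:ℝ) < J + m + 2 := by positivity
    have : (2/Δ^2) * (1/(J+2) - 1/(J+m+2)) ≤ (2/Δ^2) * (1/(J+2)) := by
      apply mul_le_mul_of_nonneg_left _ (by positivity)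
      have : 0 < 1/(J+m+2) := by positivity
      linarith
    have heq : (2/Δ^2) * (1/(J+2)) = 2/((J+2)*Δ^2) := by
      field_simp
    linarith [this, heq ▸ this]
  rw [hfirst]
  have : 2/((J+1)^2*Δ^2) + (2/((J+1)^2*Δ^2) + 2/((J+2)*Δ^2)) =
      4/((J+1)^2*Δ^2) + 2/((J+2)*Δ^2) := by ring
  linarith [hsum1, hsum2]

lemma term_lb (K : ℕ) (hK : 2 ≤ K) (Δ : ℝ) (hΔ : 0 < Δ) (j : Fin K) (hj : 1 ≤ (j:ℕ)) :
    1/(4*(((j:ℕ):ℝ)+3)) ≤ 1 / (HDelta (lamV K Δ j) j * (2 * (((j:ℕ):ℝ)+1)^2 * Δ^2)) := by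
  set J : ℝ := ((j:ℕ):ℝ) with hJ
  have hJ1 : (1:ℝ) ≤ J := by rw [hJ]; exact_mod_cast hj
  have hc : (0:ℝ) < 2*(J+1)^2*Δ^2 := by positivity
  have hpos : 0 < HDelta (lamV K Δ j) j := by
    unfold HDelta
    rw [sinf_eq K hK Δ hΔ j hj]
    have hJΔ : (0:ℝ) < (J+1)*Δ := by positivity
    have h1 : (0:ℝ) < 2/((J+1)*Δ)^2 := by positivity
    have h2 : (0:ℝ) ≤ ∑ k ∈ Finset.univ.filter (fun k : Fin K => k ≠ j),
        2/(lamV K Δ j j - lamV K Δ j k)^2 := by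
      apply Finset.sum_nonneg
      intro k _
      positivity
    linarith
  have hub : HDelta (lamV K Δ j) j * (2*(J+1)^2*Δ^2) ≤ 4*(J+3) := by
    have hb := hdelta_le K hK Δ hΔ j hj
    have h2pos : (0:ℝ) < J + 2 := by linarith
    have e : (4/((J+1)^2*Δ^2) + 2/((J+2)*Δ^2)) * (2*(J+1)^2*Δ^2)
        = 8 + 4*(J+1)^2/(J+2) := by
      field_simp
      ring
    have hfrac : 4*(J+1)^2/(J+2) ≤ 4*(J+1) := by
      rw [div_le_iff₀ h2pos]
      nlinarith
    calc HDelta (lamV K Δ j) j * (2*(J+1)^2*Δ^2)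
        ≤ (4/((J+1)^2*Δ^2) + 2/((J+2)*Δ^2)) * (2*(J+1)^2*Δ^2) :=
          mul_le_mul_of_nonneg_right hb hc.le
      _ = 8 + 4*(J+1)^2/(J+2) := e
      _ ≤ 4*(J+3) := by linarith
  exact one_div_le_one_div_of_le (mul_pos hpos hc) hub

lemma log_gap (x : ℝ) (hx : 0 < x) : Real.log (x+1) - Real.log x ≤ 1/x := by
  have hx1 : 0 < x + 1 := by linarith
  have h := Real.log_le_sub_one_of_pos (show 0 < (x+1)/x by positivity)
  rw [Real.log_div hx1.ne' hx.ne'] at h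
  have h2 : (x+1)/x - 1 = 1/x := by field_simp; ring
  linarith

lemma nat_pow_ineq (K : ℕ) (hK : 2 ≤ K) : 1048576 * K^3 ≤ (K+3)^10 := by
  rcases le_or_gt 8 K with h | h
  · have h7 : 1048576 ≤ K^7 := le_trans (by norm_num) (Nat.pow_le_pow_left h 7)
    calc 1048576 * K^3 ≤ K^7 * K^3 := Nat.mul_le_mul_right _ h7
      _ = K^10 := by ring
      _ ≤ (K+3)^10 := Nat.pow_le_pow_left (by omega) 10
  · interval_cases K <;> norm_num

lemma log_lb (K : ℕ) (hK : 2 ≤ K) : (3/10:ℝ) * Real.log K ≤ Real.log ((K:ℝ)+3) - Real.log 4 := by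
  have hKpos : (0:ℝ) < K := by exact_mod_cast Nat.lt_of_lt_of_le two_pos hK
  have hcast : (1048576:ℝ) * (K:ℝ)^3 ≤ ((K:ℝ)+3)^10 := by
    have := nat_pow_ineq K hK
    exact_mod_cast this
  have hlog := Real.log_le_log (by positivity) hcast
  rw [Real.log_mul (by norm_num) (by positivity), Real.log_pow, Real.log_pow] at hlog
  have h4 : Real.log 1048576 = 10 * Real.log 4 := by
    rw [show (1048576:ℝ) = 4^10 by norm_num, Real.log_pow]
    push_cast; ring
  rw [h4] at hlog
  push_cast at hlog
  linarith

lemma harmonic_lb (K : ℕ) (hK : 2 ≤ K) :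
    (3/40:ℝ) * Real.log K ≤ ∑ i ∈ Finset.range (K-1), 1/(4*((i:ℝ)+4)) := by
  have hterm : ∀ i ∈ Finset.range (K-1),
      (1/4:ℝ) * (Real.log ((i:ℝ)+5) - Real.log ((i:ℝ)+4)) ≤ 1/(4*((i:ℝ)+4)) := by
    intro i _
    have h := log_gap ((i:ℝ)+4) (by positivity)
    have h45 : ((i:ℝ)+4) + 1 = (i:ℝ)+5 := by ring
    rw [h45] at h
    have hpos : (0:ℝ) < (i:ℝ)+4 := by positivity
    rw [show (1:ℝ)/(4*((i:ℝ)+4)) = (1/4)*(1/((i:ℝ)+4)) by field_simp]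
    linarith
  have htel : ∑ i ∈ Finset.range (K-1),
      (1/4:ℝ) * (Real.log ((i:ℝ)+5) - Real.log ((i:ℝ)+4)) =
      (1/4:ℝ) * (Real.log ((K:ℝ)+3) - Real.log 4) := by
    rw [← Finset.mul_sum]
    congr 1
    have htele := Finset.sum_range_sub (fun i : ℕ => Real.log ((i:ℝ)+4)) (K-1)
    have hcongr : ∑ i ∈ Finset.range (K-1),
        (Real.log ((i:ℝ)+5) - Real.log ((i:ℝ)+4)) =
        ∑ i ∈ Finset.range (K-1),
        (Real.log (((i+1:ℕ):ℝ)+4) - Real.log ((i:ℝ)+4)) := by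
      apply Finset.sum_congr rfl
      intro i _
      push_cast
      ring_nf
    rw [hcongr, htele]
    have hK1 : (((K-1:ℕ)):ℝ) = (K:ℝ) - 1 := by
      have h1 : 1 ≤ K := by omega
      push_cast [Nat.cast_sub h1]
      ring
    rw [hK1]
    norm_num
    ring_nf
  calc (3/40:ℝ) * Real.log K = (1/4:ℝ) * ((3/10) * Real.log K) := by ring
    _ ≤ (1/4:ℝ) * (Real.log ((K:ℝ)+3) - Real.log 4) := by
        have := log_lb K hK
        linarith
    _ = ∑ i ∈ Finset.range (K-1),
        (1/4:ℝ) * (Real.log ((i:ℝ)+5) - Real.log ((i:ℝ)+4)) := htel.symm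
    _ ≤ ∑ i ∈ Finset.range (K-1), 1/(4*((i:ℝ)+4)) := Finset.sum_le_sum hterm

/-- with `μ = (0, -2Δ, …, -KΔ)` (zero-based index `i` carrying arm `i+1`)
and `λ⁽ʲ⁾` equal to `μ` except `λ⁽ʲ⁾_j = jΔ`, the corner lower bound sum satisfies
`∑_{j=2}^K 1/(H_Δ(λ⁽ʲ⁾) · 2j²Δ²) ≥ (3/40) log K`. -/
theorem stmt_16 (K : ℕ) (hK : 2 ≤ K) (Δ : ℝ) (hΔ : 0 < Δ) :
    let μ : Fin K → ℝ := fun k => if (k : ℕ) = 0 then 0 else -(((k : ℕ) + 1 : ℝ)) * Δ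
    let lam : Fin K → Fin K → ℝ := fun j => Function.update μ j (((j : ℕ) + 1 : ℝ) * Δ)
    (3 / 40 : ℝ) * Real.log K ≤
      ∑ j ∈ Finset.univ.filter (fun j : Fin K => 1 ≤ (j : ℕ)),
        1 / (HDelta (lam j) j * (2 * ((j : ℕ) + 1 : ℝ) ^ 2 * Δ ^ 2)) := by
  intro μ lam
  have hlam : ∀ j : Fin K, lam j = lamV K Δ j := fun j => rfl
  have hstep : ∀ j ∈ Finset.univ.filter (fun j : Fin K => 1 ≤ (j:ℕ)),
      1/(4*(((j:ℕ):ℝ)+3)) ≤ 1 / (HDelta (lam j) j * (2 * (((j:ℕ):ℝ)+1)^2 * Δ^2)) := by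
    intro j hjm
    rw [Finset.mem_filter] at hjm
    rw [hlam j]
    exact term_lb K hK Δ hΔ j hjm.2
  have hre : ∑ j ∈ Finset.univ.filter (fun j : Fin K => 1 ≤ (j:ℕ)),
      1/(4*(((j:ℕ):ℝ)+3)) = ∑ i ∈ Finset.range (K-1), 1/(4*((i:ℝ)+4)) := by
    rw [Finset.sum_filter]
    rw [Fin.sum_univ_eq_sum_range (fun i : ℕ => if 1 ≤ i then 1/(4*((i:ℝ)+3)) else 0) K]
    obtain ⟨m, rfl⟩ : ∃ m, K = m + 1 := ⟨K-1, by omega⟩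
    rw [Finset.sum_range_succ']
    simp only [Nat.add_sub_cancel]
    rw [if_neg (by omega), add_zero]
    apply Finset.sum_congr rfl
    intro i _
    rw [if_pos (by omega)]
    push_cast
    ring_nf
  calc (3/40:ℝ) * Real.log K
      ≤ ∑ i ∈ Finset.range (K-1), 1/(4*((i:ℝ)+4)) := harmonic_lb K hK
    _ = ∑ j ∈ Finset.univ.filter (fun j : Fin K => 1 ≤ (j:ℕ)),
        1/(4*(((j:ℕ):ℝ)+3)) := hre.symm
    _ ≤ ∑ j ∈ Finset.univ.filter (fun j : Fin K => 1 ≤ (j:ℕ)),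
        1 / (HDelta (lam j) j * (2 * (((j:ℕ):ℝ)+1)^2 * Δ^2)) := Finset.sum_le_sum hstep
end

section
/- For a, b ∈ (0,1) with a ≠ b, set x*(a,b) = log((1−b)/(1−a)) / log( a(1−b)/((1−a)b) ). Then lim_{x → 0+} kl( x*(x, 1/2), 1/2 ) = log 2. -/
open Real Filter Set Topology

/-- `lim_{x → 0⁺} kl(x*(x, 1/2), 1/2) = log 2`, where
`x*(a,b) = log((1-b)/(1-a)) / log(a(1-b)/((1-a)b))` and `kl` is the Bernoulli KL. -/
theorem stmt_17 :
    let kl : ℝ → ℝ → ℝ := fun p q =>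
      p * Real.log (p / q) + (1 - p) * Real.log ((1 - p) / (1 - q))
    let xstar : ℝ → ℝ → ℝ := fun a b =>
      Real.log ((1 - b) / (1 - a)) / Real.log (a * (1 - b) / ((1 - a) * b))
    Filter.Tendsto (fun x => kl (xstar x (1 / 2)) (1 / 2))
      (nhdsWithin 0 (Set.Ioi 0)) (nhds (Real.log 2)) := by
  intro kl xstar
  -- f is continuous
  have hcont : Continuous (fun p : ℝ => kl p (1/2)) := by
    simp only [kl]
    have h1 : (fun p : ℝ => p * Real.log (p / (1/2))) =
        fun p : ℝ => (1/2) * ((p * 2) * Real.log (p * 2)) := by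
      funext p; rw [div_div_eq_mul_div, div_one]; ring
    have h2 : (fun p : ℝ => (1 - p) * Real.log ((1 - p) / (1 - 1/2))) =
        fun p : ℝ => (1/2) * (((1 - p) * 2) * Real.log ((1 - p) * 2)) := by
      funext p
      have : (1 - p) / (1 - 1/2) = (1 - p) * 2 := by ring
      rw [this]; ring
    rw [show (fun p : ℝ => p * Real.log (p / (1/2)) +
        (1 - p) * Real.log ((1 - p) / (1 - 1/2))) =
        (fun p : ℝ => (1/2) * ((p * 2) * Real.log (p * 2)) +
        (1/2) * (((1 - p) * 2) * Real.log ((1 - p) * 2))) by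
      funext p
      rw [show p * Real.log (p / (1/2)) = (1/2) * ((p * 2) * Real.log (p * 2)) by
        rw [div_div_eq_mul_div, div_one]; ring,
        show (1 - p) * Real.log ((1 - p) / (1 - 1/2)) =
          (1/2) * (((1 - p) * 2) * Real.log ((1 - p) * 2)) by
        rw [show (1 - p) / (1 - 1/2) = (1 - p) * 2 by ring]; ring]]
    fun_prop
  have hval : kl 0 (1/2) = Real.log 2 := by
    simp only [kl]
    rw [show ((1:ℝ) - 0) / (1 - 1/2) = 2 by norm_num]
    simp
  -- xstar tends to 0
  have hxs : Tendsto (fun x => xstar x (1/2)) (𝓝[>] (0:ℝ)) (𝓝 0) := by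
    simp only [xstar]
    have hnum : Tendsto (fun x : ℝ => Real.log ((1 - 1/2) / (1 - x))) (𝓝[>] (0:ℝ))
        (𝓝 (Real.log ((1 - 1/2) / (1 - 0)))) := by
      apply Tendsto.mono_left _ nhdsWithin_le_nhds
      have : ContinuousAt (fun x : ℝ => Real.log ((1 - 1/2) / (1 - x))) 0 := by
        apply ContinuousAt.log
        · fun_prop (disch := norm_num)
        · norm_num
      exact this.tendsto
    have hden : Tendsto (fun x : ℝ => Real.log (x * (1 - 1/2) / ((1 - x) * (1/2))))
        (𝓝[>] (0:ℝ)) atBot := by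
      apply Real.tendsto_log_nhdsGT_zero.comp
      rw [tendsto_nhdsWithin_iff]
      constructor
      · apply Tendsto.mono_left _ nhdsWithin_le_nhds
        have : ContinuousAt (fun x : ℝ => x * (1 - 1/2) / ((1 - x) * (1/2))) 0 := by
          fun_prop (disch := norm_num)
        simpa using this.tendsto
      · filter_upwards [self_mem_nhdsWithin, Ioo_mem_nhdsGT_of_mem (by norm_num : (0:ℝ) ∈ Ico 0 1)] with x hx hx1
        have hx' : (0:ℝ) < x := hx
        have h1 : (0:ℝ) < 1 - x := by simp at hx1; linarith [hx1.2]
        have : (0:ℝ) < x * (1 - 1/2) / ((1 - x) * (1/2)) := by positivity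
        exact this
    have : Tendsto (fun x : ℝ => -(Real.log ((1 - 1/2) / (1 - x)) /
        (-(Real.log (x * (1 - 1/2) / ((1 - x) * (1/2))))))) (𝓝[>] (0:ℝ)) (𝓝 (-0)) := by
      apply Tendsto.neg
      exact Tendsto.div_atTop hnum (tendsto_neg_atBot_atTop.comp hden)
    simp only [neg_zero] at this
    convert this using 2 with x
    rw [div_neg, neg_neg]
  have := (hcont.tendsto 0).comp hxs
  rw [hval] at this
  exact this
end

section
/- For a, b ∈ (0,1) with a ≠ b, set x*(a,b) = log((1−b)/(1−a)) / log( a(1−b)/((1−a)b) ). Then lim_{x → 0+} kl( x*(x/2, x), x ) / kl( x(1+x), x/2 ) = ( 1 − 1/(2·log 2) − log(2·log 2)/(2·log 2) ) / ( log 2 − 1/2 ). -/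
open Real Filter Set Topology

lemma log1p_lim : Tendsto (fun s : ℝ => Real.log (1 + s) / s) (𝓝[≠] (0:ℝ)) (𝓝 1) := by
  have h := (Real.hasDerivAt_log one_ne_zero)
  rw [hasDerivAt_iff_tendsto_slope] at h
  have hmap : Tendsto (fun s : ℝ => 1 + s) (𝓝[≠] (0:ℝ)) (𝓝[≠] (1:ℝ)) := by
    rw [tendsto_nhdsWithin_iff]
    constructor
    · simpa using ((continuous_add_left (1:ℝ)).tendsto (0:ℝ)).mono_left nhdsWithin_le_nhds
    · filter_upwards [self_mem_nhdsWithin] with s hs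
      simp only [mem_compl_iff, mem_singleton_iff] at hs ⊢
      intro h0; exact hs (by linarith)
  have h2 := h.comp hmap
  simp only [inv_one] at h2
  refine h2.congr ?_
  intro s
  simp [Function.comp, slope_def_field, Real.log_one]

lemma tendsto_zero_of_div {f : ℝ → ℝ} {m : ℝ}
    (h : Tendsto (fun x => f x / x) (𝓝[>] (0:ℝ)) (𝓝 m)) :
    Tendsto f (𝓝[>] (0:ℝ)) (𝓝 0) := by
  have hx0 : Tendsto (fun x : ℝ => x) (𝓝[>] (0:ℝ)) (𝓝 0) :=
    tendsto_id.mono_left nhdsWithin_le_nhds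
  have h2 := h.mul hx0
  rw [mul_zero] at h2
  refine h2.congr' ?_
  filter_upwards [self_mem_nhdsWithin] with x hx
  exact div_mul_cancel₀ (f x) (ne_of_gt hx)

lemma log_comp_lim {g : ℝ → ℝ} {m : ℝ}
    (hg : Tendsto (fun x => g x / x) (𝓝[>] (0:ℝ)) (𝓝 m))
    (hne : ∀ᶠ x in 𝓝[>] (0:ℝ), g x ≠ 0) :
    Tendsto (fun x => Real.log (1 + g x) / x) (𝓝[>] (0:ℝ)) (𝓝 m) := by
  have hg0 : Tendsto g (𝓝[>] (0:ℝ)) (𝓝 0) := tendsto_zero_of_div hg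
  have hgne : Tendsto g (𝓝[>] (0:ℝ)) (𝓝[≠] (0:ℝ)) := by
    rw [tendsto_nhdsWithin_iff]
    exact ⟨hg0, hne⟩
  have h1 : Tendsto (fun x => Real.log (1 + g x) / g x) (𝓝[>] (0:ℝ)) (𝓝 1) :=
    log1p_lim.comp hgne
  have h2 := h1.mul hg
  rw [one_mul] at h2
  refine h2.congr' ?_
  filter_upwards [hne] with x hx
  field_simp

/-- `log(1 - g x)/x → -m` when `g x / x → m`. -/
lemma log_comp_lim' {g : ℝ → ℝ} {m : ℝ}
    (hg : Tendsto (fun x => g x / x) (𝓝[>] (0:ℝ)) (𝓝 m))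
    (hne : ∀ᶠ x in 𝓝[>] (0:ℝ), g x ≠ 0) :
    Tendsto (fun x => Real.log (1 - g x) / x) (𝓝[>] (0:ℝ)) (𝓝 (-m)) := by
  have hg' : Tendsto (fun x => (-(g x)) / x) (𝓝[>] (0:ℝ)) (𝓝 (-m)) := by
    simpa [neg_div] using hg.neg
  have hne' : ∀ᶠ x in 𝓝[>] (0:ℝ), -(g x) ≠ 0 := by
    filter_upwards [hne] with x hx; simpa using hx
  simpa [sub_eq_add_neg] using log_comp_lim hg' hne'

/-- `lim_{x → 0⁺} kl(x*(x/2, x), x) / kl(x(1+x), x/2)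
= (1 - 1/(2 log 2) - log(2 log 2)/(2 log 2)) / (log 2 - 1/2)`, where
`x*(a,b) = log((1-b)/(1-a)) / log(a(1-b)/((1-a)b))` and `kl` is the Bernoulli KL. -/
theorem stmt_18 :
    let kl : ℝ → ℝ → ℝ := fun p q =>
      p * Real.log (p / q) + (1 - p) * Real.log ((1 - p) / (1 - q))
    let xstar : ℝ → ℝ → ℝ := fun a b =>
      Real.log ((1 - b) / (1 - a)) / Real.log (a * (1 - b) / ((1 - a) * b))
    Filter.Tendsto (fun x => kl (xstar (x / 2) x) x / kl (x * (1 + x)) (x / 2))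
      (nhdsWithin 0 (Set.Ioi 0))
      (nhds ((1 - 1 / (2 * Real.log 2) - Real.log (2 * Real.log 2) / (2 * Real.log 2)) /
        (Real.log 2 - 1 / 2))) := by
  intro kl xstar
  have hL : (0:ℝ) < Real.log 2 := Real.log_pos (by norm_num)
  have hLne : Real.log 2 ≠ 0 := ne_of_gt hL
  set κ : ℝ := 1 / (2 * Real.log 2) with hκdef
  have hκpos : 0 < κ := by positivity
  have hIoo : Ioo (0:ℝ) 1 ∈ 𝓝[>] (0:ℝ) := Ioo_mem_nhdsGT_of_mem (by norm_num)
  have hIoo2 : Ioo (0:ℝ) (1/2) ∈ 𝓝[>] (0:ℝ) := Ioo_mem_nhdsGT_of_mem (by norm_num)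
  -- basic limits
  have hhalf : Tendsto (fun x : ℝ => Real.log (1 - x/2) / x) (𝓝[>] (0:ℝ)) (𝓝 (-(1/2))) := by
    have hg : Tendsto (fun x : ℝ => (x/2) / x) (𝓝[>] (0:ℝ)) (𝓝 (1/2)) := by
      refine tendsto_const_nhds.congr' ?_
      filter_upwards [self_mem_nhdsWithin] with x hx
      have hx' : (0:ℝ) < x := hx
      rw [div_div, mul_comm, ← div_div, div_self (ne_of_gt hx')]
    exact log_comp_lim' hg (by
      filter_upwards [self_mem_nhdsWithin] with x hx
      have hx' : (0:ℝ) < x := hx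
      exact ne_of_gt (by linarith))
  have hone : Tendsto (fun x : ℝ => Real.log (1 - x) / x) (𝓝[>] (0:ℝ)) (𝓝 (-1)) := by
    have hg : Tendsto (fun x : ℝ => x / x) (𝓝[>] (0:ℝ)) (𝓝 1) := by
      refine tendsto_const_nhds.congr' ?_
      filter_upwards [self_mem_nhdsWithin] with x hx
      have hx' : (0:ℝ) < x := hx
      exact (div_self (ne_of_gt hx')).symm
    exact log_comp_lim' hg (by
      filter_upwards [self_mem_nhdsWithin] with x hx
      have hx' : (0:ℝ) < x := hx
      exact ne_of_gt hx')
  -- u x = log((1-x)/(1-x/2))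
  set u : ℝ → ℝ := fun x => Real.log ((1 - x) / (1 - x/2)) with hudef
  have hu : Tendsto (fun x => u x / x) (𝓝[>] (0:ℝ)) (𝓝 (-(1/2))) := by
    have h := hone.sub hhalf
    have hval : (-1 : ℝ) - -(1/2) = -(1/2) := by norm_num
    rw [hval] at h
    refine h.congr' ?_
    filter_upwards [hIoo] with x hx
    have h1 : (0:ℝ) < 1 - x := by linarith [hx.2]
    have h2 : (0:ℝ) < 1 - x/2 := by linarith [hx.1, hx.2]
    simp only [hudef]
    rw [Real.log_div (ne_of_gt h1) (ne_of_gt h2), sub_div]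
  have hu0 : Tendsto u (𝓝[>] (0:ℝ)) (𝓝 0) := tendsto_zero_of_div hu
  -- c x = xstar (x/2) x, as a simpler formula
  set c : ℝ → ℝ := fun x => u x / (u x - Real.log 2) with hcdef
  have hcx : Tendsto (fun x => c x / x) (𝓝[>] (0:ℝ)) (𝓝 κ) := by
    have hden : Tendsto (fun x => u x - Real.log 2) (𝓝[>] (0:ℝ)) (𝓝 (0 - Real.log 2)) :=
      hu0.sub tendsto_const_nhds
    have h := hu.div hden (by simpa using hLne)
    have hval : (-(1/2) : ℝ) / (0 - Real.log 2) = κ := by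
      rw [hκdef]; field_simp; ring
    rw [hval] at h
    refine h.congr' ?_
    filter_upwards [self_mem_nhdsWithin] with x hx
    simp only [hcdef, Pi.div_apply]
    rw [div_right_comm]
  have hc0 : Tendsto c (𝓝[>] (0:ℝ)) (𝓝 0) := tendsto_zero_of_div hcx
  have hcpos : ∀ᶠ x in 𝓝[>] (0:ℝ), 0 < c x := by
    have h1 : ∀ᶠ x in 𝓝[>] (0:ℝ), 0 < c x / x := hcx.eventually_const_lt hκpos
    filter_upwards [h1, self_mem_nhdsWithin] with x hx1 hx2
    have := mul_pos hx1 hx2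
    rwa [div_mul_cancel₀ _ (ne_of_gt hx2)] at this
  have hclt : ∀ᶠ x in 𝓝[>] (0:ℝ), c x < 1/2 := hc0.eventually_lt_const (by norm_num)
  -- numerator pieces
  have hterm1 : Tendsto (fun x => (c x / x) * Real.log (c x / x)) (𝓝[>] (0:ℝ))
      (𝓝 (κ * Real.log κ)) :=
    hcx.mul ((Real.continuousAt_log (ne_of_gt hκpos)).tendsto.comp hcx)
  have hlogc : Tendsto (fun x => Real.log (1 - c x) / x) (𝓝[>] (0:ℝ)) (𝓝 (-κ)) :=
    log_comp_lim' hcx (by filter_upwards [hcpos] with x hx; exact ne_of_gt hx)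
  have hdiff : Tendsto (fun x => (Real.log (1 - c x) - Real.log (1 - x)) / x) (𝓝[>] (0:ℝ))
      (𝓝 (-κ - (-1))) := by
    simpa [sub_div] using hlogc.sub hone
  have hterm2 : Tendsto (fun x => (1 - c x) * ((Real.log (1 - c x) - Real.log (1 - x)) / x))
      (𝓝[>] (0:ℝ)) (𝓝 ((1 - 0) * (-κ - (-1)))) :=
    (tendsto_const_nhds.sub hc0).mul hdiff
  have hN : Tendsto (fun x => kl (xstar (x/2) x) x / x) (𝓝[>] (0:ℝ))
      (𝓝 (κ * Real.log κ + (1 - 0) * (-κ - (-1)))) := by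
    refine (hterm1.add hterm2).congr' ?_
    filter_upwards [hIoo, hcpos, hclt] with x hx hcp hcl
    have hx0 : x ≠ 0 := ne_of_gt hx.1
    have h1x : (0:ℝ) < 1 - x := by linarith [hx.2]
    have h1x2 : (0:ℝ) < 1 - x/2 := by linarith [hx.2, hx.1]
    have hfrac : (0:ℝ) < (1-x)/(1-x/2) := div_pos h1x h1x2
    have hxs : xstar (x/2) x = c x := by
      show Real.log ((1 - x) / (1 - x/2)) / Real.log ((x/2) * (1 - x) / ((1 - x/2) * x)) = c x
      have harg : (x/2) * (1 - x) / ((1 - x/2) * x) = ((1-x)/(1-x/2)) / 2 := by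
        rw [div_div, div_eq_div_iff (ne_of_gt (mul_pos h1x2 hx.1)) (ne_of_gt (mul_pos h1x2 two_pos))]
        ring
      rw [harg, Real.log_div (ne_of_gt hfrac) two_ne_zero]
    show (c x / x) * Real.log (c x / x)
        + (1 - c x) * ((Real.log (1 - c x) - Real.log (1 - x)) / x)
      = kl (xstar (x/2) x) x / x
    rw [hxs]
    show (c x / x) * Real.log (c x / x)
        + (1 - c x) * ((Real.log (1 - c x) - Real.log (1 - x)) / x)
      = (c x * Real.log (c x / x) + (1 - c x) * Real.log ((1 - c x) / (1 - x))) / x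
    rw [Real.log_div (by linarith : (1:ℝ) - c x ≠ 0) (ne_of_gt h1x),
      add_div, mul_div_right_comm, mul_div_assoc]
  -- denominator pieces
  have h1x : Tendsto (fun x : ℝ => 1 + x) (𝓝[>] (0:ℝ)) (𝓝 1) := by
    have : Continuous fun x : ℝ => 1 + x := by continuity
    simpa using (this.tendsto 0).mono_left nhdsWithin_le_nhds
  have hlog2x : Tendsto (fun x : ℝ => Real.log (2 * (1 + x))) (𝓝[>] (0:ℝ)) (𝓝 (Real.log 2)) := by
    have hin : Tendsto (fun x : ℝ => 2 * (1 + x)) (𝓝[>] (0:ℝ)) (𝓝 2) := by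
      have : Continuous fun x : ℝ => 2 * (1 + x) := by continuity
      simpa using (this.tendsto 0).mono_left nhdsWithin_le_nhds
    exact (Real.continuousAt_log two_ne_zero).tendsto.comp hin
  have hd1 : Tendsto (fun x : ℝ => (1 + x) * Real.log (2 * (1 + x))) (𝓝[>] (0:ℝ))
      (𝓝 (1 * Real.log 2)) := h1x.mul hlog2x
  have hpx : Tendsto (fun x : ℝ => (x * (1 + x)) / x) (𝓝[>] (0:ℝ)) (𝓝 1) := by
    refine h1x.congr' ?_
    filter_upwards [self_mem_nhdsWithin] with x hx
    rw [mul_comm, mul_div_assoc, div_self (ne_of_gt hx), mul_one]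
  have hp0 : Tendsto (fun x : ℝ => x * (1 + x)) (𝓝[>] (0:ℝ)) (𝓝 0) := tendsto_zero_of_div hpx
  have hlogp : Tendsto (fun x : ℝ => Real.log (1 - x * (1 + x)) / x) (𝓝[>] (0:ℝ)) (𝓝 (-1)) :=
    log_comp_lim' hpx (by
      filter_upwards [self_mem_nhdsWithin] with x hx
      have hx' : (0:ℝ) < x := hx
      have : (0:ℝ) < x * (1 + x) := by nlinarith
      exact ne_of_gt this)
  have hdiff2 : Tendsto (fun x : ℝ => (Real.log (1 - x * (1 + x)) - Real.log (1 - x/2)) / x)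
      (𝓝[>] (0:ℝ)) (𝓝 (-1 - -(1/2))) := by
    simpa [sub_div] using hlogp.sub hhalf
  have hd2 : Tendsto (fun x : ℝ =>
      (1 - x * (1 + x)) * ((Real.log (1 - x * (1 + x)) - Real.log (1 - x/2)) / x))
      (𝓝[>] (0:ℝ)) (𝓝 ((1 - 0) * (-1 - -(1/2)))) :=
    (tendsto_const_nhds.sub hp0).mul hdiff2
  have hD : Tendsto (fun x => kl (x * (1 + x)) (x/2) / x) (𝓝[>] (0:ℝ))
      (𝓝 (1 * Real.log 2 + (1 - 0) * (-1 - -(1/2)))) := by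
    refine (hd1.add hd2).congr' ?_
    filter_upwards [hIoo2] with x hx
    have hx0 : x ≠ 0 := ne_of_gt hx.1
    have hp1 : (0:ℝ) < 1 - x * (1 + x) := by nlinarith [hx.1, hx.2]
    have hq1 : (0:ℝ) < 1 - x/2 := by nlinarith [hx.1, hx.2]
    show (1 + x) * Real.log (2 * (1 + x))
        + (1 - x * (1 + x)) * ((Real.log (1 - x * (1 + x)) - Real.log (1 - x/2)) / x)
      = (x * (1 + x) * Real.log (x * (1 + x) / (x / 2))
        + (1 - x * (1 + x)) * Real.log ((1 - x * (1 + x)) / (1 - x/2))) / x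
    have harg : x * (1 + x) / (x / 2) = 2 * (1 + x) := by
      rw [div_div_eq_mul_div, div_eq_iff hx0]
      ring
    have hpp : x * (1 + x) / x = 1 + x := by
      rw [mul_comm, mul_div_assoc, div_self hx0, mul_one]
    rw [harg, Real.log_div (ne_of_gt hp1) (ne_of_gt hq1),
      add_div, mul_div_right_comm, hpp, mul_div_assoc]
  -- combine
  have hBne : (1 : ℝ) * Real.log 2 + (1 - 0) * (-1 - -(1/2)) ≠ 0 := by
    have h9 := Real.log_two_gt_d9
    have h10 : (0.6931471803:ℝ) > 1/2 := by norm_num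
    have : (1:ℝ) * Real.log 2 + (1 - 0) * (-1 - -(1/2)) = Real.log 2 - 1/2 := by ring
    rw [this]
    exact ne_of_gt (by linarith)
  have hfin := hN.div hD hBne
  have hfin2 : Tendsto (fun x => kl (xstar (x/2) x) x / kl (x * (1 + x)) (x/2)) (𝓝[>] (0:ℝ))
      (𝓝 ((κ * Real.log κ + (1 - 0) * (-κ - (-1))) /
        (1 * Real.log 2 + (1 - 0) * (-1 - -(1/2))))) := by
    refine hfin.congr' ?_
    filter_upwards [self_mem_nhdsWithin] with x hx
    exact div_div_div_cancel_right₀ (ne_of_gt hx.out) _ _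
  have hVeq : (κ * Real.log κ + (1 - 0) * (-κ - (-1))) /
        (1 * Real.log 2 + (1 - 0) * (-1 - -(1/2)))
      = (1 - 1 / (2 * Real.log 2) - Real.log (2 * Real.log 2) / (2 * Real.log 2)) /
        (Real.log 2 - 1 / 2) := by
    have hB : (1:ℝ) * Real.log 2 + (1 - 0) * (-1 - -(1/2)) = Real.log 2 - 1/2 := by ring
    rw [hB, hκdef, one_div (2 * Real.log 2), Real.log_inv]
    congr 1
    ring
  rw [hVeq] at hfin2
  exact hfin2
end

section
/- For a, b ∈ (0,1) with a ≠ b, set x*(a,b) = log((1−b)/(1−a)) / log( a(1−b)/((1−a)b) ). Then there exists x ∈ (0, 1/2) such that kl( x*(x/2, x), x ) / kl( x(1+x), x/2 ) + kl( x*( x(1+x), 1/2 ), 1/2 ) / kl( x, 1/2 ) > 1. -/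
set_option maxHeartbeats 1000000

private lemma log_le_n_mul (t s : ℝ) (n : ℕ) (ht : 0 < t) (hs : 0 < s) (h : t ≤ s ^ n) :
    Real.log t ≤ n * (s - 1) := by
  calc Real.log t ≤ Real.log (s ^ n) := Real.log_le_log ht h
    _ = n * Real.log s := by rw [Real.log_pow]
    _ ≤ n * (s - 1) := by
        have := Real.log_le_sub_one_of_pos hs
        exact mul_le_mul_of_nonneg_left this (Nat.cast_nonneg n)

private lemma log_r1 : (-0.3279 : ℝ) ≤ Real.log (0.72134 : ℝ) := by
  have h : (0.72134 : ℝ) = ((50000 : ℝ)/36067)⁻¹ := by norm_num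
  rw [h, Real.log_inv]
  have h2 : Real.log ((50000 : ℝ)/36067) ≤ 128 * ((1.0025617 : ℝ) - 1) := by
    apply log_le_n_mul _ _ 128 (by norm_num) (by norm_num)
    norm_num
  push_cast at h2
  linarith

private lemma log_U : Real.log ((1000000 : ℝ)/15624) ≤ 4.15895 := by
  have h : ((1000000 : ℝ)/15624) = 2 ^ (6:ℕ) * (1000000/999936) := by norm_num
  rw [h, Real.log_mul (by norm_num) (by norm_num), Real.log_pow]
  have h1 := Real.log_le_sub_one_of_pos (show (0:ℝ) < 1000000/999936 by norm_num)
  have h2 := Real.log_two_lt_d9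
  push_cast
  nlinarith

private lemma ratio_bounds (x m L : ℝ) (hx0 : 0 < x) (hxs : x ≤ 1/10^19)
    (hL1 : 0.6931471 < L) (hL2 : L < 0.6931472)
    (hu1 : x/2 ≤ m * (1 - x/2)) (hu2 : m * (1 - x) ≤ x/2) :
    0 < m ∧ 0 < m + L ∧ 0.72134 * x ≤ m / (m + L) ∧ m / (m + L) ≤ 0.72135 * x := by
  have hm0 : 0 < m := by nlinarith
  have hxux : m * x ≤ m * (1/10^19) := mul_le_mul_of_nonneg_left hxs hm0.le
  have hmub : m ≤ x := by linarith
  have hmlb : x/2 ≤ m := by linarith [mul_pos hm0 hx0]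
  have hmL : 0 < m + L := by linarith
  have hxm : x * m ≤ x * x := mul_le_mul_of_nonneg_left hmub hx0.le
  have hxx : x * x ≤ (1/10^19) * x := mul_le_mul_of_nonneg_right hxs hx0.le
  have hxL : x * L ≤ x * 0.6931472 := mul_le_mul_of_nonneg_left hL2.le hx0.le
  have hxL' : x * 0.6931471 ≤ x * L := mul_le_mul_of_nonneg_left hL1.le hx0.le
  refine ⟨hm0, hmL, ?_, ?_⟩
  · rw [le_div_iff₀ hmL]
    linarith [hmlb, hxm, hxx, hxL, hx0]
  · rw [div_le_iff₀ hmL]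
    linarith [hu2, hxm, hxx, hxL', mul_nonneg hx0.le hm0.le, hx0]

private lemma num_bound (x p : ℝ) (hx0 : 0 < x) (hxs : x ≤ 1/10^19)
    (hp0 : 0 < p) (hplo : 0.72134 * x ≤ p) (hphi : p ≤ 0.72135 * x) :
    0.0421 * x ≤ p * Real.log (p / x) + (1 - p) * Real.log ((1 - p) / (1 - x)) := by
  have h1x : (0:ℝ) < 1 - x := by linarith
  have h1p : (0:ℝ) < 1 - p := by nlinarith
  have hrlo : (0.72134:ℝ) ≤ p / x := by
    rw [le_div_iff₀ hx0]; linarith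
  have hlogpx : (-0.3279:ℝ) ≤ Real.log (p/x) :=
    le_trans log_r1 (Real.log_le_log (by norm_num) hrlo)
  have hterm1 : p * (-0.3279) ≤ p * Real.log (p/x) :=
    mul_le_mul_of_nonneg_left hlogpx hp0.le
  have hterm2 : x - p ≤ (1-p) * Real.log ((1-p)/(1-x)) := by
    have h0 : 0 < (1-p)/(1-x) := div_pos h1p h1x
    have h := Real.one_sub_inv_le_log_of_pos h0
    rw [inv_div] at h
    have heq : (1-x)/(1-p) * (1-p) = 1-x := div_mul_cancel₀ _ (ne_of_gt h1p)
    have e3 : (1 - (1-x)/(1-p)) * (1-p) = x - p := by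
      have hh : (1 - (1-x)/(1-p)) * (1-p) = (1-p) - (1-x)/(1-p)*(1-p) := by ring
      rw [hh, heq]; ring
    have h2 := mul_le_mul_of_nonneg_right h h1p.le
    rw [e3] at h2; linarith
  linarith [hterm1, hterm2, hphi]

private lemma den_bound (x : ℝ) (hx0 : 0 < x) (hxs : x ≤ 1/10^19) :
    0.19 * x ≤ x*(1+x) * Real.log (x*(1+x) / (x/2)) +
        (1 - x*(1+x)) * Real.log ((1 - x*(1+x)) / (1 - x/2)) ∧
      x*(1+x) * Real.log (x*(1+x) / (x/2)) +
        (1 - x*(1+x)) * Real.log ((1 - x*(1+x)) / (1 - x/2)) ≤ 0.1932 * x := by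
  have hL1 := Real.log_two_gt_d9
  have hL2 := Real.log_two_lt_d9
  have h1x : (0:ℝ) < 1 - x := by linarith
  have h1x2 : (0:ℝ) < 1 - x/2 := by linarith
  have hx2nn : (0:ℝ) ≤ x^2 := sq_nonneg x
  have hxx : x * x ≤ (1/10^19) * x := mul_le_mul_of_nonneg_right hxs hx0.le
  have hx2u : x^2 ≤ 1/10^19 * x := by nlinarith [hxx]
  have hxle1 : x ≤ 1 := by linarith
  have hx2le1 : x^2 ≤ 1 := by nlinarith [hx2u, hxs, hxle1, hx0]
  have hx3u : x^3 ≤ x^2 := by nlinarith [mul_nonneg hx2nn h1x.le]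
  have hx4u : x^4 ≤ x^2 := by nlinarith [mul_nonneg hx2nn (show (0:ℝ) ≤ 1 - x^2 by linarith)]
  have hy0 : 0 < x*(1+x) := mul_pos hx0 (by linarith)
  have h1y : (0:ℝ) < 1 - x*(1+x) := by nlinarith [hx2u, hxs, hx0]
  have hlogy : Real.log (x*(1+x)/(x/2)) = Real.log 2 + Real.log (1+x) := by
    have hargy : x*(1+x) / (x/2) = 2*(1+x) := by
      rw [div_eq_iff (by positivity)]; ring
    rw [hargy, Real.log_mul two_ne_zero (by positivity)]
  have hl1px : Real.log (1+x) ≤ x := by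
    have := Real.log_le_sub_one_of_pos (show (0:ℝ) < 1+x by linarith)
    linarith
  have hl1px0 : 0 ≤ Real.log (1+x) := Real.log_nonneg (by linarith)
  have htt : 0 < (1 - x*(1+x))/(1-x/2) := div_pos h1y h1x2
  have hteq : (1-x*(1+x))/(1-x/2) * (1-x/2) = 1-x*(1+x) := div_mul_cancel₀ _ (ne_of_gt h1x2)
  have hlogt_np : Real.log ((1-x*(1+x))/(1-x/2)) ≤ 0 := by
    apply Real.log_nonpos htt.le
    rw [div_le_one h1x2]; nlinarith [hx2nn, hx0]
  have hlt2 : Real.log ((1-x*(1+x))/(1-x/2)) ≤ x/2 - x*(1+x) := by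
    have e3 : ((1-x*(1+x))/(1-x/2) - 1) * (1-x/2) = x/2 - x*(1+x) := by
      have hh : ((1-x*(1+x))/(1-x/2) - 1) * (1-x/2) =
          (1-x*(1+x))/(1-x/2)*(1-x/2) - (1-x/2) := by ring
      rw [hh, hteq]; ring
    have h2 := mul_le_mul_of_nonneg_right (Real.log_le_sub_one_of_pos htt) h1x2.le
    rw [e3] at h2
    have h4 : Real.log ((1-x*(1+x))/(1-x/2)) * x ≤ 0 :=
      mul_nonpos_of_nonpos_of_nonneg hlogt_np hx0.le
    linarith
  have hlt2lo : x/2 - x*(1+x) ≤ (1 - x*(1+x)) * Real.log ((1-x*(1+x))/(1-x/2)) := by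
    have h := Real.one_sub_inv_le_log_of_pos htt
    rw [inv_div] at h
    have hweq2 : (1-x/2)/(1-x*(1+x)) * (1-x*(1+x)) = 1-x/2 := div_mul_cancel₀ _ (ne_of_gt h1y)
    have e4 : (1 - (1-x/2)/(1-x*(1+x))) * (1-x*(1+x)) = x/2 - x*(1+x) := by
      have hh : (1 - (1-x/2)/(1-x*(1+x))) * (1-x*(1+x)) =
          (1-x*(1+x)) - (1-x/2)/(1-x*(1+x))*(1-x*(1+x)) := by ring
      rw [hh, hweq2]; ring
    have h2 := mul_le_mul_of_nonneg_right h h1y.le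
    rw [e4] at h2; linarith
  have hA : x*(1+x) * (Real.log 2 + Real.log (1+x)) ≤ x*(1+x) * (0.6931471808 + x) :=
    mul_le_mul_of_nonneg_left (by linarith) hy0.le
  have hA' : x*(1+x) * 0.6931471803 ≤ x*(1+x) * (Real.log 2 + Real.log (1+x)) :=
    mul_le_mul_of_nonneg_left (by linarith) hy0.le
  have hB : (1 - x*(1+x)) * Real.log ((1-x*(1+x))/(1-x/2)) ≤ (1-x*(1+x)) * (x/2 - x*(1+x)) :=
    mul_le_mul_of_nonneg_left hlt2 h1y.le
  rw [hlogy]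
  constructor
  · nlinarith [hA', hlt2lo, hx2u, hx2nn]
  · nlinarith [hA, hB, hx2u, hx3u, hx4u, hx2nn]

private lemma partA (x p : ℝ) (hx0 : 0 < x) (hxs : x ≤ 1/10^19)
    (hp : p = Real.log ((1 - x) / (1 - x/2)) / Real.log (x/2 * (1 - x) / ((1 - x/2) * x))) :
    (0.217:ℝ) ≤ (p * Real.log (p / x) + (1 - p) * Real.log ((1 - p) / (1 - x))) /
      (x*(1+x) * Real.log (x*(1+x) / (x/2)) +
        (1 - x*(1+x)) * Real.log ((1 - x*(1+x)) / (1 - x/2))) := by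
  have hL1 := Real.log_two_gt_d9
  have hL2 := Real.log_two_lt_d9
  have h1x : (0:ℝ) < 1 - x := by linarith
  have h1x2 : (0:ℝ) < 1 - x/2 := by linarith
  have hv0 : 0 < (1-x)/(1-x/2) := div_pos h1x h1x2
  have hveq : (1-x)/(1-x/2) * (1-x/2) = 1-x := div_mul_cancel₀ _ (ne_of_gt h1x2)
  have hweq : (1-x/2)/(1-x) * (1-x) = 1-x/2 := div_mul_cancel₀ _ (ne_of_gt h1x)
  have e1 : ((1-x)/(1-x/2) - 1) * (1-x/2) = -(x/2) := by
    have h : ((1-x)/(1-x/2) - 1) * (1-x/2) = (1-x)/(1-x/2)*(1-x/2) - (1-x/2) := by ring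
    rw [h, hveq]; ring
  have e2 : (1 - (1-x/2)/(1-x)) * (1-x) = -(x/2) := by
    have h : (1 - (1-x/2)/(1-x)) * (1-x) = (1-x) - (1-x/2)/(1-x)*(1-x) := by ring
    rw [h, hweq]; ring
  have hu1 : Real.log ((1-x)/(1-x/2)) * (1-x/2) ≤ -(x/2) := by
    have h2 := mul_le_mul_of_nonneg_right (Real.log_le_sub_one_of_pos hv0) h1x2.le
    rw [e1] at h2; exact h2
  have hu2 : -(x/2) ≤ Real.log ((1-x)/(1-x/2)) * (1-x) := by
    have h := Real.one_sub_inv_le_log_of_pos hv0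
    rw [inv_div] at h
    have h2 := mul_le_mul_of_nonneg_right h h1x.le
    rw [e2] at h2; exact h2
  have hlogarg : Real.log (x/2 * (1-x)/((1-x/2)*x)) =
      Real.log ((1-x)/(1-x/2)) - Real.log 2 := by
    have harg : x/2 * (1-x) / ((1-x/2)*x) = ((1-x)/(1-x/2))/2 := by
      rw [div_div, div_eq_div_iff (by positivity) (by positivity)]; ring
    rw [harg, Real.log_div (ne_of_gt hv0) two_ne_zero]
  have hpval : p = (-Real.log ((1-x)/(1-x/2))) / ((-Real.log ((1-x)/(1-x/2))) + Real.log 2) := by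
    rw [hp, hlogarg,
      show (-Real.log ((1-x)/(1-x/2))) + Real.log 2
        = -(Real.log ((1-x)/(1-x/2)) - Real.log 2) by ring, neg_div_neg_eq]
  obtain ⟨hm0, hmL, hplo', hphi'⟩ :=
    ratio_bounds x (-Real.log ((1-x)/(1-x/2))) (Real.log 2) hx0 hxs
      (by linarith) (by linarith)
      (by linarith [hu1]) (by linarith [hu2])
  rw [← hpval] at hplo' hphi'
  have hp0 : 0 < p := by nlinarith [hplo', hx0]
  have hnum := num_bound x p hx0 hxs hp0 hplo' hphi'
  obtain ⟨hDlb, hDub⟩ := den_bound x hx0 hxs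
  have hD0 : 0 < x*(1+x) * Real.log (x*(1+x) / (x/2)) +
      (1 - x*(1+x)) * Real.log ((1 - x*(1+x)) / (1 - x/2)) := by linarith [hx0]
  rw [le_div_iff₀ hD0]
  linarith [hnum, hDub, hx0]

private lemma klp2_bound (p : ℝ) (hlo : 0.015624 ≤ p) (hhi : p ≤ 0.015626) :
    (0.6125:ℝ) ≤ p * Real.log (p / (1/2)) + (1 - p) * Real.log ((1 - p) / (1 - 1/2)) := by
  have hL1 := Real.log_two_gt_d9
  have hp0 : (0:ℝ) < p := by linarith
  have h1p : (0:ℝ) < 1 - p := by linarith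
  have e1 : p / (1/2) = 2 * p := by ring
  have e2 : (1 - p) / (1 - 1/2) = 2 * (1 - p) := by ring
  rw [e1, e2, Real.log_mul two_ne_zero (ne_of_gt hp0),
    Real.log_mul two_ne_zero (ne_of_gt h1p)]
  have hlogp_ub : Real.log p ≤ 0 := Real.log_nonpos hp0.le (by linarith)
  have hlogp_lb : -(4.15895:ℝ) ≤ Real.log p := by
    have h1 : p⁻¹ ≤ (1000000:ℝ)/15624 := by
      have := inv_anti₀ (show (0:ℝ) < 0.015624 by norm_num) hlo
      rw [show ((0.015624:ℝ))⁻¹ = 1000000/15624 by norm_num] at this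
      exact this
    have h2 : Real.log p⁻¹ ≤ Real.log ((1000000:ℝ)/15624) :=
      Real.log_le_log (inv_pos.2 hp0) h1
    rw [Real.log_inv] at h2
    linarith [log_U]
  have hpl : -(0.015626 * 4.15895) ≤ p * Real.log p := by
    have h : p * (-Real.log p) ≤ 0.015626 * 4.15895 :=
      mul_le_mul hhi (by linarith) (by linarith) (by norm_num)
    nlinarith [h]
  have h1pl : -p ≤ (1 - p) * Real.log (1 - p) := by
    have h := Real.one_sub_inv_le_log_of_pos h1p
    have hh : (1 - (1-p)⁻¹) * (1-p) = (1-p) - (1-p)⁻¹*(1-p) := by ring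
    rw [inv_mul_cancel₀ (ne_of_gt h1p)] at hh
    have h2 := mul_le_mul_of_nonneg_right h h1p.le
    rw [hh] at h2
    linarith
  have h1p_ub : Real.log (1 - p) ≤ 0 := Real.log_nonpos h1p.le (by linarith)
  nlinarith [hL1, hpl, h1pl, hhi, hlo]

private lemma p2_bounds (x : ℝ) (hx0 : 0 < x) (hxs : x ≤ 1/10^19)
    (hlogx : Real.log x = -(64 * Real.log 2)) :
    0.015624 ≤ Real.log ((1 - 1/2) / (1 - x*(1+x))) /
        Real.log (x*(1+x) * (1 - 1/2) / ((1 - x*(1+x)) * (1/2))) ∧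
      Real.log ((1 - 1/2) / (1 - x*(1+x))) /
        Real.log (x*(1+x) * (1 - 1/2) / ((1 - x*(1+x)) * (1/2))) ≤ 0.015626 := by
  have hL1 := Real.log_two_gt_d9
  have hL2 := Real.log_two_lt_d9
  have hxx : x * x ≤ (1/10^19) * x := mul_le_mul_of_nonneg_right hxs hx0.le
  have hy0 : 0 < x*(1+x) := mul_pos hx0 (by linarith)
  have hyub : x*(1+x) ≤ 2 * x := by nlinarith [hxx, hx0, hxs]
  have h1y : (0:ℝ) < 1 - x*(1+x) := by nlinarith [hyub, hxs, hx0]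
  -- log (1-y) bounds
  have hl1y_ub : Real.log (1 - x*(1+x)) ≤ 0 := Real.log_nonpos h1y.le (by nlinarith [hy0])
  have hinv : (1 - x*(1+x))⁻¹ ≤ 1 + 2*(x*(1+x)) := by
    rw [inv_eq_one_div, div_le_iff₀ h1y]
    nlinarith [hy0, hyub, hxs, hx0]
  have hl1y_lb : -(2*(x*(1+x))) ≤ Real.log (1 - x*(1+x)) := by
    have h := Real.one_sub_inv_le_log_of_pos h1y
    linarith
  -- numerator
  have hN : Real.log ((1 - 1/2) / (1 - x*(1+x)))
      = -(Real.log 2 + Real.log (1 - x*(1+x))) := by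
    rw [show (1 - (1:ℝ)/2) = 1/2 by norm_num,
      Real.log_div (by norm_num) (ne_of_gt h1y),
      show ((1:ℝ)/2) = 2⁻¹ by norm_num, Real.log_inv]
    ring
  -- denominator
  have hD : Real.log (x*(1+x) * (1 - 1/2) / ((1 - x*(1+x)) * (1/2)))
      = -(64 * Real.log 2 - Real.log (1+x) + Real.log (1 - x*(1+x))) := by
    have harg : x*(1+x) * (1 - 1/2) / ((1 - x*(1+x)) * (1/2)) = x*(1+x) / (1 - x*(1+x)) := by
      rw [div_eq_div_iff (by positivity) (ne_of_gt h1y)]; ring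
    rw [harg, Real.log_div (ne_of_gt hy0) (ne_of_gt h1y),
      Real.log_mul (ne_of_gt hx0) (by positivity), hlogx]
    ring
  rw [hN, hD, neg_div_neg_eq]
  have hl1px : Real.log (1+x) ≤ x := by
    have := Real.log_le_sub_one_of_pos (show (0:ℝ) < 1+x by linarith)
    linarith
  have hl1px0 : 0 ≤ Real.log (1+x) := Real.log_nonneg (by linarith)
  have hb0 : 0 < 64 * Real.log 2 - Real.log (1+x) + Real.log (1 - x*(1+x)) := by
    nlinarith [hl1y_lb, hyub, hxs, hl1px, hx0]
  constructor
  · rw [le_div_iff₀ hb0]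
    nlinarith [hl1y_lb, hl1y_ub, hyub, hxs, hl1px, hl1px0, hx0]
  · rw [div_le_iff₀ hb0]
    nlinarith [hl1y_lb, hl1y_ub, hyub, hxs, hl1px, hl1px0, hx0]

private lemma den2_bound (x : ℝ) (hx0 : 0 < x) (hxs : x ≤ 1/10^19)
    (hlogx : Real.log x = -(64 * Real.log 2)) :
    0 < x * Real.log (x / (1/2)) + (1 - x) * Real.log ((1 - x) / (1 - 1/2)) ∧
      x * Real.log (x / (1/2)) + (1 - x) * Real.log ((1 - x) / (1 - 1/2)) ≤ 0.6931472 := by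
  have hL1 := Real.log_two_gt_d9
  have hL2 := Real.log_two_lt_d9
  have h1x : (0:ℝ) < 1 - x := by linarith
  have e3 : x / (1/2) = 2 * x := by ring
  have e4 : (1 - x) / (1 - 1/2) = 2 * (1 - x) := by ring
  rw [e3, e4, Real.log_mul two_ne_zero (ne_of_gt hx0),
    Real.log_mul two_ne_zero (ne_of_gt h1x), hlogx]
  have hl1x_ub : Real.log (1 - x) ≤ 0 := Real.log_nonpos h1x.le (by linarith)
  have hinv : (1 - x)⁻¹ ≤ 1 + 2*x := by
    rw [inv_eq_one_div, div_le_iff₀ h1x]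
    nlinarith [hx0, hxs]
  have hl1x_lb : -(2*x) ≤ Real.log (1 - x) := by
    have h := Real.one_sub_inv_le_log_of_pos h1x
    linarith
  have hxL : x * Real.log 2 ≤ x * 0.6931472 := mul_le_mul_of_nonneg_left (by linarith) hx0.le
  have hxL0 : 0 ≤ x * Real.log 2 := mul_nonneg hx0.le (by linarith)
  have hBub : (1 - x) * Real.log (1 - x) ≤ 0 :=
    mul_nonpos_of_nonneg_of_nonpos h1x.le hl1x_ub
  have hBlb : -(2*x) ≤ (1 - x) * Real.log (1 - x) := by
    have h2 := mul_le_mul_of_nonneg_left hl1x_lb h1x.le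
    nlinarith [h2, hx0, sq_nonneg x]
  constructor
  · nlinarith [hxL, hxs, hBlb, hx0]
  · nlinarith [hxL0, hBub, hx0]

private lemma partB (x p : ℝ) (hx0 : 0 < x) (hxs : x ≤ 1/10^19)
    (hlogx : Real.log x = -(64 * Real.log 2))
    (hp : p = Real.log ((1 - 1/2) / (1 - x*(1+x))) /
        Real.log (x*(1+x) * (1 - 1/2) / ((1 - x*(1+x)) * (1/2)))) :
    (0.8836:ℝ) ≤ (p * Real.log (p / (1/2)) + (1 - p) * Real.log ((1 - p) / (1 - 1/2))) /
      (x * Real.log (x / (1/2)) + (1 - x) * Real.log ((1 - x) / (1 - 1/2))) := by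
  obtain ⟨hlo, hhi⟩ := p2_bounds x hx0 hxs hlogx
  rw [← hp] at hlo hhi
  have hnum := klp2_bound p hlo hhi
  obtain ⟨hd0, hdub⟩ := den2_bound x hx0 hxs hlogx
  rw [le_div_iff₀ hd0]
  linarith [hnum, hdub]

/-- analytic core of Theorem 8 of the paper: there exists `x ∈ (0, 1/2)` with
`kl(x*(x/2, x), x)/kl(x(1+x), x/2) + kl(x*(x(1+x), 1/2), 1/2)/kl(x, 1/2) > 1`, where
`x*(a,b) = log((1-b)/(1-a)) / log(a(1-b)/((1-a)b))` and `kl` is the Bernoulli KL. -/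
theorem stmt_19 :
    let kl : ℝ → ℝ → ℝ := fun p q =>
      p * Real.log (p / q) + (1 - p) * Real.log ((1 - p) / (1 - q))
    let xstar : ℝ → ℝ → ℝ := fun a b =>
      Real.log ((1 - b) / (1 - a)) / Real.log (a * (1 - b) / ((1 - a) * b))
    ∃ x ∈ Set.Ioo (0 : ℝ) (1 / 2),
      kl (xstar (x / 2) x) x / kl (x * (1 + x)) (x / 2)
        + kl (xstar (x * (1 + x)) (1 / 2)) (1 / 2) / kl x (1 / 2) > 1 := by
  intro kl xstar
  refine ⟨((2:ℝ)^64)⁻¹, ⟨by positivity, by norm_num⟩, ?_⟩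
  have hx0 : (0:ℝ) < ((2:ℝ)^64)⁻¹ := by positivity
  have hxs : ((2:ℝ)^64)⁻¹ ≤ 1/10^19 := by norm_num
  have hlogx : Real.log (((2:ℝ)^64)⁻¹) = -(64 * Real.log 2) := by
    rw [Real.log_inv, Real.log_pow]; norm_num
  have hA := partA (((2:ℝ)^64)⁻¹) _ hx0 hxs rfl
  have hB := partB (((2:ℝ)^64)⁻¹) _ hx0 hxs hlogx rfl
  simp only [kl, xstar]
  linarith [hA, hB]
end
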